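/- arXiv:2310.02839 — 11 statements merged into one kernel-verified Lean document; each statement's English description precedes it below -/
import Mathlib

section
/- There exists an integer k_0 such that for all k ≥ k_0 the following holds: if X is any subset of the vertex set {0,1}^k of the unit cube with |X| ≥ 2, then there exists a Hamiltonian cycle H through X such that Σ_{e ∈ H} |e|^k ≤ 2·k^{k/2}; that is, the scaled cost s_k(H) = (Σ_{e ∈ H} |e|^k)^{1/k} is at most 2^{1/k}·√k. -/
/-!
On cube vertices `|x - y|²` is the Hamming distance, so an edge of Hamming length `D` costs
`D^(k/2)`. Take the nearest-neighbour tour `p 0, …, p m`. Each edge leaving `p i` is no longer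
than the distance from `p i` to any later point, so the starting points of the edges of length at
least `d` form a binary code of minimum distance `d`; Plotkin's bound on a shortened code allows
at most `2d·2^(k-2d+1)` of them. Since `4^(k-2d) d^k ≤ (2k/e)^k`, all edges of length at most
`2k/3` together cost `O(k² (2/e)^(k/2) k^(k/2)) = o(k^(k/2))`.

Going through the antipode of the middle point, `|ab| + |bc| + |ac| ≤ 2k` for Hamming lengths, so
at most one non-closing edge is longer than `2k/3`; and this edge and the closing edge cannot both
join antipodal points. They cost at most `k^(k/2) + (k-1)^(k/2) ≤ (1 + e^(-1/2)) k^(k/2)`.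
-/

open Finset Real Filter

section BinaryCodes

variable {ι : Type*} [Fintype ι]

theorem hammingDist_compl_right (a b : ι → Bool) :
    hammingDist a bᶜ = Fintype.card ι - hammingDist a b := by
  have h := card_filter_add_card_filter_not (s := univ) (fun i => a i ≠ b i)
  simp only [card_univ] at h
  rw [hammingDist, hammingDist, ← h, Nat.add_sub_cancel_left]
  congr 1
  ext i
  cases a i <;> cases b i <;> simp

theorem hammingDist_add_add_le (a b c : ι → Bool) :
    hammingDist a b + hammingDist b c + hammingDist a c ≤ 2 * Fintype.card ι := by
  have h := hammingDist_triangle a bᶜ c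
  rw [hammingDist_comm bᶜ c, hammingDist_compl_right, hammingDist_compl_right,
    hammingDist_comm c b] at h
  have := hammingDist_le_card_fintype (x := a) (y := b)
  have := hammingDist_le_card_fintype (x := b) (y := c)
  omega

theorem eq_compl_of_hammingDist_eq_card {a b : ι → Bool}
    (h : hammingDist a b = Fintype.card ι) : b = aᶜ := by
  have h' := hammingDist_compl_right b a
  rw [hammingDist_comm b a, h, Nat.sub_self, hammingDist_eq_zero] at h'
  exact h'

theorem two_mul_sum_sum_ite_ne_le {α : Type*} (C : Finset α) (g : α → Bool) :
    2 * ∑ c ∈ C, ∑ c' ∈ C, (if g c ≠ g c' then 1 else 0 : ℤ) ≤ (#C : ℤ) ^ 2 := by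
  set σ : Bool → ℤ := fun b => if b then 1 else -1
  have hσ : ∀ b b' : Bool, 2 * (if b ≠ b' then 1 else 0 : ℤ) = 1 - σ b * σ b' := by decide
  calc 2 * ∑ c ∈ C, ∑ c' ∈ C, (if g c ≠ g c' then 1 else 0 : ℤ)
      = ∑ c ∈ C, ∑ c' ∈ C, (1 - σ (g c) * σ (g c')) := by simp only [mul_sum, hσ]
    _ = (#C : ℤ) ^ 2 - (∑ c ∈ C, σ (g c)) ^ 2 := by
      simp only [sum_sub_distrib, sq, sum_mul_sum, sum_const, nsmul_eq_mul, mul_one]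
    _ ≤ (#C : ℤ) ^ 2 := sub_le_self _ (sq_nonneg _)

theorem hammingDist_eq_sum_of_eqOn_compl {a b : ι → Bool} {S : Finset ι}
    (h : ∀ t ∉ S, a t = b t) :
    (hammingDist a b : ℤ) = ∑ t ∈ S, if a t ≠ b t then 1 else 0 := by
  have hS : (univ.filter fun t => a t ≠ b t) = S.filter fun t => a t ≠ b t := by
    ext t
    simp only [mem_filter, mem_univ, true_and, iff_and_self]
    exact fun hne => by_contra fun ht => hne (h t ht)
  rw [hammingDist, hS, card_filter]
  push_cast
  rfl

/-- Plotkin's bound, for a code whose words differ only on the coordinates in `S`. -/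
theorem card_le_two_mul_of_le_hammingDist {C : Finset (ι → Bool)} {S : Finset ι} {d : ℕ}
    (hS : ∀ c ∈ C, ∀ c' ∈ C, ∀ t ∉ S, c t = c' t)
    (hd : ∀ c ∈ C, ∀ c' ∈ C, c ≠ c' → d ≤ hammingDist c c') (hSd : #S < 2 * d) :
    #C ≤ 2 * d := by
  set T : ℤ := ∑ c ∈ C, ∑ c' ∈ C, (hammingDist c c' : ℤ)
  have hlow : ∑ _c ∈ C, ((#C : ℤ) - 1) * d ≤ T := by
    refine sum_le_sum fun c hc => ?_
    calc ((#C : ℤ) - 1) * d = ∑ c' ∈ C.erase c, (d : ℤ) := by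
          rw [sum_const, card_erase_of_mem hc, nsmul_eq_mul,
            Nat.cast_sub (card_pos.mpr ⟨c, hc⟩), Nat.cast_one]
      _ ≤ ∑ c' ∈ C.erase c, (hammingDist c c' : ℤ) := by
          refine sum_le_sum fun c' hc' => ?_
          exact_mod_cast hd c hc c' (mem_of_mem_erase hc') (ne_of_mem_erase hc').symm
      _ ≤ ∑ c' ∈ C, (hammingDist c c' : ℤ) :=
          sum_le_sum_of_subset_of_nonneg (erase_subset _ _) fun _ _ _ => by positivity
  have hup : 2 * T ≤ #S * (#C : ℤ) ^ 2 := by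
    calc 2 * T = 2 * ∑ c ∈ C, ∑ c' ∈ C, ∑ t ∈ S, (if c t ≠ c' t then 1 else 0 : ℤ) := by
          congr 1
          exact sum_congr rfl fun c hc => sum_congr rfl fun c' hc' =>
            hammingDist_eq_sum_of_eqOn_compl (hS c hc c' hc')
      _ = ∑ t ∈ S, 2 * ∑ c ∈ C, ∑ c' ∈ C, (if c t ≠ c' t then 1 else 0 : ℤ) := by
          rw [sum_congr rfl fun c _ => sum_comm, sum_comm, mul_sum]
      _ ≤ ∑ _t ∈ S, (#C : ℤ) ^ 2 :=
          sum_le_sum fun t _ => two_mul_sum_sum_ite_ne_le C (· t)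
      _ = #S * (#C : ℤ) ^ 2 := by rw [sum_const, nsmul_eq_mul]
  rw [sum_const, nsmul_eq_mul] at hlow
  have hSd' : (#S : ℤ) + 1 ≤ 2 * d := by exact_mod_cast hSd
  by_contra! h
  have h' : (2 * d : ℤ) + 1 ≤ #C := by exact_mod_cast h
  nlinarith

/-- Plotkin's bound applied to the fibres of the projection forgetting `s` coordinates. -/
theorem card_le_two_mul_two_pow_of_le_hammingDist [DecidableEq ι] {C : Finset (ι → Bool)}
    {d s : ℕ} (hd : ∀ c ∈ C, ∀ c' ∈ C, c ≠ c' → d ≤ hammingDist c c')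
    (hs : s ≤ Fintype.card ι) (hsd : s < 2 * d) :
    #C ≤ 2 * d * 2 ^ (Fintype.card ι - s) := by
  obtain ⟨S, -, hS⟩ := exists_subset_card_eq (s := (univ : Finset ι)) (by simpa using hs)
  let r : (ι → Bool) → (↥Sᶜ → Bool) := fun c t => c t
  calc #C ≤ 2 * d * #(C.image r) := by
        refine card_le_mul_card_image C _ fun w _ => card_le_two_mul_of_le_hammingDist
          (S := S) ?_ (fun c hc c' hc' => hd c (mem_filter.1 hc).1 c' (mem_filter.1 hc').1)
          (hS ▸ hsd)
        intro c hc c' hc' t ht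
        exact congrFun ((mem_filter.1 hc).2.trans (mem_filter.1 hc').2.symm)
          ⟨t, mem_compl.2 ht⟩
    _ ≤ 2 * d * 2 ^ (Fintype.card ι - s) := by
        gcongr
        calc #(C.image r) ≤ Fintype.card (↥Sᶜ → Bool) := card_le_univ _
          _ = 2 ^ (Fintype.card ι - s) := by simp [hS]

end BinaryCodes

section CubeVertex

variable {ι : Type*}

noncomputable def cubeVertex (b : ι → Bool) : EuclideanSpace ℝ ι :=
  WithLp.toLp 2 fun i => if b i then 1 else 0

theorem dist_cubeVertex [Fintype ι] (a b : ι → Bool) :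
    dist (cubeVertex a) (cubeVertex b) = √(hammingDist a b) := by
  rw [EuclideanSpace.dist_eq, hammingDist, card_filter]
  push_cast
  congr 1
  refine sum_congr rfl fun i _ => ?_
  simp only [cubeVertex, Real.dist_eq]
  cases a i <;> cases b i <;> simp

theorem cubeVertex_injective [Fintype ι] : Function.Injective (cubeVertex (ι := ι)) := by
  intro a b h
  have := dist_cubeVertex a b
  rwa [h, dist_self, eq_comm, sqrt_eq_zero (Nat.cast_nonneg _), Nat.cast_eq_zero,
    hammingDist_eq_zero] at this

theorem exists_cubeVertex_eq {x : EuclideanSpace ℝ ι} (hx : ∀ i, x i = 0 ∨ x i = 1) :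
    ∃ b, cubeVertex b = x := by
  refine ⟨fun i => decide (x i = 1), ?_⟩
  ext i
  rcases hx i with h | h <;> simp [cubeVertex, h]

end CubeVertex

section NearestNeighbour

variable {α β : Type*} [LinearOrder β]

def IsNearestNeighbourOrder (f : α → α → β) (n : ℕ) (p : ℕ → α) : Prop :=
  ∀ i j, i < j → j < n → f (p i) (p (i + 1)) ≤ f (p i) (p j)

theorem Finset.exists_isNearestNeighbourOrder (f : α → α → β) {s : Finset α} {x : α}
    (hx : x ∈ s) :
    ∃ p : ℕ → α, p 0 = x ∧ Set.BijOn p (Set.Iio #s) s ∧ IsNearestNeighbourOrder f #s p := by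
  classical
  obtain ⟨n, hn⟩ : ∃ n, #s = n + 1 := ⟨#s - 1, by have := card_pos.2 ⟨x, hx⟩; omega⟩
  rw [hn]
  induction n generalizing s x with
  | zero =>
    obtain ⟨a, rfl⟩ := card_eq_one.1 hn
    refine ⟨fun _ => x, rfl, ⟨fun _ _ => hx, fun i hi j hj _ => ?_, fun y hy => ?_⟩, ?_⟩
    · simp only [Set.mem_Iio] at hi hj
      omega
    · exact ⟨0, by simp, by simp_all⟩
    · intro i j hij hj
      omega
  | succ n ih =>
    have ht : #(s.erase x) = n + 1 := by rw [card_erase_of_mem hx, hn]; rfl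
    obtain ⟨y, hy, hymin⟩ := (s.erase x).exists_min_image (f x) (card_pos.1 (by omega))
    obtain ⟨q, rfl, hq, hqnn⟩ := ih hy ht
    refine ⟨fun | 0 => x | i + 1 => q i, rfl, ⟨?_, ?_, ?_⟩, ?_⟩
    · rintro (_ | i) hi
      · exact hx
      · exact mem_of_mem_erase (hq.mapsTo (by simp_all))
    · rintro (_ | i) hi (_ | j) hj h
      · rfl
      · have := hq.mapsTo (by simp_all : j < n + 1)
        rw [← show x = q j from h] at this
        simp at this
      · have := hq.mapsTo (by simp_all : i < n + 1)
        rw [show q i = x from h] at this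
        simp at this
      · exact congrArg (· + 1) (hq.injOn (by simp_all) (by simp_all) h)
    · intro z hz
      by_cases hzx : z = x
      · exact ⟨0, by simp, hzx.symm⟩
      · obtain ⟨i, hi, rfl⟩ := hq.surjOn (mem_erase.2 ⟨hzx, hz⟩)
        exact ⟨i + 1, by simp_all, rfl⟩
    · rintro (_ | i) (_ | j) hij hj
      · omega
      · exact hymin _ (hq.mapsTo (by simp; omega))
      · omega
      · exact hqnn i j (by omega) (by omega)

end NearestNeighbour

theorem pow_le_pow_mul_exp_sub {x : ℝ} (hx : 0 ≤ x) {n : ℕ} (hn : 0 < n) :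
    x ^ n ≤ n ^ n * exp (x - n) := by
  have hn' : (0 : ℝ) < n := by exact_mod_cast hn
  have h := one_sub_div_pow_le_exp_neg (n := n) (t := n - x) (by linarith)
  rw [show 1 - (n - x) / n = x / n by field_simp; ring, neg_sub, div_pow,
    div_le_iff₀ (by positivity)] at h
  linarith

theorem four_pow_sub_mul_pow_le {d k : ℕ} (hdk : 2 * d ≤ k) :
    (4 : ℝ) ^ (k - 2 * d) * d ^ k ≤ (2 / exp 1) ^ k * k ^ k := by
  rcases Nat.eq_zero_or_pos k with rfl | hk
  · simp
  have hexp : exp (2 * d) ≤ 16 ^ d := by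
    rw [mul_comm, exp_nat_mul]
    gcongr
    calc exp 2 = exp 1 ^ 2 := by rw [← exp_nat_mul]; norm_num
      _ ≤ 4 ^ 2 := by gcongr; linarith [exp_one_lt_d9]
      _ = 16 := by norm_num
  have h4 : (4 : ℝ) ^ (k - 2 * d) * 16 ^ d = 2 ^ k * 2 ^ k := by
    rw [← mul_pow, show (16 : ℝ) = 4 ^ 2 by norm_num, ← pow_mul, ← pow_add,
      Nat.sub_add_cancel hdk]
    norm_num
  have h := pow_le_pow_mul_exp_sub (x := 2 * d) (by positivity) hk
  refine le_of_mul_le_mul_right ?_ (by positivity : (0 : ℝ) < 16 ^ d)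
  calc (4 : ℝ) ^ (k - 2 * d) * d ^ k * 16 ^ d = 2 ^ k * (2 * d) ^ k := by
        rw [mul_right_comm, h4, mul_pow]; ring
    _ ≤ 2 ^ k * (k ^ k * exp (2 * d - k)) := by gcongr
    _ = (2 / exp 1) ^ k * k ^ k * exp (2 * d) := by
        rw [exp_sub, div_pow, ← exp_nat_mul, mul_one]; field_simp
    _ ≤ (2 / exp 1) ^ k * k ^ k * 16 ^ d := by gcongr

theorem sq_sqrt_pow {x : ℝ} (hx : 0 ≤ x) (k : ℕ) : (√x ^ k) ^ 2 = x ^ k := by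
  rw [← pow_mul, mul_comm, pow_mul, sq_sqrt hx]

theorem two_pow_sub_mul_sqrt_pow_le {d k : ℕ} (hdk : 2 * d ≤ k) :
    (2 : ℝ) ^ (k - 2 * d) * √d ^ k ≤ √(2 / exp 1) ^ k * √k ^ k := by
  have h4 : ((2 : ℝ) ^ (k - 2 * d)) ^ 2 = 4 ^ (k - 2 * d) := by
    rw [← pow_mul, mul_comm, pow_mul]; norm_num
  rw [← pow_le_pow_iff_left₀ (by positivity) (by positivity) two_ne_zero, mul_pow, mul_pow, h4,
    sq_sqrt_pow (by positivity), sq_sqrt_pow (by positivity), sq_sqrt_pow (by positivity)]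
  exact four_pow_sub_mul_pow_le hdk

theorem sqrt_sub_one_pow_le {k : ℕ} (hk : 1 ≤ k) :
    √((k : ℝ) - 1) ^ k ≤ exp (-1 / 2) * √k ^ k := by
  have hk' : (1 : ℝ) ≤ k := by exact_mod_cast hk
  rw [← pow_le_pow_iff_left₀ (by positivity) (by positivity) two_ne_zero, mul_pow,
    sq_sqrt_pow (by linarith), sq_sqrt_pow (by linarith), ← exp_nat_mul]
  have h := one_sub_div_pow_le_exp_neg (n := k) (t := 1) hk'
  calc ((k : ℝ) - 1) ^ k = (1 - 1 / k) ^ k * k ^ k := by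
        rw [← mul_pow]; field_simp
    _ ≤ exp (-1) * k ^ k := by gcongr
    _ = exp (2 * (-1 / 2)) * k ^ k := by norm_num

theorem sqrt_pow_add_sqrt_pow_le {a b k : ℕ} (ha : a ≤ k) (hb : b ≤ k)
    (hab : ¬(a = k ∧ b = k)) :
    √a ^ k + √b ^ k ≤ √k ^ k + √((k : ℝ) - 1) ^ k := by
  have hle : ∀ c : ℕ, c ≤ k → √c ^ k ≤ √k ^ k := fun c hc => by gcongr
  have hlt : ∀ c : ℕ, c ≠ k → c ≤ k → √c ^ k ≤ √((k : ℝ) - 1) ^ k := fun c hc hck => by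
    gcongr
    have : c + 1 ≤ k := by omega
    have : ((c + 1 : ℕ) : ℝ) ≤ k := by exact_mod_cast this
    push_cast at this
    linarith
  by_cases hak : a = k
  · linarith [hle a ha, hlt b (fun h => hab ⟨hak, h⟩) hb]
  · linarith [hlt a hak ha, hle b hb]

theorem eventually_four_mul_sq_mul_sqrt_pow_le :
    ∀ᶠ k : ℕ in atTop, 4 * (k : ℝ) ^ 2 * √(2 / exp 1) ^ k ≤ 1 - exp (-1 / 2) := by
  have hr : |√(2 / exp 1)| < 1 := by
    rw [abs_of_nonneg (sqrt_nonneg _), sqrt_lt' one_pos, one_pow, div_lt_one (exp_pos 1)]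
    linarith [exp_one_gt_d9]
  have h := (tendsto_pow_const_mul_const_pow_of_abs_lt_one 2 hr).const_mul 4
  rw [mul_zero] at h
  have hpos : 0 < 1 - exp (-1 / 2) := by
    rw [sub_pos, exp_lt_one_iff]; norm_num
  filter_upwards [h.eventually (ge_mem_nhds hpos)] with k hk
  rwa [← mul_assoc] at hk

section CubeTour

variable {k m : ℕ} {p : ℕ → Fin k → Bool}

theorem card_filter_le_hammingDist_le (hp : IsNearestNeighbourOrder hammingDist (m + 1) p)
    (hinj : Set.InjOn p (Set.Iio (m + 1))) {d s : ℕ} (hs : s ≤ k) (hsd : s < 2 * d) :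
    #{i ∈ range m | d ≤ hammingDist (p i) (p (i + 1))} ≤ 2 * d * 2 ^ (k - s) := by
  set B := {i ∈ range m | d ≤ hammingDist (p i) (p (i + 1))}
  have hB : ∀ i ∈ B, i < m := fun i hi => mem_range.1 (mem_filter.1 hi).1
  have hd : ∀ i ∈ B, ∀ j ∈ B, i < j → d ≤ hammingDist (p i) (p j) := fun i hi j hj hij =>
    (mem_filter.1 hi).2.trans (hp i j hij (by have := hB j hj; omega))
  rw [← card_image_of_injOn (hinj.mono fun i hi => by simp; have := hB i hi; omega)]
  refine card_le_two_mul_two_pow_of_le_hammingDist ?_ (by simpa using hs) hsd |>.trans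
    (by simp)
  simp only [mem_image]
  rintro _ ⟨i, hi, rfl⟩ _ ⟨j, hj, rfl⟩ hne
  rcases lt_or_gt_of_ne (ne_of_apply_ne p hne) with hij | hij
  · exact hd i hi j hj hij
  · exact hammingDist_comm (p i) (p j) ▸ hd j hj i hi hij

theorem card_filter_lt_hammingDist_le_one
    (hp : IsNearestNeighbourOrder hammingDist (m + 1) p) :
    #{i ∈ range m | 2 * k < 3 * hammingDist (p i) (p (i + 1))} ≤ 1 := by
  have key : ∀ i j, i < j → j < m → 2 * k < 3 * hammingDist (p i) (p (i + 1)) →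
      2 * k < 3 * hammingDist (p j) (p (j + 1)) → False := by
    intro i j hij hj hi' hj'
    have h1 := hp i j hij (by omega)
    have h2 := hp i (j + 1) (by omega) (by omega)
    have h3 := hammingDist_add_add_le (p i) (p j) (p (j + 1))
    simp only [Fintype.card_fin] at h3
    omega
  refine card_le_one.2 fun i hi j hj => ?_
  simp only [mem_filter, mem_range] at hi hj
  by_contra hne
  rcases lt_or_gt_of_ne hne with hij | hij
  · exact key i j hij hj.1 hi.2 hj.2
  · exact key j i hij hi.1 hj.2 hi.2

theorem hammingDist_last_first_ne (hp : IsNearestNeighbourOrder hammingDist (m + 1) p)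
    (hinj : Set.InjOn p (Set.Iio (m + 1))) (hm : 2 ≤ m) {i : ℕ} (him : i < m)
    (hi : hammingDist (p i) (p (i + 1)) = k) : hammingDist (p m) (p 0) ≠ k := by
  intro h0
  have hm0 : p m = (p 0)ᶜ := by
    rw [hammingDist_comm] at h0
    exact eq_compl_of_hammingDist_eq_card (by simpa using h0)
  rcases Nat.eq_zero_or_pos i with rfl | hi0
  · have h1 : p 1 = (p 0)ᶜ := eq_compl_of_hammingDist_eq_card (by simpa using hi)
    have := hinj (by simp; omega) (by simp) (h1.trans hm0.symm)
    omega
  · have hk : hammingDist (p i) (p m) = k :=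
      le_antisymm (hammingDist_le_card_fintype.trans_eq (Fintype.card_fin k))
        (by have := hp i m him (by omega); omega)
    have him' : p m = (p i)ᶜ := eq_compl_of_hammingDist_eq_card (by simpa using hk)
    have := hinj (by simp; omega) (by simp) (compl_injective (him'.symm.trans hm0))
    omega

theorem card_filter_le_hammingDist_mul_sqrt_pow_le
    (hp : IsNearestNeighbourOrder hammingDist (m + 1) p) (hinj : Set.InjOn p (Set.Iio (m + 1)))
    {d : ℕ} (hd : 1 ≤ d) (hdk : 3 * d ≤ 2 * k) :
    (#{i ∈ range m | d ≤ hammingDist (p i) (p (i + 1))} : ℝ) * √d ^ k ≤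
      4 * k * (√(2 / exp 1) ^ k * √k ^ k) := by
  rcases le_or_gt (2 * d) k with h2d | h2d
  · have hcard := card_filter_le_hammingDist_le hp hinj (d := d) (s := 2 * d - 1) (by omega)
      (by omega)
    rw [show k - (2 * d - 1) = k - 2 * d + 1 by omega, pow_succ] at hcard
    have hdk' : (4 * d : ℝ) ≤ 4 * k := by norm_cast; omega
    calc (#{i ∈ range m | d ≤ hammingDist (p i) (p (i + 1))} : ℝ) * √d ^ k
        ≤ (2 * d * (2 ^ (k - 2 * d) * 2) : ℕ) * √d ^ k := by gcongr
      _ = 4 * d * (2 ^ (k - 2 * d) * √d ^ k) := by push_cast; ring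
      _ ≤ 4 * k * (√(2 / exp 1) ^ k * √k ^ k) :=
        mul_le_mul hdk' (two_pow_sub_mul_sqrt_pow_le h2d) (by positivity) (by positivity)
  · have hcard := card_filter_le_hammingDist_le hp hinj (d := d) (s := k) le_rfl h2d
    rw [Nat.sub_self, pow_zero, mul_one] at hcard
    have hdk' : ((2 * d : ℕ) : ℝ) ≤ 4 * k := by norm_cast; omega
    have hd' : (d : ℝ) ≤ 2 / exp 1 * k := by
      have : (3 * d : ℝ) ≤ 2 * k := by exact_mod_cast hdk
      rw [div_mul_eq_mul_div, le_div_iff₀ (exp_pos 1)]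
      nlinarith [exp_one_lt_d9]
    calc (#{i ∈ range m | d ≤ hammingDist (p i) (p (i + 1))} : ℝ) * √d ^ k
        ≤ ((2 * d : ℕ) : ℝ) * √(2 / exp 1 * k) ^ k := by gcongr
      _ ≤ 4 * k * (√(2 / exp 1) ^ k * √k ^ k) := by
        rw [sqrt_mul (by positivity), mul_pow]
        gcongr

theorem sum_filter_sqrt_hammingDist_pow_le
    (hp : IsNearestNeighbourOrder hammingDist (m + 1) p) (hinj : Set.InjOn p (Set.Iio (m + 1))) :
    ∑ i ∈ range m with 3 * hammingDist (p i) (p (i + 1)) ≤ 2 * k,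
        √(hammingDist (p i) (p (i + 1))) ^ k ≤
      4 * k ^ 2 * (√(2 / exp 1) ^ k * √k ^ k) := by
  set D : ℕ → ℕ := fun i => hammingDist (p i) (p (i + 1))
  set T := {d ∈ Icc 1 k | 3 * d ≤ 2 * k}
  have hmaps : ∀ i ∈ {i ∈ range m | 3 * D i ≤ 2 * k}, D i ∈ T := by
    intro i hi
    simp only [mem_filter, mem_range, mem_Icc, T] at hi ⊢
    have hne : p i ≠ p (i + 1) := fun h => by
      have := hinj (by simp; omega) (by simp; omega) h
      omega
    exact ⟨⟨hammingDist_pos.2 hne, hammingDist_le_card_fintype.trans_eq (Fintype.card_fin k)⟩,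
      hi.2⟩
  calc ∑ i ∈ range m with 3 * D i ≤ 2 * k, √(D i) ^ k
      = ∑ d ∈ T, (#{i ∈ range m | 3 * D i ≤ 2 * k ∧ D i = d} : ℝ) * √d ^ k := by
        rw [← sum_fiberwise_of_maps_to hmaps]
        refine sum_congr rfl fun d _ => ?_
        rw [filter_filter, ← nsmul_eq_mul, ← sum_const]
        exact sum_congr rfl fun i hi => by rw [(mem_filter.1 hi).2.2]
    _ ≤ ∑ _d ∈ T, 4 * k * (√(2 / exp 1) ^ k * √k ^ k) := by
        refine sum_le_sum fun d hd => ?_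
        simp only [mem_filter, mem_Icc, T] at hd
        refine le_trans ?_ (card_filter_le_hammingDist_mul_sqrt_pow_le hp hinj hd.1.1 hd.2)
        gcongr with i
        exact fun h => h.2.ge
    _ ≤ k * (4 * k * (√(2 / exp 1) ^ k * √k ^ k)) := by
        rw [sum_const, nsmul_eq_mul]
        gcongr
        exact_mod_cast (card_filter_le _ _).trans (Nat.card_Icc 1 k).le
    _ = 4 * k ^ 2 * (√(2 / exp 1) ^ k * √k ^ k) := by ring

theorem sum_filter_sqrt_hammingDist_pow_add_le
    (hp : IsNearestNeighbourOrder hammingDist (m + 1) p) (hinj : Set.InjOn p (Set.Iio (m + 1)))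
    (hm : 2 ≤ m) :
    ∑ i ∈ range m with 2 * k < 3 * hammingDist (p i) (p (i + 1)),
        √(hammingDist (p i) (p (i + 1))) ^ k + √(hammingDist (p m) (p 0)) ^ k ≤
      √k ^ k + √((k : ℝ) - 1) ^ k := by
  set L := {i ∈ range m | 2 * k < 3 * hammingDist (p i) (p (i + 1))}
  have hle : ∀ a b, hammingDist (p a) (p b) ≤ k := fun a b =>
    hammingDist_le_card_fintype.trans_eq (Fintype.card_fin k)
  rcases L.eq_empty_or_nonempty with hL | ⟨i, hi⟩
  · rw [hL, sum_empty, zero_add]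
    have : √(hammingDist (p m) (p 0)) ^ k ≤ √k ^ k := by gcongr; exact_mod_cast hle m 0
    linarith [pow_nonneg (sqrt_nonneg ((k : ℝ) - 1)) k]
  · have hLi : L = {i} := eq_singleton_iff_unique_mem.2
      ⟨hi, fun j hj => card_le_one.1 (card_filter_lt_hammingDist_le_one hp) j hj i hi⟩
    rw [hLi, sum_singleton]
    exact sqrt_pow_add_sqrt_pow_le (hle _ _) (hle _ _) fun h =>
      hammingDist_last_first_ne hp hinj hm (mem_range.1 (mem_filter.1 hi).1) h.1 h.2

theorem sum_sqrt_hammingDist_pow_le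
    (hp : IsNearestNeighbourOrder hammingDist (m + 1) p) (hinj : Set.InjOn p (Set.Iio (m + 1)))
    (hm : 2 ≤ m) :
    ∑ i ∈ range (m + 1), √(hammingDist (p i) (p ((i + 1) % (m + 1)))) ^ k ≤
      (4 * k ^ 2 * √(2 / exp 1) ^ k + 1 + exp (-1 / 2)) * √k ^ k := by
  have hk : 1 ≤ k := by
    have hne : p 0 ≠ p 1 := fun h => by
      have := hinj (by simp) (by simp; omega) h
      omega
    exact (hammingDist_pos.2 hne).trans_le
      (hammingDist_le_card_fintype.trans_eq (Fintype.card_fin k))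
  have hcycle : ∑ i ∈ range (m + 1), √(hammingDist (p i) (p ((i + 1) % (m + 1)))) ^ k =
      ∑ i ∈ range m, √(hammingDist (p i) (p (i + 1))) ^ k + √(hammingDist (p m) (p 0)) ^ k := by
    rw [sum_range_succ, Nat.mod_self]
    congr 1
    exact sum_congr rfl fun i hi => by rw [Nat.mod_eq_of_lt (by simp at hi; omega)]
  rw [hcycle,
    ← sum_filter_add_sum_filter_not _ (fun i => 3 * hammingDist (p i) (p (i + 1)) ≤ 2 * k)]
  simp only [not_le]
  linarith [sum_filter_sqrt_hammingDist_pow_le hp hinj,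
    sum_filter_sqrt_hammingDist_pow_add_le hp hinj hm, sqrt_sub_one_pow_le hk]

end CubeTour

/-- There exists `k₀` such that for all `k ≥ k₀`: for every subset `X` of the cube vertices
`{0,1}^k` with `|X| ≥ 2`, there is a Hamiltonian cycle through `X` of unscaled cost at most
`2·k^{k/2}`, i.e. scaled cost at most `2^{1/k}·√k`. -/
theorem stmt_2 :
    ∃ k0 : ℕ, ∀ k : ℕ, k0 ≤ k →
      ∀ X : Finset (EuclideanSpace ℝ (Fin k)),
        (∀ x ∈ X, ∀ i, x i = 0 ∨ x i = 1) → 2 ≤ X.card →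
        ∃ f : ℕ → EuclideanSpace ℝ (Fin k),
          Set.BijOn f (Set.Iio X.card) ↑X ∧
          ∑ i ∈ Finset.range X.card, dist (f i) (f ((i + 1) % X.card)) ^ k ≤
            2 * Real.sqrt k ^ k := by
  obtain ⟨k0, hk0⟩ := eventually_atTop.1 eventually_four_mul_sq_mul_sqrt_pow_le
  refine ⟨k0, fun k hk X hX hcard => ?_⟩
  obtain ⟨Y, -, rfl⟩ := subset_set_image_iff.1 fun x hx =>
    ⟨_, Set.mem_univ _, (exists_cubeVertex_eq (hX x hx)).choose_spec⟩
  rw [card_image_of_injective _ cubeVertex_injective] at hcard ⊢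
  obtain ⟨y, hy⟩ := card_pos.1 (by omega : 0 < #Y)
  obtain ⟨p, -, hbij, hp⟩ := Y.exists_isNearestNeighbourOrder hammingDist hy
  refine ⟨cubeVertex ∘ p, ?_, ?_⟩
  · rw [coe_image]
    exact cubeVertex_injective.injOn.bijOn_image.comp hbij
  simp only [Function.comp_apply, dist_cubeVertex]
  obtain ⟨m, hm⟩ : ∃ m, #Y = m + 1 := ⟨#Y - 1, by omega⟩
  rw [hm] at hbij hp ⊢
  rcases (show m = 1 ∨ 2 ≤ m by omega) with rfl | hm2
  · calc ∑ i ∈ range 2, √(hammingDist (p i) (p ((i + 1) % 2))) ^ k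
        ≤ ∑ _i ∈ range 2, √k ^ k := sum_le_sum fun i _ => by
          gcongr
          exact_mod_cast hammingDist_le_card_fintype.trans_eq (Fintype.card_fin k)
      _ = 2 * √k ^ k := by simp
  · calc _ ≤ (4 * k ^ 2 * √(2 / exp 1) ^ k + 1 + exp (-1 / 2)) * √k ^ k :=
          sum_sqrt_hammingDist_pow_le hp hbij.injOn hm2
      _ ≤ 2 * √k ^ k := by gcongr; linarith [hk0 k hk]
end

section
/- For every k ≥ 2 and every n ≥ 2 there exist n points x_1, …, x_n in the unit cube [0,1]^k ⊂ ℝ^k (points may coincide) such that every Hamiltonian cycle (cyclic ordering) y_1, …, y_n of these points satisfies Σ_{i=1}^n |y_i - y_{i+1}|^k ≥ 2·k^{k/2} (indices mod n); that is, the shortest tour has scaled cost at least 2^{1/k}·√k. -/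
/-!
Put one point at the origin and all the others at the opposite corner `(1, …, 1)`. In any
cyclic order the origin has two distinct incident edges (this needs `n ≥ 2`), each joining it to
the far corner, so the tour contains two edges of length `√k`.
-/

open Finset

theorem Fin.sub_one_ne_self {n : ℕ} [NeZero n] (hn : 2 ≤ n) (i : Fin n) : i - 1 ≠ i := by
  simp only [ne_eq, sub_eq_self, Fin.one_eq_zero_iff]
  omega

theorem Fin.add_one_ne_self {n : ℕ} [NeZero n] (hn : 2 ≤ n) (i : Fin n) : i + 1 ≠ i := by
  simp only [ne_eq, add_eq_left, Fin.one_eq_zero_iff]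
  omega

theorem Fin.add_le_sum_of_sub_one {n : ℕ} [NeZero n] (hn : 2 ≤ n) {f : Fin n → ℝ}
    (hf : ∀ i, 0 ≤ f i) (i : Fin n) : f (i - 1) + f i ≤ ∑ j, f j := by
  rw [← sum_pair (Fin.sub_one_ne_self hn i)]
  exact sum_le_sum_of_subset_of_nonneg (subset_univ _) fun j _ _ => hf j

theorem EuclideanSpace.dist_zero_const_one (k : ℕ) :
    dist (0 : EuclideanSpace ℝ (Fin k)) (WithLp.toLp 2 fun _ => 1) = √k := by
  simp [EuclideanSpace.dist_eq]

theorem two_mul_dist_pow_le_sum_dist_pow_update {X : Type*} [PseudoMetricSpace X]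
    {n : ℕ} [NeZero n] (hn : 2 ≤ n) (a b : X) (j₀ : Fin n) (k : ℕ) (σ : Equiv.Perm (Fin n)) :
    2 * dist a b ^ k ≤
      ∑ i, dist (Function.update (fun _ => b) j₀ a (σ i))
        (Function.update (fun _ => b) j₀ a (σ (i + 1))) ^ k := by
  set x := Function.update (fun _ => b) j₀ a
  set i₀ := σ.symm j₀
  have hx : ∀ i, i ≠ i₀ → x (σ i) = b := fun i hi =>
    Function.update_of_ne (fun h => hi (σ.eq_symm_apply.mpr h)) _ _
  have hx₀ : x (σ i₀) = a := by simp [x, i₀]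
  have hprev := hx (i₀ - 1) (Fin.sub_one_ne_self hn i₀)
  have hnext := hx (i₀ + 1) (Fin.add_one_ne_self hn i₀)
  calc 2 * dist a b ^ k
      = dist (x (σ (i₀ - 1))) (x (σ (i₀ - 1 + 1))) ^ k
          + dist (x (σ i₀)) (x (σ (i₀ + 1))) ^ k := by
        rw [sub_add_cancel, hprev, hx₀, hnext, dist_comm b a]; ring
    _ ≤ _ := Fin.add_le_sum_of_sub_one hn
        (f := fun i => dist (x (σ i)) (x (σ (i + 1))) ^ k) (fun _ => by positivity) i₀

theorem stmt_6_general (k n : ℕ) (hn : 2 ≤ n) [NeZero n] :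
    ∃ x : Fin n → EuclideanSpace ℝ (Fin k),
      (∀ j, ∀ i, x j i ∈ Set.Icc (0 : ℝ) 1) ∧
      ∀ σ : Equiv.Perm (Fin n),
        2 * Real.sqrt k ^ k ≤ ∑ i : Fin n, dist (x (σ i)) (x (σ (i + 1))) ^ k := by
  refine ⟨Function.update (fun _ => WithLp.toLp 2 fun _ => 1) 0 0, fun j i => ?_, fun σ => ?_⟩
  · rcases eq_or_ne j 0 with rfl | hj
    · simp
    · simp [hj]
  · rw [← EuclideanSpace.dist_zero_const_one k]
    exact two_mul_dist_pow_le_sum_dist_pow_update hn _ _ 0 k σ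

/-- For every `k ≥ 2` and `n ≥ 2` there exist `n` points in `[0,1]^k` (possibly coinciding)
such that every cyclic ordering (Hamiltonian cycle) of the points has unscaled cost at least
`2·k^{k/2}`, i.e. scaled cost at least `2^{1/k}·√k`. -/
theorem stmt_6 (k n : ℕ) (hk : 2 ≤ k) (hn : 2 ≤ n) [NeZero n] :
    ∃ x : Fin n → EuclideanSpace ℝ (Fin k),
      (∀ j, ∀ i, x j i ∈ Set.Icc (0 : ℝ) 1) ∧
      ∀ σ : Equiv.Perm (Fin n),
        2 * Real.sqrt k ^ k ≤ ∑ i : Fin n, dist (x (σ i)) (x (σ (i + 1))) ^ k :=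
  stmt_6_general k n hn
end

section
/- Let k ≥ 1, let X ⊂ ℝ^k be a finite point set with |X| ≥ 3, and let T be any spanning tree on vertex set X. Then there exists a Hamiltonian cycle H on X such that Σ_{e ∈ H} |e|^k ≤ (2/3)·3^k·Σ_{e ∈ T} |e|^k. -/
/-!
Root the tree. A rooted tree is a single vertex or two rooted trees `A`, `B` joined by an edge
between their roots `a`, `b`; by induction on this decomposition there is a Hamiltonian path
starting at the root whose cost plus `3^(k-1) |root - end|^k` is at most `2 · 3^(k-1)` times the
cost of the tree. For the joined tree, follow the path of `A`, jump from its end `x` to the end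
`y` of the path of `B`, and run the latter backwards to `b`; the jump is paid for by
`|x - y| ≤ |x - a| + |a - b| + |b - y|` and `(u + v + w)^k ≤ 3^(k-1) (u^k + v^k + w^k)`, using the
slack terms of both subpaths. Closing the path into a cycle costs at most the remaining slack
term, and `2 · 3^(k-1) = (2/3) · 3^k`.
-/

/-- The `k`-th power cost of an edge (an unordered pair of points) of a geometric graph. -/
noncomputable def edgeCost {V : Type*} [PseudoMetricSpace V] (k : ℕ) (e : Sym2 V) : ℝ :=
  Sym2.lift ⟨fun x y => dist x y ^ k, fun x y => by simp [dist_comm]⟩ e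

open Finset

lemma add_three_pow_le (n : ℕ) {x y z : ℝ} (hx : 0 ≤ x) (hy : 0 ≤ y) (hz : 0 ≤ z) :
    (x + y + z) ^ (n + 1) ≤ 3 ^ n * (x ^ (n + 1) + y ^ (n + 1) + z ^ (n + 1)) := by
  have h := pow_sum_le_card_mul_sum_pow (s := (univ : Finset (Fin 3))) (f := ![x, y, z])
    (by intro i _; fin_cases i <;> simpa) n
  simpa [Fin.sum_univ_three] using h

lemma Multiset.sum_map_le_finsum_mem {α : Type*} {m : Multiset α} {s : Set α} (f : α → ℝ)
    (hm : m.Nodup) (hms : ∀ a ∈ m, a ∈ s) (hs : s.Finite) (hf : ∀ a ∈ s, 0 ≤ f a) :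
    (m.map f).sum ≤ ∑ᶠ a ∈ s, f a := by
  rw [finsum_mem_eq_finite_toFinset_sum f hs]
  exact Finset.sum_le_sum_of_subset_of_nonneg (s := ⟨m, hm⟩)
    (fun a ha => hs.mem_toFinset.2 (hms a ha)) (fun a ha _ => hf a (hs.mem_toFinset.1 ha))

lemma List.bijOn_getD {α : Type*} {l : List α} {s : Finset α} (h : (l : Multiset α) = s.val)
    (d : α) : Set.BijOn (fun i => l.getD i d) (Set.Iio l.length) s := by
  have hmem : ∀ a, a ∈ l ↔ a ∈ s := fun a => by rw [← Multiset.mem_coe, h]; rfl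
  have hnd : l.Nodup := by rw [← Multiset.coe_nodup, h]; exact s.nodup
  refine ⟨fun i (hi : i < l.length) => ?_, fun i (hi : i < l.length) j (hj : j < l.length) hij => ?_,
    fun a ha => ?_⟩
  · show l.getD i d ∈ s
    rw [List.getD_eq_getElem _ _ hi]
    exact (hmem _).1 (List.getElem_mem hi)
  · dsimp only at hij
    rwa [List.getD_eq_getElem _ _ hi, List.getD_eq_getElem _ _ hj, hnd.getElem_inj_iff] at hij
  · obtain ⟨i, hi, rfl⟩ := List.mem_iff_getElem.1 ((hmem a).2 ha)
    exact ⟨i, hi, List.getD_eq_getElem _ _ hi⟩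

section Combinatorics

variable {V : Type*}

/-- The vertex and edge multisets `vs`, `es` of a tree rooted at `r`; `graft` hangs the tree
rooted at `b` below `a` through the edge `s(a, b)`. -/
inductive IsGraftTree : V → Multiset V → Multiset (Sym2 V) → Prop
  | single (v : V) : IsGraftTree v {v} 0
  | graft {a b : V} {as bs : Multiset V} {ae be : Multiset (Sym2 V)} :
      IsGraftTree a as ae → IsGraftTree b bs be → IsGraftTree a (as + bs) (s(a, b) ::ₘ (ae + be))

namespace IsGraftTree

variable {r : V} {vs : Multiset V} {es : Multiset (Sym2 V)}

lemma root_mem (h : IsGraftTree r vs es) : r ∈ vs := by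
  induction h with
  | single => exact Multiset.mem_singleton_self _
  | graft _ _ ih _ => exact Multiset.mem_add.2 (.inl ih)

lemma mem_of_mem_edge (h : IsGraftTree r vs es) {e : Sym2 V} (he : e ∈ es) {v : V}
    (hv : v ∈ e) : v ∈ vs := by
  induction h with
  | single => simp at he
  | graft ha hb iha ihb =>
    rcases Multiset.mem_cons.1 he with rfl | he
    · rcases Sym2.mem_iff.1 hv with rfl | rfl
      · exact Multiset.mem_add.2 (.inl ha.root_mem)
      · exact Multiset.mem_add.2 (.inr hb.root_mem)
    · rcases Multiset.mem_add.1 he with he | he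
      · exact Multiset.mem_add.2 (.inl (iha he))
      · exact Multiset.mem_add.2 (.inr (ihb he))

lemma attach (h : IsGraftTree r vs es) {y : V} (hy : y ∈ vs) (x : V) :
    IsGraftTree r (x ::ₘ vs) (s(y, x) ::ₘ es) := by
  induction h with
  | single v =>
    obtain rfl := Multiset.mem_singleton.1 hy
    have h := graft (single y) (single x)
    rwa [Multiset.singleton_add, Multiset.add_zero, ← Multiset.singleton_add,
      Multiset.add_comm] at h
  | graft ha hb iha ihb =>
    rcases Multiset.mem_add.1 hy with hy | hy
    · simpa [Multiset.cons_add, Multiset.cons_swap] using graft (iha hy) hb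
    · simpa [Multiset.add_cons, Multiset.cons_swap] using graft ha (ihb hy)

end IsGraftTree

lemma SimpleGraph.Preconnected.exists_isGraftTree [Fintype V] [DecidableEq V]
    {G : SimpleGraph V} (hG : G.Preconnected) (r : V) :
    ∃ es, IsGraftTree r (univ : Finset V).val es ∧ es.Nodup ∧ ∀ e ∈ es, e ∈ G.edgeSet := by
  suffices h : ∀ n < Fintype.card V, ∃ (s : Finset V) (es : Multiset (Sym2 V)), #s = n + 1 ∧
      IsGraftTree r s.val es ∧ es.Nodup ∧ ∀ e ∈ es, e ∈ G.edgeSet by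
    have hV : 0 < Fintype.card V := Fintype.card_pos_iff.2 ⟨r⟩
    obtain ⟨s, es, hs, h⟩ := h (Fintype.card V - 1) (by omega)
    rw [eq_univ_of_card s (by omega)] at h
    exact ⟨es, h⟩
  intro n hn
  induction n with
  | zero => exact ⟨{r}, 0, rfl, .single r, Multiset.nodup_zero, by simp⟩
  | succ n ih =>
    obtain ⟨s, es, hs, htree, hnd, hes⟩ := ih (by omega)
    obtain ⟨x, hx⟩ : ∃ x, x ∉ s := not_forall.1 fun h => by
      rw [eq_univ_of_forall h, card_univ] at hs; omega
    obtain ⟨d, -, hy, hx⟩ :=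
      (hG r x).some.exists_boundary_dart (s : Set V) htree.root_mem hx
    refine ⟨insert d.snd s, s(d.fst, d.snd) ::ₘ es, by rw [card_insert_of_notMem hx, hs], ?_,
      Multiset.nodup_cons.2 ⟨fun he => hx (htree.mem_of_mem_edge he (Sym2.mem_mk_right _ _)), hnd⟩,
      ?_⟩
    · rw [insert_val_of_notMem hx]
      exact htree.attach hy _
    · intro e he
      rcases Multiset.mem_cons.1 he with rfl | he
      exacts [d.adj, hes e he]

end Combinatorics

section Metric

variable {V : Type*} [PseudoMetricSpace V]

@[simp] lemma edgeCost_mk (k : ℕ) (x y : V) : edgeCost k s(x, y) = dist x y ^ k := rfl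

lemma edgeCost_nonneg (k : ℕ) (e : Sym2 V) : 0 ≤ edgeCost k e := by
  induction e using Sym2.ind with
  | _ x y => exact pow_nonneg dist_nonneg k

noncomputable def pathCost (k : ℕ) : List V → ℝ
  | a :: b :: l => dist a b ^ k + pathCost k (b :: l)
  | _ => 0

section PathCost

variable (k : ℕ)

@[simp] lemma pathCost_nil : pathCost k ([] : List V) = 0 := rfl

@[simp] lemma pathCost_singleton (a : V) : pathCost k [a] = 0 := rfl

@[simp] lemma pathCost_cons_cons (a b : V) (l : List V) :
    pathCost k (a :: b :: l) = dist a b ^ k + pathCost k (b :: l) := rfl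

lemma pathCost_append {l₁ l₂ : List V} (h₁ : l₁ ≠ []) (h₂ : l₂ ≠ []) :
    pathCost k (l₁ ++ l₂) =
      pathCost k l₁ + dist (l₁.getLast h₁) (l₂.head h₂) ^ k + pathCost k l₂ := by
  induction l₁ with
  | nil => contradiction
  | cons a l₁ ih =>
    cases l₁ with
    | nil => cases l₂ with
      | nil => contradiction
      | cons c l₂ => simp
    | cons b l₁ =>
      rw [List.cons_append, List.cons_append, pathCost_cons_cons, ← List.cons_append,
        ih (List.cons_ne_nil _ _), pathCost_cons_cons, List.getLast_cons (List.cons_ne_nil _ _)]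
      ring

lemma pathCost_reverse (l : List V) : pathCost k l.reverse = pathCost k l := by
  induction l with
  | nil => rfl
  | cons a l ih =>
    cases l with
    | nil => rfl
    | cons b l =>
      rw [List.reverse_cons, pathCost_append k (by simp) (List.cons_ne_nil _ _), ih]
      simp [dist_comm]
      ring

lemma pathCost_eq_sum (l : List V) (d : V) :
    pathCost k l = ∑ i ∈ range (l.length - 1), dist (l.getD i d) (l.getD (i + 1) d) ^ k := by
  induction l with
  | nil => simp
  | cons a l ih =>
    cases l with
    | nil => simp
    | cons b l =>
      rw [pathCost_cons_cons, ih, List.length_cons, List.length_cons, Nat.add_sub_cancel,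
        Nat.add_sub_cancel, List.length_cons, sum_range_succ']
      simp only [List.getD_cons_succ, List.getD_cons_zero]
      ring

lemma sum_range_dist_getD_mod (l : List V) (hl : l ≠ []) (d : V) :
    ∑ i ∈ range l.length, dist (l.getD i d) (l.getD ((i + 1) % l.length) d) ^ k =
      pathCost k l + dist (l.getLast hl) (l.head hl) ^ k := by
  obtain ⟨m, hm⟩ : ∃ m, l.length = m + 1 := Nat.exists_eq_add_one.2 (List.length_pos_iff.2 hl)
  have hlast : l.getD m d = l.getLast hl := by
    rw [List.getD_eq_getElem _ _ (by omega), List.getLast_eq_getElem]; simp [hm]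
  have hhead : l.getD 0 d = l.head hl := by cases l <;> first | contradiction | rfl
  rw [hm, sum_range_succ, Nat.mod_self, hlast, hhead, pathCost_eq_sum k l d, hm,
    Nat.add_sub_cancel]
  congr 1
  refine sum_congr rfl fun i hi => ?_
  rw [Nat.mod_eq_of_lt (by simpa using hi)]

lemma pathCost_map {W : Type*} [PseudoMetricSpace W] {f : V → W} (hf : Isometry f) (l : List V) :
    pathCost k (l.map f) = pathCost k l := by
  induction l with
  | nil => rfl
  | cons a l ih =>
    cases l with
    | nil => rfl
    | cons b l => rw [List.map_cons, List.map_cons, pathCost_cons_cons, ← List.map_cons, ih,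
        hf.dist_eq, pathCost_cons_cons]

end PathCost

namespace IsGraftTree

variable {r : V} {vs : Multiset V} {es : Multiset (Sym2 V)}

theorem exists_path (n : ℕ) (h : IsGraftTree r vs es) :
    ∃ (l : List V) (hl : l ≠ []), l.head hl = r ∧ (l : Multiset V) = vs ∧
      pathCost (n + 1) l + 3 ^ n * dist r (l.getLast hl) ^ (n + 1) ≤
        2 * 3 ^ n * (es.map (edgeCost (n + 1))).sum := by
  induction h with
  | single v => exact ⟨[v], List.cons_ne_nil _ _, rfl, rfl, by simp⟩
  | graft _ _ iha ihb =>
    obtain ⟨la, hla, rfl, rfl, hcosta⟩ := iha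
    obtain ⟨lb, hlb, rfl, rfl, hcostb⟩ := ihb
    have hlb' : lb.reverse ≠ [] := List.reverse_ne_nil_iff.2 hlb
    refine ⟨la ++ lb.reverse, List.append_ne_nil_of_left_ne_nil hla _,
      List.head_append_left hla, by simpa using (List.reverse_perm lb).append_left la, ?_⟩
    set x := la.getLast hla
    set y := lb.getLast hlb
    have hjump : dist x y ^ (n + 1) ≤ 3 ^ n * (dist (la.head hla) x ^ (n + 1) +
        dist (la.head hla) (lb.head hlb) ^ (n + 1) + dist (lb.head hlb) y ^ (n + 1)) := by
      calc dist x y ^ (n + 1)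
          ≤ (dist x (la.head hla) + dist (la.head hla) (lb.head hlb) + dist (lb.head hlb) y) ^
              (n + 1) := pow_le_pow_left₀ dist_nonneg (dist_triangle4 _ _ _ _) _
        _ ≤ _ := add_three_pow_le n dist_nonneg dist_nonneg dist_nonneg
        _ = _ := by rw [dist_comm x]
    rw [List.getLast_append_of_right_ne_nil _ _ hlb', List.getLast_reverse,
      pathCost_append _ hla hlb', pathCost_reverse, List.head_reverse]
    simp only [Multiset.map_cons, Multiset.map_add, Multiset.sum_cons, Multiset.sum_add,
      edgeCost_mk]
    nlinarith [pow_nonneg (dist_nonneg (x := la.head hla) (y := lb.head hlb)) (n + 1),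
      one_le_pow₀ (M₀ := ℝ) (a := 3) (by norm_num) (n := n)]

theorem exists_tour (n : ℕ) (h : IsGraftTree r vs es) :
    ∃ (l : List V) (hl : l ≠ []), (l : Multiset V) = vs ∧
      pathCost (n + 1) l + dist (l.getLast hl) (l.head hl) ^ (n + 1) ≤
        2 * 3 ^ n * (es.map (edgeCost (n + 1))).sum := by
  obtain ⟨l, hl, rfl, hperm, hcost⟩ := h.exists_path n
  refine ⟨l, hl, hperm, le_trans ?_ hcost⟩
  rw [dist_comm]
  gcongr
  exact le_mul_of_one_le_left (by positivity) (one_le_pow₀ (by norm_num))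

end IsGraftTree

end Metric

theorem stmt_8_general (k : ℕ) (hk : 1 ≤ k)
    (X : Finset (EuclideanSpace ℝ (Fin k)))
    (T : SimpleGraph ↥X) (hT : T.IsTree) :
    ∃ f : ℕ → EuclideanSpace ℝ (Fin k),
      Set.BijOn f (Set.Iio X.card) ↑X ∧
      ∑ i ∈ Finset.range X.card, dist (f i) (f ((i + 1) % X.card)) ^ k ≤
        (2 / 3 : ℝ) * 3 ^ k * ∑ᶠ e ∈ T.edgeSet, edgeCost k e := by
  classical
  obtain ⟨n, rfl⟩ : ∃ n, k = n + 1 := Nat.exists_eq_add_one.2 hk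
  obtain ⟨r⟩ := hT.connected.nonempty
  obtain ⟨es, htree, hnd, hes⟩ := hT.connected.preconnected.exists_isGraftTree r
  obtain ⟨l, hl, hperm, hcost⟩ := htree.exists_tour n
  set L := l.map Subtype.val
  have hL : (L : Multiset _) = X.val := by
    rw [← Multiset.map_coe, hperm, Finset.univ_eq_attach, Finset.attach_val,
      Multiset.attach_map_val]
  have hlen : L.length = X.card := by rw [← Multiset.coe_card, hL]; rfl
  have hL' : L ≠ [] := List.map_eq_nil_iff.not.2 hl
  refine ⟨fun i => L.getD i 0, hlen ▸ List.bijOn_getD hL 0, ?_⟩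
  rw [← hlen, sum_range_dist_getD_mod _ L hL' 0, pathCost_map _ isometry_subtype_coe,
    List.getLast_map, List.head_map, ← Subtype.dist_eq]
  calc _ ≤ 2 * 3 ^ n * (es.map (edgeCost (n + 1))).sum := hcost
    _ ≤ 2 * 3 ^ n * ∑ᶠ e ∈ T.edgeSet, edgeCost (n + 1) e := by
      gcongr
      exact Multiset.sum_map_le_finsum_mem _ hnd hes (Set.toFinite _)
        fun e _ => edgeCost_nonneg _ e
    _ = _ := by ring

/-- For `k ≥ 1`, a finite point set `X ⊂ ℝ^k` with `|X| ≥ 3`, and any spanning tree `T`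
on `X`, there exists a Hamiltonian cycle `H` on `X` with
`∑_{e ∈ H} |e|^k ≤ (2/3)·3^k·∑_{e ∈ T} |e|^k`. -/
theorem stmt_8 (k : ℕ) (hk : 1 ≤ k)
    (X : Finset (EuclideanSpace ℝ (Fin k))) (hX : 3 ≤ X.card)
    (T : SimpleGraph ↥X) (hT : T.IsTree) :
    ∃ f : ℕ → EuclideanSpace ℝ (Fin k),
      Set.BijOn f (Set.Iio X.card) ↑X ∧
      ∑ i ∈ Finset.range X.card, dist (f i) (f ((i + 1) % X.card)) ^ k ≤
        (2 / 3 : ℝ) * 3 ^ k * ∑ᶠ e ∈ T.edgeSet, edgeCost k e :=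
  stmt_8_general k hk X T hT
end

section
/- Let m ≥ 1 and let q_1, q_2, …, q_m be real numbers in the interval [0,1]. Then Σ_{1 ≤ i < j ≤ m} |q_i - q_j|^2 ≤ ⌊m/2⌋ · ⌈m/2⌉. -/
/-!
By the Lagrange identity, `∑_{i<j} (q_i - q_j)² = m ∑ q_i² - (∑ q_i)²`, a convex function
of `q`. A convex function on the cube `[0,1]^m` is bounded by its values at the vertices
(restrict it to coordinate segments, one coordinate at a time). At a vertex with `k`
coordinates equal to `1` the sum is `k (m - k)`, and a product of two natural numbers with
sum `m` is at most `⌊m/2⌋ ⌈m/2⌉`.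
-/

open Finset Function

theorem ConvexOn.le_of_forall_vertex_le {ι : Type*} [Fintype ι] {f : (ι → ℝ) → ℝ}
    (hf : ConvexOn ℝ (Set.Icc 0 1) f) {B : ℝ}
    (hB : ∀ x : ι → ℝ, (∀ i, x i = 0 ∨ x i = 1) → f x ≤ B)
    {x : ι → ℝ} (hx : ∀ i, x i ∈ Set.Icc 0 1) : f x ≤ B := by
  classical
  suffices key : ∀ s : Finset ι, ∀ x : ι → ℝ, (∀ i, x i ∈ Set.Icc 0 1) →
      (∀ i ∉ s, x i = 0 ∨ x i = 1) → f x ≤ B from key univ x hx (by simp)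
  intro s
  induction s using Finset.induction_on with
  | empty => exact fun x _ hx01 => hB x fun i => hx01 i (notMem_empty i)
  | insert i s _ ih =>
    intro x hx hx01
    have update_mem : ∀ c ∈ Set.Icc (0 : ℝ) 1, ∀ j, update x i c j ∈ Set.Icc 0 1 := by
      intro c hc j
      rcases eq_or_ne j i with rfl | hj
      · simpa using hc
      · simpa [hj] using hx j
    have update_le : ∀ c, c = 0 ∨ c = 1 → f (update x i c) ≤ B := by
      intro c hc
      refine ih _ (update_mem c (by rcases hc with rfl | rfl <;> simp)) fun j hj => ?_
      rcases eq_or_ne j i with rfl | hji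
      · simpa using hc
      · simpa [hji] using hx01 j (by simp [hji, hj])
    have mem_cube : ∀ c ∈ Set.Icc (0 : ℝ) 1, update x i c ∈ Set.Icc (0 : ι → ℝ) 1 :=
      fun c hc => ⟨fun j => (update_mem c hc j).1, fun j => (update_mem c hc j).2⟩
    have mem_segment : x ∈ segment ℝ (update x i 0) (update x i 1) := by
      refine ⟨1 - x i, x i, by linarith [(hx i).2], (hx i).1, by ring, ?_⟩
      ext j
      rcases eq_or_ne j i with rfl | hj
      · simp
      · simp only [Pi.add_apply, Pi.smul_apply, smul_eq_mul, update_apply, hj, if_false]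
        ring
    calc f x ≤ max (f (update x i 0)) (f (update x i 1)) :=
          hf.le_on_segment (mem_cube 0 (by simp)) (mem_cube 1 (by simp)) mem_segment
      _ ≤ B := max_le (update_le 0 (by simp)) (update_le 1 (by simp))

theorem ConvexOn.finsetSum {ι E : Type*} [AddCommGroup E] [Module ℝ E] {t : Set E}
    (ht : Convex ℝ t) (s : Finset ι) {f : ι → E → ℝ}
    (hf : ∀ i ∈ s, ConvexOn ℝ t (f i)) : ConvexOn ℝ t (∑ i ∈ s, f i) :=
  Finset.sum_induction f (ConvexOn ℝ t) (fun _ _ => ConvexOn.add) (convexOn_const 0 ht) hf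

theorem convexOn_sum_sq_sub {ι : Type*} (s : Finset (ι × ι)) :
    ConvexOn ℝ Set.univ fun x : ι → ℝ => ∑ p ∈ s, (x p.1 - x p.2) ^ 2 := by
  have h := ConvexOn.finsetSum convex_univ s fun p _ =>
    (Even.convexOn_pow (𝕜 := ℝ) even_two).comp_linearMap
      (LinearMap.proj (R := ℝ) (φ := fun _ : ι => ℝ) p.1 -
        LinearMap.proj p.2)
  simpa [Finset.sum_fn] using h

theorem two_mul_sum_filter_lt {ι : Type*} [Fintype ι] [LinearOrder ι] (g : ι × ι → ℝ)
    (hsymm : ∀ p, g p.swap = g p) (hdiag : ∀ i, g (i, i) = 0) :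
    2 * ∑ p with p.1 < p.2, g p = ∑ p, g p := by
  have hsplit : ∀ p : ι × ι,
      g p = (if p.1 < p.2 then g p else 0) + (if p.2 < p.1 then g p else 0) := by
    rintro ⟨i, j⟩
    rcases lt_trichotomy i j with h | rfl | h
    · simp [h, h.not_gt]
    · simp [hdiag]
    · simp [h, h.not_gt]
  have hswap : ∑ p : ι × ι, (if p.2 < p.1 then g p else 0) =
      ∑ p : ι × ι, (if p.1 < p.2 then g p else 0) :=
    Fintype.sum_equiv (Equiv.prodComm ι ι) _ _ fun p => by simp [hsymm p]
  rw [Fintype.sum_congr _ _ hsplit, sum_add_distrib, hswap, sum_filter]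
  ring

theorem sum_filter_lt_sub_sq {ι : Type*} [Fintype ι] [LinearOrder ι] (q : ι → ℝ) :
    ∑ p : ι × ι with p.1 < p.2, (q p.1 - q p.2) ^ 2 =
      Fintype.card ι * ∑ i, q i ^ 2 - (∑ i, q i) ^ 2 := by
  have hfull : ∑ p : ι × ι, (q p.1 - q p.2) ^ 2 =
      2 * (Fintype.card ι * ∑ i, q i ^ 2 - (∑ i, q i) ^ 2) := by
    simp only [Fintype.sum_prod_type, sub_sq, sum_add_distrib, sum_sub_distrib, sum_const,
      card_univ, nsmul_eq_mul, ← mul_sum, ← sum_mul]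
    ring
  have h := two_mul_sum_filter_lt (fun p : ι × ι => (q p.1 - q p.2) ^ 2)
    (fun p => by simp only [Prod.fst_swap, Prod.snd_swap]; ring) (by simp)
  linarith

theorem Int.mul_le_mul_of_add_eq {x y a b : ℤ} (hsum : x + y = a + b) (hab : a ≤ b)
    (hba : b ≤ a + 1) : x * y ≤ a * b := by
  -- no integer lies strictly between `a` and `b`
  have : 0 ≤ (x - a) * (x - b) := by
    rcases le_or_gt x a with h | h
    · exact mul_nonneg_of_nonpos_of_nonpos (by omega) (by omega)
    · exact mul_nonneg (by omega) (by omega)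
  rw [show y = a + b - x by omega]
  nlinarith

theorem Nat.mul_sub_le_div_two_mul {m k : ℕ} (hk : k ≤ m) :
    k * (m - k) ≤ m / 2 * ((m + 1) / 2) := by
  zify [hk]
  exact Int.mul_le_mul_of_add_eq (by omega) (by omega) (by omega)

theorem sum_eq_card_filter_eq_one {ι : Type*} [Fintype ι] {x : ι → ℝ}
    (hx : ∀ i, x i = 0 ∨ x i = 1) : ∑ i, x i = #{i | x i = 1} := by
  rw [← sum_boole]
  refine Fintype.sum_congr _ _ fun i => ?_
  rcases hx i with h | h <;> simp [h]

theorem sum_filter_lt_sub_sq_le_of_zero_or_one {m : ℕ} {x : Fin m → ℝ}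
    (hx : ∀ i, x i = 0 ∨ x i = 1) :
    ∑ p : Fin m × Fin m with p.1 < p.2, (x p.1 - x p.2) ^ 2 ≤
      ((m / 2 * ((m + 1) / 2) : ℕ) : ℝ) := by
  have hsq : ∑ i, x i ^ 2 = ∑ i, x i :=
    Fintype.sum_congr _ _ fun i => by rcases hx i with h | h <;> simp [h]
  have hk : #{i | x i = 1} ≤ m := (card_filter_le _ _).trans_eq (by simp)
  rw [sum_filter_lt_sub_sq, hsq, sum_eq_card_filter_eq_one hx, Fintype.card_fin]
  calc (m : ℝ) * #{i | x i = 1} - (#{i | x i = 1} : ℝ) ^ 2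
      = ((#{i | x i = 1} * (m - #{i | x i = 1}) : ℕ) : ℝ) := by push_cast [hk]; ring
    _ ≤ _ := by exact_mod_cast Nat.mul_sub_le_div_two_mul hk

theorem stmt_9_general (m : ℕ) (q : Fin m → ℝ)
    (hq : ∀ i, q i ∈ Set.Icc (0 : ℝ) 1) :
    ∑ p ∈ Finset.univ.filter (fun p : Fin m × Fin m => p.1 < p.2), |q p.1 - q p.2| ^ 2 ≤
      ((m / 2 * ((m + 1) / 2) : ℕ) : ℝ) := by
  simp only [sq_abs]
  have hconvex := (convexOn_sum_sq_sub {p : Fin m × Fin m | p.1 < p.2}).subset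
    (Set.subset_univ _) (convex_Icc 0 1)
  exact hconvex.le_of_forall_vertex_le (fun _ => sum_filter_lt_sub_sq_le_of_zero_or_one) hq

/-- For `m ≥ 1` and reals `q₁, …, q_m ∈ [0,1]`,
`∑_{i<j} |q_i - q_j|² ≤ ⌊m/2⌋·⌈m/2⌉`. -/
theorem stmt_9 (m : ℕ) (hm : 1 ≤ m) (q : Fin m → ℝ)
    (hq : ∀ i, q i ∈ Set.Icc (0 : ℝ) 1) :
    ∑ p ∈ Finset.univ.filter (fun p : Fin m × Fin m => p.1 < p.2), |q p.1 - q p.2| ^ 2 ≤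
      ((m / 2 * ((m + 1) / 2) : ℕ) : ℝ) :=
  stmt_9_general m q hq
end

section
/- Let δ, γ > 0 be real numbers, let k_1, k_2 be non-negative integers, and let X ⊆ [0,δ]^{k_1} × [0,γ]^{k_2} ⊂ ℝ^{k_1 + k_2} be a finite set with |X| ≥ m for some integer m ≥ 2. Then there exist two distinct points p, q ∈ X such that |p - q|^2 ≤ (⌊m/2⌋·⌈m/2⌉ / C(m,2)) · (δ^2 k_1 + γ^2 k_2), where C(m,2) = m(m-1)/2. -/
/-!
Keep `m` of the points. Summed over ordered pairs, the squared distance splits into one sum per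
coordinate, and `m` reals spread over an interval of width `L` have
`∑_{p,q} (a_p - a_q)² ≤ 2⌊m/2⌋⌈m/2⌉ L²`: removing the smallest and the largest value `x ≤ y`
costs at most `2(m - 1)(y - x)²`, since every remaining `z` has `(z - x)² + (y - z)² ≤ (y - x)²`.
There are `2 C(m,2)` ordered pairs of distinct points, so one of them is at most average.
-/

open Finset

theorem div_two_mul_succ_div_two_add_two (n : ℕ) :
    (n + 2) / 2 * ((n + 2 + 1) / 2) = n / 2 * ((n + 1) / 2) + (n + 1) := by
  obtain ⟨k, rfl | rfl⟩ := Nat.even_or_odd' n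
  · rw [show (2 * k + 2) / 2 = k + 1 by omega, show (2 * k + 2 + 1) / 2 = k + 1 by omega,
      show 2 * k / 2 = k by omega, show (2 * k + 1) / 2 = k by omega]
    ring
  · rw [show (2 * k + 1 + 2) / 2 = k + 1 by omega, show (2 * k + 1 + 2 + 1) / 2 = k + 2 by omega,
      show (2 * k + 1) / 2 = k by omega, show (2 * k + 1 + 1) / 2 = k + 1 by omega]
    ring

section

variable {α : Type*} [DecidableEq α]

theorem sum_sum_sq_sub_insert (f : α → ℝ) {s : Finset α} {x : α} (hx : x ∉ s) :
    ∑ p ∈ insert x s, ∑ q ∈ insert x s, (f p - f q) ^ 2 =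
      ∑ p ∈ s, ∑ q ∈ s, (f p - f q) ^ 2 + 2 * ∑ q ∈ s, (f x - f q) ^ 2 := by
  simp only [sum_insert hx, sub_self, sum_add_distrib]
  have hsymm : ∑ p ∈ s, (f p - f x) ^ 2 = ∑ q ∈ s, (f x - f q) ^ 2 :=
    sum_congr rfl fun q _ => by ring
  rw [hsymm]
  ring

theorem sum_sum_sq_sub_le (s : Finset α) (f : α → ℝ) (L : ℝ)
    (hL : ∀ p ∈ s, ∀ q ∈ s, f p - f q ≤ L) :
    ∑ p ∈ s, ∑ q ∈ s, (f p - f q) ^ 2 ≤ 2 * ((#s / 2 * ((#s + 1) / 2) : ℕ) : ℝ) * L ^ 2 := by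
  induction hn : #s using Nat.strong_induction_on generalizing s with
  | _ n ih =>
  obtain hn2 | hn2 := lt_or_ge n 2
  · have hzero : ∀ p ∈ s, ∀ q ∈ s, (f p - f q) ^ 2 = 0 := fun p hp q hq => by
      rw [card_le_one.mp (by omega) p hp q hq, sub_self, sq, mul_zero]
    rw [sum_eq_zero fun p hp => sum_eq_zero fun q hq => hzero p hp q hq]
    interval_cases n <;> simp
  obtain ⟨x, hx, hxmin⟩ := s.exists_min_image f (card_pos.mp (by omega))
  obtain ⟨y, hy, hymax⟩ :=
    (s.erase x).exists_max_image f (card_pos.mp (by rw [card_erase_of_mem hx]; omega))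
  set t := (s.erase x).erase y
  have hs : s = insert x (insert y t) := by rw [insert_erase hy, insert_erase hx]
  have hxt : x ∉ insert y t := by rw [insert_erase hy]; exact notMem_erase x s
  have hLt : ∀ p ∈ t, ∀ q ∈ t, f p - f q ≤ L := fun p hp q hq =>
    hL p (mem_of_mem_erase (mem_of_mem_erase hp)) q (mem_of_mem_erase (mem_of_mem_erase hq))
  have hwidth : (f y - f x) ^ 2 ≤ L ^ 2 :=
    pow_le_pow_left₀ (by linarith [hxmin y (mem_of_mem_erase hy)])
      (hL y (mem_of_mem_erase hy) x hx) 2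
  have hpair : ∀ q ∈ t, (f x - f q) ^ 2 + (f y - f q) ^ 2 ≤ (f y - f x) ^ 2 := by
    intro q hq
    have hxq := hxmin q (mem_of_mem_erase (mem_of_mem_erase hq))
    have hqy := hymax q (mem_of_mem_erase hq)
    nlinarith [mul_nonneg (sub_nonneg.mpr hxq) (sub_nonneg.mpr hqy)]
  obtain ⟨k, rfl⟩ : ∃ k, n = k + 2 := ⟨n - 2, by omega⟩
  have hct : #t = k := by rw [card_erase_of_mem hy, card_erase_of_mem hx]; omega
  have hrest : ∑ q ∈ t, (f x - f q) ^ 2 + ∑ q ∈ t, (f y - f q) ^ 2 ≤ k * (f y - f x) ^ 2 := by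
    simpa [sum_add_distrib, hct] using sum_le_sum hpair
  have ht := ih k (by omega) t hLt hct
  have hk := mul_le_mul_of_nonneg_left hwidth (Nat.cast_nonneg (α := ℝ) k)
  rw [hs, sum_sum_sq_sub_insert f hxt, sum_sum_sq_sub_insert f (notMem_erase y _),
    sum_insert (notMem_erase y _), div_two_mul_succ_div_two_add_two]
  push_cast at ht ⊢
  nlinarith

end

theorem exists_ne_le_of_sum_sum_le {α : Type*} {s : Finset α} (hs : 2 ≤ #s)
    {g : α → α → ℝ} (hg : ∀ p, g p p = 0) {c : ℝ}
    (hsum : ∑ p ∈ s, ∑ q ∈ s, g p q ≤ 2 * (#s).choose 2 * c) :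
    ∃ p ∈ s, ∃ q ∈ s, p ≠ q ∧ g p q ≤ c := by
  classical
  have hoffDiag : ∑ x ∈ s.offDiag, g x.1 x.2 = ∑ p ∈ s, ∑ q ∈ s, g p q := by
    rw [← sum_product']
    refine sum_subset (fun x hx => ?_) fun x hx hxoff => ?_
    · obtain ⟨h1, h2, -⟩ := mem_offDiag.mp hx
      exact mem_product.mpr ⟨h1, h2⟩
    · obtain ⟨h1, h2⟩ := mem_product.mp hx
      have hdiag : x.1 = x.2 := by_contra fun h => hxoff (mem_offDiag.mpr ⟨h1, h2, h⟩)
      rw [hdiag, hg]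
  have hcard : (#s.offDiag : ℝ) = 2 * (#s).choose 2 := by
    rw [offDiag_card, Nat.cast_choose_two, Nat.cast_sub (Nat.le_mul_self _)]
    push_cast
    ring
  obtain ⟨a, ha, b, hb, hab⟩ := one_lt_card.mp (by omega : 1 < #s)
  obtain ⟨x, hx, hle⟩ := exists_le_of_sum_le (s := s.offDiag) (f := fun x => g x.1 x.2)
    (g := fun _ => c) ⟨(a, b), mem_offDiag.mpr ⟨ha, hb, hab⟩⟩
    (by rw [hoffDiag, sum_const, nsmul_eq_mul, hcard]; exact hsum)
  obtain ⟨hx1, hx2, hx12⟩ := mem_offDiag.mp hx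
  exact ⟨x.1, hx1, x.2, hx2, hx12, hle⟩

section

variable {ι : Type*} [Fintype ι]

theorem sum_sum_dist_sq_le (s : Finset (EuclideanSpace ℝ ι)) (w : ι → ℝ)
    (hw : ∀ p ∈ s, ∀ q ∈ s, ∀ i, p i - q i ≤ w i) :
    ∑ p ∈ s, ∑ q ∈ s, dist p q ^ 2 ≤
      2 * ((#s / 2 * ((#s + 1) / 2) : ℕ) : ℝ) * ∑ i, w i ^ 2 := by
  classical
  simp_rw [EuclideanSpace.dist_sq_eq, Real.dist_eq, sq_abs]
  calc ∑ p ∈ s, ∑ q ∈ s, ∑ i, (p i - q i) ^ 2 = ∑ i, ∑ p ∈ s, ∑ q ∈ s, (p i - q i) ^ 2 := by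
        simp_rw [sum_comm (s := s) (t := univ)]
    _ ≤ ∑ i, 2 * ((#s / 2 * ((#s + 1) / 2) : ℕ) : ℝ) * w i ^ 2 :=
        sum_le_sum fun i _ => sum_sum_sq_sub_le s (· i) (w i) fun p hp q hq => hw p hp q hq i
    _ = _ := (mul_sum ..).symm

theorem exists_ne_dist_sq_le {s : Finset (EuclideanSpace ℝ ι)} (hs : 2 ≤ #s) (w : ι → ℝ)
    (hw : ∀ p ∈ s, ∀ q ∈ s, ∀ i, p i - q i ≤ w i) :
    ∃ p ∈ s, ∃ q ∈ s, p ≠ q ∧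
      dist p q ^ 2 ≤ ((#s / 2 * ((#s + 1) / 2) : ℕ) : ℝ) / (#s).choose 2 * ∑ i, w i ^ 2 := by
  classical
  have hchoose : (0 : ℝ) < (#s).choose 2 := by exact_mod_cast Nat.choose_pos hs
  exact exists_ne_le_of_sum_sum_le hs (g := (dist · · ^ 2)) (by simp) <|
    (sum_sum_dist_sq_le s w hw).trans_eq <| by field_simp

end

theorem stmt_10_general (k₁ k₂ m : ℕ) (hm : 2 ≤ m) (δ γ : ℝ)
    (X : Finset (EuclideanSpace ℝ (Fin (k₁ + k₂)))) (hcard : m ≤ X.card)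
    (hbox : ∀ x ∈ X, ∀ i : Fin (k₁ + k₂),
      ((i : ℕ) < k₁ → x i ∈ Set.Icc 0 δ) ∧ (k₁ ≤ (i : ℕ) → x i ∈ Set.Icc 0 γ)) :
    ∃ p ∈ X, ∃ q ∈ X, p ≠ q ∧
      dist p q ^ 2 ≤
        ((m / 2 * ((m + 1) / 2) : ℕ) : ℝ) / (m.choose 2 : ℝ) * (δ ^ 2 * k₁ + γ ^ 2 * k₂) := by
  obtain ⟨Y, hYX, rfl⟩ := exists_subset_card_eq hcard
  set w : Fin (k₁ + k₂) → ℝ := fun i => if (i : ℕ) < k₁ then δ else γ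
  have hw : ∀ p ∈ Y, ∀ q ∈ Y, ∀ i, p i - q i ≤ w i := by
    intro p hp q hq i
    obtain ⟨hpδ, hpγ⟩ := hbox p (hYX hp) i
    obtain ⟨hqδ, hqγ⟩ := hbox q (hYX hq) i
    by_cases hi : (i : ℕ) < k₁
    · simp only [w, if_pos hi]; linarith [(hpδ hi).2, (hqδ hi).1]
    · simp only [w, if_neg hi]; linarith [(hpγ (not_lt.mp hi)).2, (hqγ (not_lt.mp hi)).1]
  have hwsum : ∑ i, w i ^ 2 = δ ^ 2 * k₁ + γ ^ 2 * k₂ := by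
    simp only [w, ite_pow, Fin.sum_univ_add, Fin.val_castAdd, Fin.is_lt, ↓reduceIte, sum_const,
      card_univ, Fintype.card_fin, nsmul_eq_mul, Fin.val_natAdd, add_lt_iff_neg_left, not_lt_zero]
    ring
  obtain ⟨p, hp, q, hq, hpq, hle⟩ := exists_ne_dist_sq_le hm w hw
  exact ⟨p, hYX hp, q, hYX hq, hpq, hwsum ▸ hle⟩

/-- Let `δ, γ > 0`, let `k₁, k₂ ≥ 0`, and let `X ⊆ [0,δ]^{k₁} × [0,γ]^{k₂} ⊂ ℝ^{k₁+k₂}` be a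
finite set with `|X| ≥ m` for some `m ≥ 2`. Then some two distinct points `p, q ∈ X` satisfy
`|p-q|² ≤ (⌊m/2⌋·⌈m/2⌉ / C(m,2))·(δ²k₁ + γ²k₂)`. -/
theorem stmt_10 (k₁ k₂ m : ℕ) (hm : 2 ≤ m) (δ γ : ℝ) (hδ : 0 < δ) (hγ : 0 < γ)
    (X : Finset (EuclideanSpace ℝ (Fin (k₁ + k₂)))) (hcard : m ≤ X.card)
    (hbox : ∀ x ∈ X, ∀ i : Fin (k₁ + k₂),
      ((i : ℕ) < k₁ → x i ∈ Set.Icc 0 δ) ∧ (k₁ ≤ (i : ℕ) → x i ∈ Set.Icc 0 γ)) :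
    ∃ p ∈ X, ∃ q ∈ X, p ≠ q ∧
      dist p q ^ 2 ≤
        ((m / 2 * ((m + 1) / 2) : ℕ) : ℝ) / (m.choose 2 : ℝ) * (δ ^ 2 * k₁ + γ ^ 2 * k₂) :=
  stmt_10_general k₁ k₂ m hm δ γ X hcard hbox
end

section
/- Let k ≥ 1 and let X ⊆ [0,1]^k ⊂ ℝ^k be a finite set with |X| ≥ m for some integer m ≥ 3. Then there exist two distinct points p, q ∈ X such that |p - q|^2 ≤ (⌊m/2⌋·⌈m/2⌉ / C(m,2)) · k, where C(m,2) = m(m-1)/2. -/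
/-!
Take `m` of the points. The sum of `|p - q|²` over ordered pairs splits into coordinates, and for
a coordinate with values `a p ∈ [0, 1]` it equals `2 (m ∑ a p² - (∑ a p)²)`, which is at most
`2 ⌊m/2⌋ ⌈m/2⌉` (attained by putting half of the values at `0` and half at `1`). Hence some of
the `m (m - 1) = 2 C(m,2)` ordered pairs of distinct points has `|p - q|²` at most the average.
-/

open Finset

theorem sum_sum_sub_sq {α : Type*} (s : Finset α) (a : α → ℝ) :
    ∑ p ∈ s, ∑ q ∈ s, (a p - a q) ^ 2 = 2 * (#s * ∑ p ∈ s, a p ^ 2 - (∑ p ∈ s, a p) ^ 2) := by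
  simp only [sub_sq, sum_add_distrib, sum_sub_distrib, sum_const, ← mul_sum, ← sum_mul,
    nsmul_eq_mul, mul_assoc]
  ring

theorem four_mul_div_two_mul_add_one_div_two_add_mod_two (m : ℕ) :
    4 * (m / 2 * ((m + 1) / 2)) + m % 2 = m ^ 2 := by
  rcases Nat.even_or_odd' m with ⟨t, rfl | rfl⟩
  · rw [show (2 * t + 1) / 2 = t by omega, Nat.mul_div_cancel_left _ two_pos]; ring_nf; omega
  · rw [show (2 * t + 1) / 2 = t by omega, show (2 * t + 1 + 1) / 2 = t + 1 by omega]
    ring_nf; omega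

theorem exists_ne_le_sum_sum_div {β : Type*} (s : Finset β) (hs : 2 ≤ #s)
    (f : β → β → ℝ) (hf : ∀ x ∈ s, f x x = 0) :
    ∃ p ∈ s, ∃ q ∈ s, p ≠ q ∧ f p q ≤ (∑ p ∈ s, ∑ q ∈ s, f p q) / (#s * (#s - 1)) := by
  classical
  have hne : s.offDiag.Nonempty := by
    rw [← card_pos, offDiag_card, Nat.sub_pos_iff_lt]; nlinarith
  obtain ⟨⟨p, q⟩, hpq, hle⟩ := exists_le_of_expect_le hne le_rfl (f := fun x => f x.1 x.2)
  rw [mem_offDiag] at hpq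
  refine ⟨p, hpq.1, q, hpq.2.1, hpq.2.2, hle.trans_eq ?_⟩
  have hsum : ∑ x ∈ s.offDiag, f x.1 x.2 = ∑ p ∈ s, ∑ q ∈ s, f p q := by
    rw [← sum_product']
    refine sum_subset (fun x hx => ?_) fun x hx hxs => ?_
    · rw [mem_offDiag] at hx; exact mem_product.2 ⟨hx.1, hx.2.1⟩
    · rw [mem_product] at hx
      rw [mem_offDiag, not_and, not_and, not_ne_iff] at hxs
      rw [← hxs hx.1 hx.2]; exact hf _ hx.1
  rw [expect_eq_sum_div_card, hsum, offDiag_card, Nat.cast_sub (Nat.le_mul_self _), Nat.cast_mul]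
  ring

theorem abs_sub_round_le_two_mul {x : ℝ} (hx : x ∈ Set.Icc 0 1) :
    |x - round x| ≤ 2 * (x * (1 - x)) := by
  obtain ⟨h0, h1⟩ := hx
  rcases lt_or_ge x (1 / 2) with hlt | hge
  · have : round x = 0 := by
      rw [round_eq, Int.floor_eq_iff]; constructor <;> norm_num <;> linarith
    rw [this, Int.cast_zero, sub_zero, abs_of_nonneg h0]
    nlinarith
  · have : round x = 1 := by
      rw [round_eq, Int.floor_eq_iff]; constructor <;> norm_num <;> linarith
    rw [this, Int.cast_one, abs_of_nonpos (by linarith)]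
    nlinarith

section UnitInterval

variable {α : Type*} (s : Finset α) {a : α → ℝ}

theorem sum_sq_eq_sum_sub_sum_mul_one_sub :
    ∑ p ∈ s, a p ^ 2 = ∑ p ∈ s, a p - ∑ p ∈ s, a p * (1 - a p) := by
  rw [← sum_sub_distrib]; exact sum_congr rfl fun _ _ => by ring

variable {s}

theorem sum_mul_one_sub_nonneg (ha : ∀ p ∈ s, a p ∈ Set.Icc 0 1) :
    0 ≤ ∑ p ∈ s, a p * (1 - a p) :=
  sum_nonneg fun p hp => mul_nonneg (ha p hp).1 (sub_nonneg.2 (ha p hp).2)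

theorem card_mul_sum_sq_sub_sq_sum_le (ha : ∀ p ∈ s, a p ∈ Set.Icc 0 1) :
    #s * ∑ p ∈ s, a p ^ 2 - (∑ p ∈ s, a p) ^ 2 ≤ (#s : ℝ) ^ 2 / 4 := by
  rw [sum_sq_eq_sum_sub_sum_mul_one_sub]
  nlinarith [sum_mul_one_sub_nonneg ha, sq_nonneg (∑ p ∈ s, a p - #s / 2)]

/-- For odd `#s` the sum `∑ a p` cannot sit at `#s / 2` unless many `a p` are far from `{0, 1}`:
rounding moves the sum by at most `2 ∑ a p (1 - a p)` and lands on an integer `≠ #s / 2`. -/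
theorem card_mul_sum_sq_sub_sq_sum_le_of_odd (hodd : Odd #s) (hs : 2 ≤ #s)
    (ha : ∀ p ∈ s, a p ∈ Set.Icc 0 1) :
    #s * ∑ p ∈ s, a p ^ 2 - (∑ p ∈ s, a p) ^ 2 ≤ ((#s : ℝ) ^ 2 - 1) / 4 := by
  rw [sum_sq_eq_sum_sub_sum_mul_one_sub]
  set S := ∑ p ∈ s, a p
  set D := ∑ p ∈ s, a p * (1 - a p)
  set N : ℤ := ∑ p ∈ s, round (a p)
  have hD : 0 ≤ D := sum_mul_one_sub_nonneg ha
  have hround : |S - N| ≤ 2 * D := by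
    rw [Int.cast_sum, ← sum_sub_distrib, mul_sum]
    exact (abs_sum_le_sum_abs _ _).trans
      (sum_le_sum fun p hp => abs_sub_round_le_two_mul (ha p hp))
  have hN : 1 / 2 ≤ |(N : ℝ) - #s / 2| := by
    obtain ⟨t, ht⟩ := hodd
    have h : (1 : ℝ) ≤ |((2 * N - #s : ℤ) : ℝ)| := by
      exact_mod_cast Int.one_le_abs (by omega)
    rw [show ((2 * N - #s : ℤ) : ℝ) = 2 * (N - #s / 2) by push_cast; ring, abs_mul,
      abs_two] at h
    linarith
  have hm : (2 : ℝ) ≤ #s := by exact_mod_cast hs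
  rcases le_or_gt D (1 / 4) with hsmall | hbig
  · have hfar : 1 / 2 - 2 * D ≤ |S - #s / 2| := by
      have := abs_sub_abs_le_abs_sub ((N : ℝ) - #s / 2) ((N : ℝ) - S)
      rw [abs_sub_comm (N : ℝ) S, sub_sub_sub_cancel_left] at this
      linarith
    nlinarith [sq_abs (S - #s / 2), mul_self_le_mul_self (by linarith) hfar]
  · nlinarith [sq_nonneg (S - #s / 2),
      mul_le_mul_of_nonneg_left hbig.le (by linarith : (0 : ℝ) ≤ #s)]

theorem card_mul_sum_sq_sub_sq_sum_le_div_two_mul (hs : 2 ≤ #s)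
    (ha : ∀ p ∈ s, a p ∈ Set.Icc 0 1) :
    #s * ∑ p ∈ s, a p ^ 2 - (∑ p ∈ s, a p) ^ 2 ≤ ((#s / 2 * ((#s + 1) / 2) : ℕ) : ℝ) := by
  have h := congrArg (Nat.cast : ℕ → ℝ) (four_mul_div_two_mul_add_one_div_two_add_mod_two #s)
  push_cast at h ⊢
  rcases Nat.even_or_odd #s with heven | hodd
  · rw [Nat.even_iff.1 heven, Nat.cast_zero] at h
    linarith [card_mul_sum_sq_sub_sq_sum_le ha]
  · rw [Nat.odd_iff.1 hodd, Nat.cast_one] at h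
    linarith [card_mul_sum_sq_sub_sq_sum_le_of_odd hodd hs ha]

end UnitInterval

theorem sum_sum_dist_sq_le_of_forall_mem_Icc {ι : Type*} [Fintype ι]
    (s : Finset (EuclideanSpace ℝ ι)) (hs : 2 ≤ #s) (hcube : ∀ x ∈ s, ∀ i, x i ∈ Set.Icc 0 1) :
    ∑ p ∈ s, ∑ q ∈ s, dist p q ^ 2 ≤ 2 * ((#s / 2 * ((#s + 1) / 2) : ℕ) : ℝ) * Fintype.card ι := by
  simp_rw [EuclideanSpace.dist_sq_eq, Real.dist_eq, sq_abs]
  calc ∑ p ∈ s, ∑ q ∈ s, ∑ i, (p i - q i) ^ 2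
        = ∑ i, ∑ p ∈ s, ∑ q ∈ s, (p i - q i : ℝ) ^ 2 :=
        (sum_congr rfl fun _ _ => sum_comm).trans sum_comm
    _ ≤ ∑ _i : ι, 2 * ((#s / 2 * ((#s + 1) / 2) : ℕ) : ℝ) := sum_le_sum fun i _ => by
        rw [sum_sum_sub_sq]
        linarith [card_mul_sum_sq_sub_sq_sum_le_div_two_mul hs fun p hp => hcube p hp i]
    _ = _ := by rw [sum_const, card_univ, nsmul_eq_mul]; ring

theorem stmt_11_general (k m : ℕ) (hm : 3 ≤ m)
    (X : Finset (EuclideanSpace ℝ (Fin k))) (hcard : m ≤ X.card)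
    (hcube : ∀ x ∈ X, ∀ i, x i ∈ Set.Icc (0 : ℝ) 1) :
    ∃ p ∈ X, ∃ q ∈ X, p ≠ q ∧
      dist p q ^ 2 ≤ ((m / 2 * ((m + 1) / 2) : ℕ) : ℝ) / (m.choose 2 : ℝ) * k := by
  obtain ⟨Y, hYX, rfl⟩ := exists_subset_card_eq hcard
  obtain ⟨p, hp, q, hq, hpq, hle⟩ :=
    exists_ne_le_sum_sum_div Y (by omega) (fun p q => dist p q ^ 2) (by simp)
  refine ⟨p, hYX hp, q, hYX hq, hpq, hle.trans ?_⟩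
  have hsum := sum_sum_dist_sq_le_of_forall_mem_Icc Y (by omega) fun x hx => hcube x (hYX hx)
  have hY : (3 : ℝ) ≤ #Y := by exact_mod_cast hm
  rw [Fintype.card_fin] at hsum
  calc _ ≤ 2 * ((#Y / 2 * ((#Y + 1) / 2) : ℕ) : ℝ) * k / (#Y * (#Y - 1)) := by gcongr; nlinarith
    _ = _ := by rw [Nat.cast_choose_two]; field_simp

/-- For `k ≥ 1` and a finite set `X ⊆ [0,1]^k` with `|X| ≥ m` for some `m ≥ 3`, some two
distinct points `p, q ∈ X` satisfy `|p-q|² ≤ (⌊m/2⌋·⌈m/2⌉ / C(m,2))·k`. -/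
theorem stmt_11 (k m : ℕ) (hk : 1 ≤ k) (hm : 3 ≤ m)
    (X : Finset (EuclideanSpace ℝ (Fin k))) (hcard : m ≤ X.card)
    (hcube : ∀ x ∈ X, ∀ i, x i ∈ Set.Icc (0 : ℝ) 1) :
    ∃ p ∈ X, ∃ q ∈ X, p ≠ q ∧
      dist p q ^ 2 ≤ ((m / 2 * ((m + 1) / 2) : ℕ) : ℝ) / (m.choose 2 : ℝ) * k :=
  stmt_11_general k m hm X hcard hcube
end

section
/- Let k and d be positive integers with d < (2/3)·k, and let C ⊆ {0,1}^k be a binary code of length k with minimum Hamming distance at least d (i.e., any two distinct codewords differ in at least d coordinates). Then |C| ≤ 2^{k - (3/2)d + 2}. -/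
open Finset

def pm (b : Bool) : ℤ := if b then 1 else -1

lemma pm_mul (a b : Bool) : pm a * pm b = 1 - 2 * (if a ≠ b then 1 else 0) := by
  cases a <;> cases b <;> simp [pm]

lemma dist_eq_sum {n : ℕ} (T : Finset (Fin n)) (x y : Fin n → Bool)
    (h : ∀ i ∉ T, x i = y i) :
    (hammingDist x y : ℤ) = ∑ i ∈ T, (if x i ≠ y i then 1 else 0) := by
  rw [hammingDist, card_filter]
  rw [← Finset.sum_subset (Finset.subset_univ T) (fun i _ hi => by simp [h i hi])]
  push_cast
  simp

lemma plotkin_count {n : ℕ} (d : ℕ) (T : Finset (Fin n)) (S : Finset (Fin n → Bool))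
    (hag : ∀ x ∈ S, ∀ y ∈ S, ∀ i ∉ T, x i = y i)
    (hd : ∀ x ∈ S, ∀ y ∈ S, x ≠ y → d ≤ hammingDist x y) :
    2 * (d : ℤ) * S.card * (S.card - 1) ≤ T.card * S.card ^ 2 := by
  set M := S.card with hM
  set D : ℤ := ∑ x ∈ S, ∑ y ∈ S, (hammingDist x y : ℤ) with hD
  have h1 : (d : ℤ) * M * (M - 1) ≤ D := by
    have : ∀ x ∈ S, (d : ℤ) * (M - 1) ≤ ∑ y ∈ S, (hammingDist x y : ℤ) := by
      intro x hx
      calc (d : ℤ) * (M - 1) = ∑ y ∈ S.erase x, (d : ℤ) := by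
            rw [Finset.sum_const, Finset.card_erase_of_mem hx, nsmul_eq_mul]
            have h1 : (1:ℕ) ≤ #S := Finset.card_pos.2 ⟨x, hx⟩
            push_cast [Nat.cast_sub h1]
            ring
        _ ≤ ∑ y ∈ S.erase x, (hammingDist x y : ℤ) := by
            apply Finset.sum_le_sum
            intro y hy
            exact_mod_cast hd x hx y (Finset.mem_of_mem_erase hy)
              (fun h => (Finset.ne_of_mem_erase hy) h.symm)
        _ ≤ ∑ y ∈ S, (hammingDist x y : ℤ) := by
            apply Finset.sum_le_sum_of_subset_of_nonneg (Finset.erase_subset _ _)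
            intro y _ _; positivity
    calc (d : ℤ) * M * (M - 1) = ∑ x ∈ S, (d : ℤ) * (M - 1) := by
          rw [Finset.sum_const]; ring
      _ ≤ D := Finset.sum_le_sum this
  have h2 : 2 * D ≤ T.card * M ^ 2 := by
    have key : (0 : ℤ) ≤ ∑ i ∈ T, (∑ x ∈ S, pm (x i)) ^ 2 :=
      Finset.sum_nonneg fun i _ => sq_nonneg _
    have expand : ∑ i ∈ T, (∑ x ∈ S, pm (x i)) ^ 2
        = (T.card : ℤ) * M ^ 2 - 2 * D := by
      have : ∀ i ∈ T, (∑ x ∈ S, pm (x i)) ^ 2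
          = ∑ x ∈ S, ∑ y ∈ S, pm (x i) * pm (y i) := by
        intro i _
        rw [sq, Finset.sum_mul_sum]
      rw [Finset.sum_congr rfl this, Finset.sum_comm]
      have : ∀ x ∈ S, ∑ i ∈ T, ∑ y ∈ S, pm (x i) * pm (y i)
          = ∑ y ∈ S, ((T.card : ℤ) - 2 * hammingDist x y) := by
        intro x hx
        rw [Finset.sum_comm]
        apply Finset.sum_congr rfl
        intro y hy
        rw [dist_eq_sum T x y (hag x hx y hy), Finset.mul_sum]
        simp only [pm_mul]
        rw [Finset.sum_sub_distrib, Finset.sum_const, nsmul_eq_mul, mul_one]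
      rw [Finset.sum_congr rfl this]
      simp only [Finset.sum_sub_distrib, Finset.sum_const, nsmul_eq_mul, hD, Finset.mul_sum]
      push_cast
      ring
    linarith [key, expand]
  calc 2 * (d : ℤ) * M * (M - 1) ≤ 2 * D := by linarith
    _ ≤ T.card * M ^ 2 := h2

lemma triangle_bound {n : ℕ} (T : Finset (Fin n)) (x y z : Fin n → Bool)
    (hxy : ∀ i ∉ T, x i = y i) (hyz : ∀ i ∉ T, y i = z i) :
    (hammingDist x y : ℤ) + hammingDist y z + hammingDist x z ≤ 2 * T.card := by
  have hxz : ∀ i ∉ T, x i = z i := fun i hi => (hxy i hi).trans (hyz i hi)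
  rw [dist_eq_sum T x y hxy, dist_eq_sum T y z hyz, dist_eq_sum T x z hxz]
  have : ∀ i ∈ T, ((if x i ≠ y i then (1:ℤ) else 0) + (if y i ≠ z i then 1 else 0))
      + (if x i ≠ z i then 1 else 0) ≤ 2 := by
    intro i _
    rcases Bool.dichotomy (x i) with h1 | h1 <;> rcases Bool.dichotomy (y i) with h2 | h2 <;>
      rcases Bool.dichotomy (z i) with h3 | h3 <;> simp [h1, h2, h3]
  calc (∑ i ∈ T, (if x i ≠ y i then (1:ℤ) else 0)) + (∑ i ∈ T, (if y i ≠ z i then (1:ℤ) else 0))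
        + (∑ i ∈ T, (if x i ≠ z i then (1:ℤ) else 0))
      = ∑ i ∈ T, (((if x i ≠ y i then (1:ℤ) else 0) + (if y i ≠ z i then 1 else 0))
          + (if x i ≠ z i then 1 else 0)) := by
        rw [Finset.sum_add_distrib, Finset.sum_add_distrib]
    _ ≤ ∑ i ∈ T, (2:ℤ) := Finset.sum_le_sum this
    _ = 2 * T.card := by rw [Finset.sum_const, nsmul_eq_mul]; ring

lemma card_T_le {k t : ℕ} (ht : t ≤ k) :
    (Finset.univ.filter (fun i : Fin k => k - t ≤ i.val)).card ≤ t := by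
  classical
  have hsplit := Finset.card_filter_add_card_filter_not
    (s := (Finset.univ : Finset (Fin k))) (p := fun i : Fin k => k - t ≤ i.val)
  have hcompl : k - t ≤ (Finset.univ.filter (fun i : Fin k => ¬ (k - t ≤ i.val))).card := by
    have : ∀ j : Fin (k - t), Fin.castLE (Nat.sub_le k t) j ∈
        Finset.univ.filter (fun i : Fin k => ¬ (k - t ≤ i.val)) := by
      intro j
      simp [Fin.castLE]
      omega
    calc k - t = (Finset.univ : Finset (Fin (k - t))).card := by simp
      _ ≤ _ := Finset.card_le_card_of_injOn _ (fun j _ => this j)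
          (fun a _ b _ h => by simpa [Fin.castLE, Fin.ext_iff] using congrArg Fin.val h)
  have huniv : (Finset.univ : Finset (Fin k)).card = k := by simp
  omega

lemma fiber_decomp (k t : ℕ) (ht : t ≤ k) (C : Finset (Fin k → Bool)) (M₀ : ℕ)
    (hfib : ∀ S ⊆ C, (∀ x ∈ S, ∀ y ∈ S, ∀ i : Fin k, i.val < k - t → x i = y i) →
      S.card ≤ M₀) :
    C.card ≤ M₀ * 2 ^ (k - t) := by
  classical
  set π : (Fin k → Bool) → (Fin (k - t) → Bool) :=
    fun x j => x (Fin.castLE (Nat.sub_le k t) j) with hπ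
  have h := Finset.card_le_mul_card_image_of_maps_to
    (f := π) (s := C) (t := (Finset.univ : Finset (Fin (k - t) → Bool)))
    (fun a _ => Finset.mem_univ _) M₀ ?_
  · calc C.card ≤ M₀ * (Finset.univ : Finset (Fin (k - t) → Bool)).card := h
      _ = M₀ * 2 ^ (k - t) := by simp
  · intro b _
    apply hfib _ (Finset.filter_subset _ _)
    intro x hx y hy i hi
    have hx' : π x = b := (Finset.mem_filter.1 hx).2
    have hy' : π y = b := (Finset.mem_filter.1 hy).2
    have : Fin.castLE (Nat.sub_le k t) ⟨i.val, hi⟩ = i := by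
      apply Fin.ext; rfl
    calc x i = π x ⟨i.val, hi⟩ := by rw [hπ]; simp [this]
      _ = π y ⟨i.val, hi⟩ := by rw [hx', hy']
      _ = y i := by rw [hπ]; simp [this]

lemma fiber_count (k t d : ℕ) (ht : t ≤ k) (S : Finset (Fin k → Bool))
    (hagree : ∀ x ∈ S, ∀ y ∈ S, ∀ i : Fin k, i.val < k - t → x i = y i)
    (hd : ∀ x ∈ S, ∀ y ∈ S, x ≠ y → d ≤ hammingDist x y) :
    2 * (d : ℤ) * S.card * (S.card - 1) ≤ t * S.card ^ 2 := by
  classical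
  set T := Finset.univ.filter (fun i : Fin k => k - t ≤ i.val) with hT
  have hag : ∀ x ∈ S, ∀ y ∈ S, ∀ i ∉ T, x i = y i := by
    intro x hx y hy i hi
    apply hagree x hx y hy
    simp [hT] at hi
    omega
  have h1 := plotkin_count d T S hag hd
  have h2 : (T.card : ℤ) ≤ t := by exact_mod_cast card_T_le ht
  have h3 : (0:ℤ) ≤ S.card ^ 2 := by positivity
  calc 2 * (d : ℤ) * S.card * (S.card - 1) ≤ T.card * S.card ^ 2 := h1
    _ ≤ t * S.card ^ 2 := by nlinarith

lemma sq_le_rpow (a : ℝ) (e : ℝ) (ha : 0 ≤ a) (h : a ^ 2 ≤ 2 ^ (2 * e)) :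
    a ≤ (2:ℝ) ^ e := by
  have h2 : (2:ℝ) ^ (2 * e) = ((2:ℝ) ^ e) ^ 2 := by
    rw [mul_comm, Real.rpow_mul (by norm_num), Real.rpow_two]
  nlinarith [Real.rpow_pos_of_pos (show (0:ℝ) < 2 by norm_num) e]

lemma final_step (k d t M₀ : ℕ) (ht : t ≤ k) (C : Finset (Fin k → Bool))
    (hcard : C.card ≤ M₀ * 2 ^ (k - t))
    (hM : (M₀ : ℝ) ≤ 2 ^ ((t : ℝ) - 3 / 2 * d + 2)) :
    (C.card : ℝ) ≤ 2 ^ ((k : ℝ) - 3 / 2 * d + 2) := by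
  have h1 : (C.card : ℝ) ≤ (M₀ : ℝ) * 2 ^ ((k : ℝ) - t) := by
    have := (Nat.cast_le (α := ℝ)).2 hcard
    push_cast at this
    calc (C.card : ℝ) ≤ (M₀ : ℝ) * 2 ^ (k - t : ℕ) := this
      _ = (M₀ : ℝ) * 2 ^ ((k : ℝ) - t) := by
        rw [← Real.rpow_natCast 2 (k - t), Nat.cast_sub ht]
  calc (C.card : ℝ) ≤ (M₀ : ℝ) * 2 ^ ((k : ℝ) - t) := h1
    _ ≤ 2 ^ ((t : ℝ) - 3 / 2 * d + 2) * 2 ^ ((k : ℝ) - t) := by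
        apply mul_le_mul_of_nonneg_right hM (Real.rpow_nonneg (by norm_num) _)
    _ = 2 ^ ((k : ℝ) - 3 / 2 * d + 2) := by
        rw [← Real.rpow_add (by norm_num)]
        ring_nf

lemma two_rpow_two : (2:ℝ) ^ (2:ℝ) = 4 := by
  rw [show (2:ℝ) = ((2:ℕ):ℝ) by norm_num, Real.rpow_natCast]
  norm_num

lemma five_le : (5:ℝ) ≤ (2:ℝ) ^ ((5:ℝ)/2) := by
  apply sq_le_rpow _ _ (by norm_num)
  have : (2:ℝ) * ((5:ℝ)/2) = ((5:ℕ):ℝ) := by norm_num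
  rw [this, Real.rpow_natCast]
  norm_num

lemma two_le : (2:ℝ) ≤ (2:ℝ) ^ ((3:ℝ)/2) := by
  apply sq_le_rpow _ _ (by norm_num)
  have : (2:ℝ) * ((3:ℝ)/2) = ((3:ℕ):ℝ) := by norm_num
  rw [this, Real.rpow_natCast]
  norm_num

/-- (Improved Singleton bound.) If `d < (2/3)k` and `C ⊆ {0,1}^k` is a binary code with
minimum Hamming distance at least `d`, then `|C| ≤ 2^{k - (3/2)d + 2}`. -/
theorem stmt_12 (k d : ℕ) (hk : 0 < k) (hd : 0 < d) (hkd : (d : ℝ) < 2 / 3 * k)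
    (C : Finset (Fin k → Bool))
    (hC : ∀ x ∈ C, ∀ y ∈ C, x ≠ y → d ≤ hammingDist x y) :
    (C.card : ℝ) ≤ 2 ^ ((k : ℝ) - 3 / 2 * d + 2) := by
  classical
  have hkd' : 3 * d < 2 * k := by
    have h : (3 * d : ℝ) < 2 * k := by push_cast; linarith
    exact_mod_cast h
  by_cases hd1 : d = 1
  · subst hd1
    apply final_step k 1 0 1 (Nat.zero_le k) C
    · simpa using Finset.card_le_univ C
    · push_cast
      rw [show (0:ℝ) - 3 / 2 * 1 + 2 = 1/2 by ring]
      apply sq_le_rpow _ _ (by norm_num)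
      rw [show (2:ℝ) * (1/2) = 1 by ring, Real.rpow_one]
      norm_num
  rcases Nat.even_or_odd d with ⟨e, he⟩ | hodd
  · -- d even, d = e + e
    have he' : d = 2 * e := by omega
    have hepos : 0 < e := by omega
    have ht : 3 * e ≤ k := by omega
    apply final_step k d (3 * e) 4 ht C
    · apply fiber_decomp k (3 * e) ht C 4
      intro S hS hagS
      have hdS : ∀ x ∈ S, ∀ y ∈ S, x ≠ y → d ≤ hammingDist x y :=
        fun x hx y hy hxy => hC x (hS hx) y (hS hy) hxy
      have hcount := fiber_count k (3 * e) d ht S hagS hdS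
      by_contra h
      push_neg at h
      have hM : (5:ℤ) ≤ S.card := by exact_mod_cast h
      have hdZ : (d:ℤ) = 2 * e := by exact_mod_cast he'
      have heZ : (1:ℤ) ≤ e := by exact_mod_cast hepos
      set M : ℤ := (S.card : ℤ) with hMdef
      push_cast at hcount
      rw [hdZ] at hcount
      have hMpos : (0:ℤ) < M := by linarith
      have hstep : (e:ℤ) * M ^ 2 ≤ 4 * e * M := by nlinarith [hcount]
      have h' : M * ((e:ℤ) * M) ≤ M * (4 * e) := by nlinarith [hstep]
      have hfin : (e:ℤ) * M ≤ 4 * e := le_of_mul_le_mul_left h' hMpos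
      nlinarith [hfin, mul_nonneg (show (0:ℤ) ≤ e by linarith)
        (show (0:ℤ) ≤ M - 5 by linarith)]
    · have hexp : ((3*e : ℕ) : ℝ) - 3 / 2 * d + 2 = 2 := by
        push_cast [he']; ring
      rw [hexp, two_rpow_two]
      norm_num
  · by_cases hd3 : d = 3
    · subst hd3
      have ht : 4 ≤ k := by omega
      apply final_step k 3 4 2 ht C
      · apply fiber_decomp k 4 ht C 2
        intro S hS hagS
        have hdS : ∀ x ∈ S, ∀ y ∈ S, x ≠ y → 3 ≤ hammingDist x y :=
          fun x hx y hy hxy => hC x (hS hx) y (hS hy) hxy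
        have hcount := fiber_count k 4 3 ht S hagS hdS
        have hle3 : S.card ≤ 3 := by
          by_contra h
          push_neg at h
          have hM : (4:ℤ) ≤ S.card := by exact_mod_cast h
          push_cast at hcount
          nlinarith [hcount, hM]
        -- exclude card = 3 via triangle
        by_contra h
        push_neg at h
        have h3 : S.card = 3 := by omega
        obtain ⟨a, b, c, hab, hac, hbc, hSabc⟩ := Finset.card_eq_three.1 h3
        have ha : a ∈ S := by rw [hSabc]; simp
        have hb : b ∈ S := by rw [hSabc]; simp
        have hc : c ∈ S := by rw [hSabc]; simp
        set T := Finset.univ.filter (fun i : Fin k => k - 4 ≤ i.val) with hT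
        have hagT : ∀ x ∈ S, ∀ y ∈ S, ∀ i ∉ T, x i = y i := by
          intro x hx y hy i hi
          apply hagS x hx y hy
          simp [hT] at hi
          omega
        have htri := triangle_bound T a b c (hagT a ha b hb) (hagT b hb c hc)
        have hTcard : T.card ≤ 4 := card_T_le ht
        have d1 : 3 ≤ hammingDist a b := hdS a ha b hb hab
        have d2 : 3 ≤ hammingDist b c := hdS b hb c hc hbc
        have d3 : 3 ≤ hammingDist a c := hdS a ha c hc hac
        have d1' : (3:ℤ) ≤ (hammingDist a b : ℤ) := by exact_mod_cast d1
        have d2' : (3:ℤ) ≤ (hammingDist b c : ℤ) := by exact_mod_cast d2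
        have d3' : (3:ℤ) ≤ (hammingDist a c : ℤ) := by exact_mod_cast d3
        have hTZ : (T.card : ℤ) ≤ 4 := by exact_mod_cast hTcard
        linarith [htri]
      · have hexp : ((4 : ℕ) : ℝ) - 3 / 2 * (3:ℕ) + 2 = 3/2 := by push_cast; ring
        rw [hexp]
        exact two_le
    · -- d odd, d ≥ 5
      obtain ⟨m, hm⟩ := hodd
      have hm2 : 2 ≤ m := by omega
      have ht : 3 * m + 2 ≤ k := by omega
      apply final_step k d (3 * m + 2) 5 ht C
      · apply fiber_decomp k (3 * m + 2) ht C 5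
        intro S hS hagS
        have hdS : ∀ x ∈ S, ∀ y ∈ S, x ≠ y → d ≤ hammingDist x y :=
          fun x hx y hy hxy => hC x (hS hx) y (hS hy) hxy
        have hcount := fiber_count k (3 * m + 2) d ht S hagS hdS
        by_contra h
        push_neg at h
        have hM : (6:ℤ) ≤ S.card := by exact_mod_cast h
        have hdZ : (d:ℤ) = 2 * m + 1 := by exact_mod_cast hm
        have hmZ : (2:ℤ) ≤ m := by exact_mod_cast hm2
        set M : ℤ := (S.card : ℤ) with hMdef
        push_cast at hcount
        rw [hdZ] at hcount
        have hMpos : (0:ℤ) < M := by linarith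
        have hstep : (m:ℤ) * M ^ 2 ≤ 4 * m * M + 2 * M := by nlinarith [hcount]
        have h' : M * ((m:ℤ) * M) ≤ M * (4 * m + 2) := by nlinarith [hstep]
        have hfin : (m:ℤ) * M ≤ 4 * m + 2 := le_of_mul_le_mul_left h' hMpos
        nlinarith [hfin, mul_nonneg (show (0:ℤ) ≤ m by linarith)
          (show (0:ℤ) ≤ M - 6 by linarith)]
      · have hexp : ((3*m+2 : ℕ) : ℝ) - 3 / 2 * d + 2 = 5/2 := by
          push_cast [hm]; ring
        rw [hexp]
        exact five_le
end

section
/- Let 0 < α < 1, let m ≥ 1 be an integer, and let Y ⊆ [0,1]^k ⊂ ℝ^k be a finite set such that |u - v| > α·√k for every two distinct points u, v ∈ Y. Then |Y| ≤ 2m · ⌈ √( (1/2)·(1 + 1/(2m-1)) ) / α ⌉^k. -/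
/-!
Cut `[0,1]^k` into `n^k` cubes of side `1/n`, where `n = ⌈√β / α⌉` and
`β = (1/2)(1 + 1/(2m-1)) = m/(2m-1)`. In an inner product space,
`∑_{x,y ∈ s} ‖x - y‖² = 2|s| ∑ ‖x - c‖² - 2‖∑ (x - c)‖²`, so a set of `p` points in a ball of
radius `R` has `∑ ‖x - y‖² ≤ 2p²R²`, while pairwise separation `d` forces it to be at least
`p(p-1)d²`. For a cell, `R² = k/(4n²)` and `d² = α²k`, giving `(p-1)(αn)² ≤ p/2`; since
`(αn)² ≥ β`, this yields `p ≤ 2m`.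
-/

open Finset

section InnerProductSpace

variable {E : Type*} [NormedAddCommGroup E] [InnerProductSpace ℝ E]

theorem sum_sum_norm_sub_sq {ι : Type*} (s : Finset ι) (f : ι → E) :
    ∑ i ∈ s, ∑ j ∈ s, ‖f i - f j‖ ^ 2
      = 2 * #s * ∑ i ∈ s, ‖f i‖ ^ 2 - 2 * ‖∑ i ∈ s, f i‖ ^ 2 := by
  have hinner : ∑ i ∈ s, ∑ j ∈ s, inner ℝ (f i) (f j) = ‖∑ i ∈ s, f i‖ ^ 2 := by
    rw [← real_inner_self_eq_norm_sq, sum_inner]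
    simp only [inner_sum]
  simp only [norm_sub_sq_real, sum_add_distrib, sum_sub_distrib, sum_const, nsmul_eq_mul,
    ← mul_sum, hinner]
  ring

theorem sum_sum_norm_sub_sq_le {s : Finset E} {c : E} {ρ : ℝ}
    (hs : ∀ x ∈ s, ‖x - c‖ ^ 2 ≤ ρ) :
    ∑ x ∈ s, ∑ y ∈ s, ‖x - y‖ ^ 2 ≤ 2 * #s ^ 2 * ρ := by
  have hshift := sum_sum_norm_sub_sq s (· - c)
  simp only [sub_sub_sub_cancel_right] at hshift
  have hsum : ∑ x ∈ s, ‖x - c‖ ^ 2 ≤ #s * ρ := by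
    simpa using sum_le_sum hs
  rw [hshift]
  nlinarith [sq_nonneg ‖∑ x ∈ s, (x - c)‖, (Nat.cast_nonneg #s : (0 : ℝ) ≤ #s)]

theorem card_sub_one_mul_le_of_dist_sq {s : Finset E} {c : E} {ρ δ : ℝ} (hδ : 0 ≤ δ)
    (hs : ∀ x ∈ s, dist x c ^ 2 ≤ ρ) (hsep : ∀ x ∈ s, ∀ y ∈ s, x ≠ y → δ ≤ dist x y ^ 2) :
    (#s - 1) * δ ≤ 2 * #s * ρ := by
  classical
  rcases s.eq_empty_or_nonempty with rfl | hne
  · simpa using hδ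
  have hcard : (0 : ℝ) < #s := by exact_mod_cast card_pos.2 hne
  have hlower : ∀ x ∈ s, (#s - 1) * δ ≤ ∑ y ∈ s, ‖x - y‖ ^ 2 := by
    intro x hx
    rw [← sum_erase s (a := x) (by simp), ← Nat.cast_pred (card_pos.2 hne),
      ← card_erase_of_mem hx, ← nsmul_eq_mul]
    refine card_nsmul_le_sum _ _ _ fun y hy => ?_
    simpa [dist_eq_norm] using hsep x hx y (mem_of_mem_erase hy) (ne_of_mem_erase hy).symm
  have hupper := sum_sum_norm_sub_sq_le (c := c) (by simpa [dist_eq_norm] using hs)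
  have := (card_nsmul_le_sum s _ _ hlower).trans hupper
  rw [nsmul_eq_mul] at this
  nlinarith

end InnerProductSpace

theorem EuclideanSpace.dist_sq_le_card_mul {ι : Type*} [Fintype ι] {x y : EuclideanSpace ℝ ι}
    {r : ℝ} (h : ∀ i, |x i - y i| ≤ r) : dist x y ^ 2 ≤ Fintype.card ι * r ^ 2 := by
  rw [EuclideanSpace.dist_sq_eq, ← nsmul_eq_mul, ← card_univ]
  refine sum_le_card_nsmul _ _ _ fun i _ => ?_
  rw [Real.dist_eq]
  exact pow_le_pow_left₀ (abs_nonneg _) (h i) 2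

theorem EuclideanSpace.card_sub_one_mul_le_of_abs_sub_le {ι : Type*} [Fintype ι] [Nonempty ι]
    {s : Finset (EuclideanSpace ℝ ι)} {c : EuclideanSpace ℝ ι} {r d : ℝ} (hd : 0 ≤ d)
    (hs : ∀ x ∈ s, ∀ i, |x i - c i| ≤ r)
    (hsep : ∀ x ∈ s, ∀ y ∈ s, x ≠ y → d * √(Fintype.card ι) ≤ dist x y) :
    (#s - 1) * d ^ 2 ≤ 2 * #s * r ^ 2 := by
  have hι : (0 : ℝ) < Fintype.card ι := by exact_mod_cast Fintype.card_pos
  have key := card_sub_one_mul_le_of_dist_sq (s := s) (c := c)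
    (δ := d ^ 2 * Fintype.card ι) (by positivity)
    (fun x hx => dist_sq_le_card_mul (hs x hx))
    (fun x hx y hy hxy => by
      simpa [mul_pow, Real.sq_sqrt hι.le] using
        pow_le_pow_left₀ (by positivity) (hsep x hx y hy hxy) 2)
  nlinarith

/-- The `j` with `x ∈ [j/n, (j+1)/n]`; the point `x = 1` is put into the last cell `j = n - 1`. -/
noncomputable def gridIndex (n : ℕ) (x : ℝ) : ℕ := min ⌊n * x⌋₊ (n - 1)

theorem gridIndex_lt {n : ℕ} (hn : 0 < n) (x : ℝ) : gridIndex n x < n := by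
  unfold gridIndex; omega

theorem abs_sub_gridCenter_le {n : ℕ} (hn : 0 < n) {x : ℝ} (hx : x ∈ Set.Icc (0 : ℝ) 1) :
    |x - (gridIndex n x + 1 / 2) / n| ≤ 1 / (2 * n) := by
  have hn' : (0 : ℝ) < n := by exact_mod_cast hn
  have hlow : (gridIndex n x : ℝ) ≤ n * x :=
    (Nat.cast_le.2 (min_le_left _ _)).trans (Nat.floor_le (by nlinarith [hx.1]))
  have hup : n * x ≤ gridIndex n x + 1 := by
    rcases le_total ⌊(n : ℝ) * x⌋₊ (n - 1) with h | h
    · rw [gridIndex, min_eq_left h]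
      exact (Nat.lt_floor_add_one _).le
    · rw [gridIndex, min_eq_right h, Nat.cast_pred hn]
      nlinarith [hx.2]
  have : x - (gridIndex n x + 1 / 2) / n = (n * x - gridIndex n x - 1 / 2) / n := by
    field_simp
    ring
  calc |x - (gridIndex n x + 1 / 2) / n| = |n * x - gridIndex n x - 1 / 2| / n := by
        rw [this, abs_div, abs_of_pos hn']
    _ ≤ (1 / 2) / n := by
        gcongr
        exact abs_le.2 ⟨by linarith, by linarith⟩
    _ = 1 / (2 * n) := by ring

theorem EuclideanSpace.card_le_two_mul_of_abs_sub_le {ι : Type*} [Fintype ι] [Nonempty ι]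
    {m α : ℝ} {n : ℕ} (hm : 1 ≤ m) (hα : 0 ≤ α)
    (hn : 1 / 2 * (1 + 1 / (2 * m - 1)) ≤ (α * n) ^ 2)
    {s : Finset (EuclideanSpace ℝ ι)} {c : EuclideanSpace ℝ ι}
    (hs : ∀ x ∈ s, ∀ i, |x i - c i| ≤ 1 / (2 * n))
    (hsep : ∀ x ∈ s, ∀ y ∈ s, x ≠ y → α * √(Fintype.card ι) ≤ dist x y) :
    (#s : ℝ) ≤ 2 * m := by
  have h2m : 0 < 2 * m - 1 := by linarith
  have hβ : 1 / 2 * (1 + 1 / (2 * m - 1)) = m / (2 * m - 1) := by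
    field_simp
    ring
  have hn0 : (n : ℝ) ≠ 0 := by
    rintro h
    rw [h, hβ] at hn
    have : 0 < m / (2 * m - 1) := div_pos (by linarith) h2m
    nlinarith
  have hpacking := card_sub_one_mul_le_of_abs_sub_le hα hs hsep
  have hscaled : ((#s : ℝ) - 1) * (α * n) ^ 2 ≤ #s / 2 := by
    calc ((#s : ℝ) - 1) * (α * n) ^ 2 = (#s - 1) * α ^ 2 * n ^ 2 := by ring
      _ ≤ 2 * #s * (1 / (2 * n)) ^ 2 * (n : ℝ) ^ 2 := by gcongr
      _ = (#s : ℝ) / 2 := by field_simp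
  by_contra! hlarge
  rw [hβ, div_le_iff₀ h2m] at hn
  nlinarith

theorem stmt_13_general (k m : ℕ) (hm : 1 ≤ m) (α : ℝ) (h0 : 0 < α)
    (Y : Finset (EuclideanSpace ℝ (Fin k)))
    (hcube : ∀ y ∈ Y, ∀ i, y i ∈ Set.Icc (0 : ℝ) 1)
    (hsep : ∀ u ∈ Y, ∀ v ∈ Y, u ≠ v → α * Real.sqrt k < dist u v) :
    (Y.card : ℝ) ≤
      2 * m * ((⌈Real.sqrt (1 / 2 * (1 + 1 / (2 * (m : ℝ) - 1))) / α⌉ : ℤ) : ℝ) ^ k := by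
  classical
  set β : ℝ := 1 / 2 * (1 + 1 / (2 * (m : ℝ) - 1))
  have hm' : (1 : ℝ) ≤ m := by exact_mod_cast hm
  have hβ : 0 < β := by
    have : (0 : ℝ) < 2 * m - 1 := by linarith
    positivity
  have hceil_pos : 0 < ⌈√β / α⌉ := Int.ceil_pos.2 (div_pos (Real.sqrt_pos.2 hβ) h0)
  obtain ⟨n, hn, hceil⟩ : ∃ n : ℕ, 0 < n ∧ ((⌈√β / α⌉ : ℤ) : ℝ) = n :=
    ⟨_, Int.lt_toNat.2 hceil_pos, by exact_mod_cast (Int.toNat_of_nonneg hceil_pos.le).symm⟩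
  have hβn : β ≤ (α * n) ^ 2 := by
    have := hceil ▸ Int.le_ceil (√β / α)
    rw [div_le_iff₀ h0, mul_comm] at this
    exact (Real.sqrt_le_left (by positivity)).1 this
  rw [hceil]
  rcases k.eq_zero_or_pos with rfl | hk
  · have : #Y ≤ 2 * m := (card_le_one_of_subsingleton Y).trans (by omega)
    simpa using (by exact_mod_cast this : (#Y : ℝ) ≤ 2 * m)
  have : Nonempty (Fin k) := ⟨⟨0, hk⟩⟩
  let cell : EuclideanSpace ℝ (Fin k) → Fin k → Fin n :=
    fun y i => ⟨gridIndex n (y i), gridIndex_lt hn _⟩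
  have hfiber : ∀ a ∈ Y.image cell, #{y ∈ Y | cell y = a} ≤ 2 * m := by
    intro a _
    have := EuclideanSpace.card_le_two_mul_of_abs_sub_le
      (s := {y ∈ Y | cell y = a}) (c := WithLp.toLp 2 fun i => ((a i : ℝ) + 1 / 2) / n)
      hm' h0.le hβn ?_ ?_
    · exact_mod_cast this
    · intro y hy i
      obtain ⟨hyY, rfl⟩ := mem_filter.1 hy
      simpa [cell] using abs_sub_gridCenter_le hn (hcube y hyY i)
    · intro x hx y hy hxy
      simpa using (hsep x (mem_filter.1 hx).1 y (mem_filter.1 hy).1 hxy).le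
  have hcount : #Y ≤ 2 * m * n ^ k :=
    (card_le_mul_card_image Y _ hfiber).trans
      (Nat.mul_le_mul_left _ ((card_le_univ _).trans_eq (by simp)))
  exact_mod_cast hcount

/-- Let `0 < α < 1`, `m ≥ 1`, and let `Y ⊆ [0,1]^k` be a finite set whose points are
pairwise at distance greater than `α·√k`. Then
`|Y| ≤ 2m · ⌈√((1/2)(1 + 1/(2m-1))) / α⌉^k`. -/
theorem stmt_13 (k m : ℕ) (hm : 1 ≤ m) (α : ℝ) (h0 : 0 < α) (h1 : α < 1)
    (Y : Finset (EuclideanSpace ℝ (Fin k)))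
    (hcube : ∀ y ∈ Y, ∀ i, y i ∈ Set.Icc (0 : ℝ) 1)
    (hsep : ∀ u ∈ Y, ∀ v ∈ Y, u ≠ v → α * Real.sqrt k < dist u v) :
    (Y.card : ℝ) ≤
      2 * m * ((⌈Real.sqrt (1 / 2 * (1 + 1 / (2 * (m : ℝ) - 1))) / α⌉ : ℤ) : ℝ) ^ k :=
  stmt_13_general k m hm α h0 Y hcube hsep
end

section
/- Let α be a real number with √(100/1791) < α < √(100/199), and let Y ⊆ [0,1]^k ⊂ ℝ^k be a finite set such that |u - v| > α·√k for every two distinct points u, v ∈ Y. Then |Y| ≤ 600 · 3^{(9/8)·(1 - (199/100)·α^2)·k}. -/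
/-!
Split each of the first `j = ⌈x⌉` coordinates, `x = (9/8)(1 - (199/100)α²)k`, into three
intervals; this cuts `[0,1]^k` into `3^j` boxes. For `n` points in a box of half-widths `h_t`,
the sum of squared distances over ordered pairs is at most `2n² ∑ h_t²`, while separation makes
it at least `n(n-1)α²k`. With `h_t = 1/6` on split coordinates and `1/2` elsewhere,
`∑ 2h_t² = k/2 - 4j/9 ≤ (199/200)α²k`, so a box holds at most `200` points and
`|Y| ≤ 200·3^j ≤ 600·3^x`. The lower bound on `α` is what makes `x ≤ k`.
-/

open Finset

lemma sum_sum_sub_sq_le {β : Type*} (S : Finset β) (u : β → ℝ) :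
    ∑ x ∈ S, ∑ y ∈ S, (u x - u y) ^ 2 ≤ 2 * #S * ∑ x ∈ S, u x ^ 2 := by
  have hexpand : ∑ x ∈ S, ∑ y ∈ S, (u x - u y) ^ 2
      = 2 * #S * ∑ x ∈ S, u x ^ 2 - 2 * (∑ x ∈ S, u x) ^ 2 := by
    simp only [sub_sq, sum_add_distrib, sum_sub_distrib, sum_const, nsmul_eq_mul, ← mul_sum,
      ← sum_mul]
    ring
  rw [hexpand]
  nlinarith [sq_nonneg (∑ x ∈ S, u x)]

noncomputable def unitIntervalCell (n : ℕ) (r : ℝ) : Fin (n + 1) :=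
  ⟨min ⌊(n + 1) * r⌋₊ n, Nat.lt_succ_of_le (min_le_right _ _)⟩

lemma abs_sub_unitIntervalCell_le (n : ℕ) {r : ℝ} (hr : r ∈ Set.Icc (0 : ℝ) 1) :
    |r - ((unitIntervalCell n r : ℕ) + 1 / 2) / (n + 1)| ≤ 1 / (2 * (n + 1)) := by
  set i : ℕ := min ⌊(n + 1) * r⌋₊ n
  have hn : (0 : ℝ) < n + 1 := by positivity
  have hlo : (i : ℝ) ≤ (n + 1) * r :=
    (Nat.cast_le.2 (min_le_left _ _)).trans (Nat.floor_le (by nlinarith [hr.1]))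
  have hhi : (n + 1) * r ≤ i + 1 := by
    rcases min_choice ⌊(n + 1) * r⌋₊ n with h | h
    · rw [show i = _ from h]
      exact (Nat.lt_floor_add_one _).le
    · rw [show i = _ from h]
      nlinarith [hr.2]
  change |r - ((i : ℝ) + 1 / 2) / (n + 1)| ≤ 1 / (2 * (n + 1))
  rw [show r - ((i : ℝ) + 1 / 2) / (n + 1) = ((n + 1) * r - i - 1 / 2) / (n + 1) by
      field_simp; ring,
    abs_div, abs_of_pos hn, ← div_div, div_le_div_iff_of_pos_right hn, abs_le]
  constructor <;> nlinarith

section Box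

variable {ι : Type*} [Fintype ι]

lemma sum_sum_dist_sq_le_of_abs_sub_le (S : Finset (EuclideanSpace ℝ ι)) (m h : ι → ℝ)
    (hbox : ∀ x ∈ S, ∀ t, |x t - m t| ≤ h t) :
    ∑ x ∈ S, ∑ y ∈ S, dist x y ^ 2 ≤ (#S : ℝ) ^ 2 * ∑ t, 2 * h t ^ 2 := by
  calc ∑ x ∈ S, ∑ y ∈ S, dist x y ^ 2
      = ∑ t, ∑ x ∈ S, ∑ y ∈ S, ((x t - m t) - (y t - m t)) ^ 2 := by
        simp only [PiLp.dist_sq_eq_of_L2, Real.dist_eq, sq_abs, sub_sub_sub_cancel_right]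
        exact (sum_comm.trans (sum_congr rfl fun _ _ => sum_comm)).symm
    _ ≤ ∑ t, 2 * #S * ∑ x ∈ S, (x t - m t) ^ 2 :=
        sum_le_sum fun t _ => sum_sum_sub_sq_le S fun x => x t - m t
    _ ≤ ∑ t, 2 * #S * (#S * h t ^ 2) := by
        gcongr with t
        rw [← nsmul_eq_mul]
        refine sum_le_card_nsmul _ _ _ fun x hx => ?_
        rw [← sq_abs]
        exact pow_le_pow_left₀ (abs_nonneg _) (hbox x hx t) 2
    _ = (#S : ℝ) ^ 2 * ∑ t, 2 * h t ^ 2 := by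
        rw [mul_sum]
        exact sum_congr rfl fun t _ => by ring

lemma card_mul_card_sub_one_mul_sq_le_sum_sum_dist_sq (S : Finset (EuclideanSpace ℝ ι))
    {r : ℝ} (hr : 0 ≤ r) (hsep : ∀ u ∈ S, ∀ v ∈ S, u ≠ v → r ≤ dist u v) :
    (#S : ℝ) * (#S - 1) * r ^ 2 ≤ ∑ x ∈ S, ∑ y ∈ S, dist x y ^ 2 := by
  have hrow : ∀ x ∈ S, ((#S : ℝ) - 1) * r ^ 2 ≤ ∑ y ∈ S, dist x y ^ 2 := by
    intro x hx
    rw [← sum_erase S (a := x) (by simp), ← Nat.cast_pred (card_pos.2 ⟨x, hx⟩),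
      ← card_erase_of_mem hx, ← nsmul_eq_mul]
    refine card_nsmul_le_sum _ _ _ fun y hy => ?_
    exact pow_le_pow_left₀ hr (hsep x hx y (mem_of_mem_erase hy) (ne_of_mem_erase hy).symm) 2
  calc (#S : ℝ) * (#S - 1) * r ^ 2 = #S • (((#S : ℝ) - 1) * r ^ 2) := by
        rw [nsmul_eq_mul]; ring
    _ ≤ _ := card_nsmul_le_sum _ _ _ hrow

lemma card_le_of_abs_sub_le_of_le_dist (S : Finset (EuclideanSpace ℝ ι))
    (m h : ι → ℝ) (hbox : ∀ x ∈ S, ∀ t, |x t - m t| ≤ h t) {r : ℝ} (hr : 0 < r)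
    (hsep : ∀ u ∈ S, ∀ v ∈ S, u ≠ v → r ≤ dist u v) {N : ℕ} (hN : 0 < N)
    (hsum : ∑ t, 2 * h t ^ 2 ≤ (1 - 1 / N) * r ^ 2) :
    #S ≤ N := by
  rcases S.eq_empty_or_nonempty with rfl | hS
  · simp
  have hpairs := (card_mul_card_sub_one_mul_sq_le_sum_sum_dist_sq S hr.le hsep).trans
    ((sum_sum_dist_sq_le_of_abs_sub_le S m h hbox).trans
      (mul_le_mul_of_nonneg_left hsum (by positivity)))
  have hcard : (0 : ℝ) < #S := by exact_mod_cast hS.card_pos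
  have hN' : (0 : ℝ) < N := by exact_mod_cast hN
  have hrow : (#S : ℝ) - 1 ≤ #S * (1 - 1 / N) :=
    le_of_mul_le_mul_left (le_of_mul_le_mul_right (by linarith) (pow_pos hr 2)) hcard
  rw [← Nat.cast_le (α := ℝ), ← div_le_one hN']
  linarith [show (#S : ℝ) * (1 - 1 / N) = #S - #S / N by ring]

lemma card_le_of_le_dist_of_mem_unitCube
    (Y : Finset (EuclideanSpace ℝ ι)) (hcube : ∀ y ∈ Y, ∀ t, y t ∈ Set.Icc (0 : ℝ) 1)
    {r : ℝ} (hr : 0 < r) (hsep : ∀ u ∈ Y, ∀ v ∈ Y, u ≠ v → r ≤ dist u v)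
    (J : Finset ι) (n : ℕ) {N : ℕ} (hN : 0 < N)
    (hsum : #J / (2 * ((n : ℝ) + 1) ^ 2) + ((Fintype.card ι : ℝ) - #J) / 2
      ≤ (1 - 1 / N) * r ^ 2) :
    #Y ≤ N * (n + 1) ^ #J := by
  classical
  let cell (y : EuclideanSpace ℝ ι) : J → Fin (n + 1) := fun t => unitIntervalCell n (y t)
  let center (a : J → Fin (n + 1)) (t : ι) : ℝ :=
    if ht : t ∈ J then ((a ⟨t, ht⟩ : ℕ) + 1 / 2) / (n + 1) else 1 / 2
  let width (t : ι) : ℝ := if t ∈ J then 1 / (2 * (n + 1)) else 1 / 2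
  have hbox : ∀ y ∈ Y, ∀ t, |y t - center (cell y) t| ≤ width t := by
    intro y hy t
    by_cases ht : t ∈ J
    · simpa only [center, width, dif_pos ht, if_pos ht] using
        abs_sub_unitIntervalCell_le n (hcube y hy t)
    · simp only [center, width, dif_neg ht, if_neg ht, abs_le]
      constructor <;> linarith [(hcube y hy t).1, (hcube y hy t).2]
  have hwidth : ∑ t, 2 * width t ^ 2
      = #J / (2 * ((n : ℝ) + 1) ^ 2) + ((Fintype.card ι : ℝ) - #J) / 2 := by
    rw [← sum_add_sum_compl J,
      sum_congr rfl (g := fun _ => 2 * (1 / (2 * ((n : ℝ) + 1))) ^ 2) fun t ht => by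
        simp only [width, if_pos ht],
      sum_congr (s₁ := Jᶜ) rfl (g := fun _ => 2 * (1 / 2 : ℝ) ^ 2) fun t ht => by
        simp only [width, if_neg (mem_compl.1 ht)]]
    simp only [sum_const, card_compl, nsmul_eq_mul, Nat.cast_sub (card_le_univ J)]
    field_simp
  calc #Y ≤ N * #(Y.image cell) := by
        refine card_le_mul_card_image Y N fun a _ => ?_
        refine card_le_of_abs_sub_le_of_le_dist _ (center a) width ?_ hr
          (fun u hu v hv => hsep u (mem_filter.1 hu).1 v (mem_filter.1 hv).1) hN
          (hwidth ▸ hsum)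
        intro y hy
        obtain ⟨hyY, rfl⟩ := mem_filter.1 hy
        exact hbox y hyY
    _ ≤ N * (n + 1) ^ #J := by
        gcongr
        simpa using card_le_univ (Y.image cell)

end Box

/-- Let `√(100/1791) < α < √(100/199)` and let `Y ⊆ [0,1]^k` be a finite set whose points
are pairwise at distance greater than `α·√k`. Then
`|Y| ≤ 600 · 3^{(9/8)(1 - (199/100)α²)k}`. -/
theorem stmt_14 (k : ℕ) (α : ℝ)
    (h0 : Real.sqrt (100 / 1791) < α) (h1 : α < Real.sqrt (100 / 199))
    (Y : Finset (EuclideanSpace ℝ (Fin k)))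
    (hcube : ∀ y ∈ Y, ∀ i, y i ∈ Set.Icc (0 : ℝ) 1)
    (hsep : ∀ u ∈ Y, ∀ v ∈ Y, u ≠ v → α * Real.sqrt k < dist u v) :
    (Y.card : ℝ) ≤ 600 * (3 : ℝ) ^ (9 / 8 * (1 - 199 / 100 * α ^ 2) * (k : ℝ)) := by
  have hα : 0 < α := (Real.sqrt_nonneg _).trans_lt h0
  have hα2_lo : 100 / 1791 < α ^ 2 := (Real.sqrt_lt' hα).1 h0
  have hα2_hi : α ^ 2 < 100 / 199 := (Real.lt_sqrt hα.le).1 h1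
  set x := 9 / 8 * (1 - 199 / 100 * α ^ 2) * (k : ℝ) with hx_def
  rcases Nat.eq_zero_or_pos k with rfl | hk
  · have : (Y.card : ℝ) ≤ 1 := by exact_mod_cast card_le_one_of_subsingleton Y
    simp only [x, Nat.cast_zero, mul_zero, Real.rpow_zero]
    linarith
  have hx : 0 ≤ x := mul_nonneg (by nlinarith) k.cast_nonneg
  have hxk : x ≤ k := by nlinarith [k.cast_nonneg (α := ℝ)]
  obtain ⟨J, -, hJ⟩ := exists_subset_card_eq (s := (univ : Finset (Fin k))) (n := ⌈x⌉₊)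
    (by simpa using Nat.ceil_le.2 hxk)
  have hcard := card_le_of_le_dist_of_mem_unitCube Y hcube
    (r := α * Real.sqrt k) (by positivity) (fun u hu v hv huv => (hsep u hu v hv huv).le)
    J 2 (N := 200) (by norm_num) (by
      rw [mul_pow, Real.sq_sqrt k.cast_nonneg, Fintype.card_fin, hJ]
      push_cast
      linarith [Nat.le_ceil x])
  calc (Y.card : ℝ) ≤ 200 * 3 ^ (⌈x⌉₊ : ℝ) := by
        rw [Real.rpow_natCast, ← hJ]; exact_mod_cast hcard
    _ ≤ 200 * 3 ^ (x + 1) := by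
        gcongr
        · norm_num
        · exact (Nat.ceil_lt_add_one hx).le
    _ = 600 * 3 ^ x := by rw [Real.rpow_add_one (by norm_num)]; ring
end

section
/- There exists an integer k_0 such that for all integers k ≥ k_0 the following holds: for every real α with 0 < α < 0.99 and every finite set Y ⊆ [0,1]^k ⊂ ℝ^k such that |u - v| > α·√k for every two distinct points u, v ∈ Y, one has |Y| · α^k ≤ 0.999^k. -/
/-!
For `α > 18/25` this is a Plotkin bound: the squared distances between points of the cube sum to
at most `|Y|² k / 2`, so `|Y| ≤ 29`.

For `α ≤ 18/25` the sets `B(y, α√k/2) ∩ [0,1]^k`, `y ∈ Y`, are disjoint, so it suffices to bound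
their volume from below by roughly `(1.0019 α)^k`. Folding `[0,1]` at `y_i` moves `y_i` to `0`
without changing lengths or decreasing `|x_i - y_i|`. Cut the folded coordinate into `64` bins of
width `s/64` with `s = 25α/18`; a product of bins lies in the ball as soon as the squared bin
edges sum to at most `81k/625`. A law of large numbers under a tilted distribution on the bins,
which favours short bins, shows that at least `46.17^k / 2` of the `64^k` products do.
-/

open Finset MeasureTheory Filter Metric

section Plotkin

variable {E : Type*} [NormedAddCommGroup E] [InnerProductSpace ℝ E]

lemma sum_sum_norm_sub_sq_eq (Y : Finset E) (c : E) :
    ∑ u ∈ Y, ∑ v ∈ Y, ‖u - v‖ ^ 2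
      = 2 * #Y * ∑ u ∈ Y, ‖u - c‖ ^ 2 - 2 * ‖∑ u ∈ Y, (u - c)‖ ^ 2 := by
  calc ∑ u ∈ Y, ∑ v ∈ Y, ‖u - v‖ ^ 2
      = ∑ u ∈ Y, ∑ v ∈ Y, (‖u - c‖ ^ 2 - 2 * inner ℝ (u - c) (v - c) + ‖v - c‖ ^ 2) := by
        refine sum_congr rfl fun u _ => sum_congr rfl fun v _ => ?_
        rw [← norm_sub_sq_real, sub_sub_sub_cancel_right]
    _ = 2 * #Y * ∑ u ∈ Y, ‖u - c‖ ^ 2 - 2 * ‖∑ u ∈ Y, (u - c)‖ ^ 2 := by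
        simp only [sum_add_distrib, sum_sub_distrib, sum_const, ← mul_sum, ← inner_sum,
          ← sum_inner, real_inner_self_eq_norm_sq, nsmul_eq_mul]
        ring

lemma card_sub_one_mul_sq_le {Y : Finset E} {c : E} {R d : ℝ} (hd : 0 ≤ d)
    (hR : ∀ y ∈ Y, dist y c ≤ R) (hsep : ∀ u ∈ Y, ∀ v ∈ Y, u ≠ v → d ≤ dist u v) :
    (#Y - 1) * d ^ 2 ≤ 2 * #Y * R ^ 2 := by
  classical
  rcases Y.eq_empty_or_nonempty with rfl | hY
  · simp only [card_empty, CharP.cast_eq_zero]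
    nlinarith
  have hN : (0 : ℝ) < #Y := by exact_mod_cast hY.card_pos
  have hlower : #Y * ((#Y - 1) * d ^ 2) ≤ ∑ u ∈ Y, ∑ v ∈ Y, ‖u - v‖ ^ 2 := by
    rw [← nsmul_eq_mul]
    refine card_nsmul_le_sum _ _ _ fun u hu => ?_
    calc (#Y - 1 : ℝ) * d ^ 2 = #(Y.erase u) * d ^ 2 := by
          rw [card_erase_of_mem hu, Nat.cast_sub (card_pos.mpr hY), Nat.cast_one]
      _ ≤ ∑ v ∈ Y.erase u, ‖u - v‖ ^ 2 := by
          rw [← nsmul_eq_mul]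
          refine card_nsmul_le_sum _ _ _ fun v hv => ?_
          rw [← dist_eq_norm]
          exact pow_le_pow_left₀ hd
            (hsep u hu v (mem_of_mem_erase hv) (ne_of_mem_erase hv).symm) 2
      _ ≤ ∑ v ∈ Y, ‖u - v‖ ^ 2 :=
          sum_le_sum_of_subset_of_nonneg (erase_subset u Y) fun _ _ _ => by positivity
  have hupper : ∑ u ∈ Y, ∑ v ∈ Y, ‖u - v‖ ^ 2 ≤ #Y * (2 * #Y * R ^ 2) := by
    have hsum : ∑ u ∈ Y, ‖u - c‖ ^ 2 ≤ #Y * R ^ 2 := by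
      rw [← nsmul_eq_mul]
      refine sum_le_card_nsmul _ _ _ fun u hu => ?_
      rw [← dist_eq_norm]
      exact pow_le_pow_left₀ dist_nonneg (hR u hu) 2
    rw [sum_sum_norm_sub_sq_eq Y c]
    nlinarith [sq_nonneg ‖∑ u ∈ Y, (u - c)‖]
  exact le_of_mul_le_mul_left (hlower.trans hupper) hN

end Plotkin

def unitCube (k : ℕ) : Set (EuclideanSpace ℝ (Fin k)) := {x | ∀ i, x i ∈ Set.Icc 0 1}

lemma unitCube_eq_preimage (k : ℕ) :
    unitCube k = WithLp.ofLp ⁻¹' Set.univ.pi fun _ => Set.Icc 0 1 := by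
  ext x
  simp only [unitCube, Set.mem_preimage, Set.mem_univ_pi]
  rfl

lemma measurableSet_unitCube (k : ℕ) : MeasurableSet (unitCube k) := by
  rw [unitCube_eq_preimage]
  exact (MeasurableSet.univ_pi fun _ => measurableSet_Icc).preimage (by fun_prop)

lemma volume_unitCube (k : ℕ) : volume (unitCube k) = 1 := by
  rw [unitCube_eq_preimage, (PiLp.volume_preserving_ofLp (Fin k)).measure_preimage
    (MeasurableSet.univ_pi fun _ => measurableSet_Icc).nullMeasurableSet, volume_pi_pi]
  simp

lemma unitCube_subset_closedBall (k : ℕ) :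
    unitCube k ⊆ closedBall (WithLp.toLp 2 fun _ => 1 / 2) (√k / 2) := by
  intro x hx
  rw [mem_closedBall, EuclideanSpace.dist_eq]
  calc √(∑ i, dist (x i) (1 / 2) ^ 2) ≤ √(∑ _i : Fin k, (1 / 2) ^ 2) := by
        gcongr with i
        rw [Real.dist_eq, abs_le]
        constructor <;> linarith [(hx i).1, (hx i).2]
    _ = √k / 2 := by
        rw [sum_const, card_univ, Fintype.card_fin, nsmul_eq_mul, Real.sqrt_mul (Nat.cast_nonneg k)]
        norm_num
        ring

/-- The points `x` with `u ≤ φ x < v`, where `φ x = x - y` for `y ≤ x ≤ 1` and `φ x = 1 - x` for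
`0 ≤ x < y`. For `y ∈ [0,1]`, `φ` rearranges `[0,1]` preserving length and `|x - y| ≤ φ x`. -/
def foldedShell (y u v : ℝ) : Set ℝ :=
  Set.Ico (y + u) (min (y + v) 1) ∪ Set.Ioo (1 - v) (min (1 - u) y)

section FoldedShell

variable {y u v x : ℝ}

lemma measurableSet_foldedShell : MeasurableSet (foldedShell y u v) :=
  measurableSet_Ico.union measurableSet_Ioo

lemma foldedShell_subset_Icc (hy0 : 0 ≤ y) (hu : 0 ≤ u) (hv : v ≤ 1) :
    foldedShell y u v ⊆ Set.Icc 0 1 := by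
  rintro x (⟨h₁, h₂⟩ | ⟨h₁, h₂⟩) <;> simp only [lt_min_iff] at h₂ <;>
    constructor <;> linarith [h₂.1, h₂.2]

lemma abs_sub_lt_of_mem_foldedShell (hy1 : y ≤ 1) (hu : 0 ≤ u) (hx : x ∈ foldedShell y u v) :
    |x - y| < v := by
  rw [abs_sub_lt_iff]
  rcases hx with ⟨h₁, h₂⟩ | ⟨h₁, h₂⟩ <;> simp only [lt_min_iff] at h₂ <;>
    constructor <;> linarith [h₂.1, h₂.2]

lemma disjoint_foldedShell {u' v' : ℝ} (hu : 0 ≤ u) (h : v ≤ u') :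
    Disjoint (foldedShell y u v) (foldedShell y u' v') := by
  rw [Set.disjoint_left]
  rintro x (⟨h₁, h₂⟩ | ⟨h₁, h₂⟩) (⟨h₃, h₄⟩ | ⟨h₃, h₄⟩) <;> simp only [lt_min_iff] at h₂ h₄ <;>
    linarith [h₂.1, h₂.2, h₄.1, h₄.2]

lemma volume_foldedShell (hu : 0 ≤ u) :
    volume (foldedShell y u v) = ENNReal.ofReal (v - u) := by
  have hdisj : Disjoint (Set.Ico (y + u) (min (y + v) 1)) (Set.Ioo (1 - v) (min (1 - u) y)) := by
    rw [Set.disjoint_left]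
    rintro x ⟨h₁, -⟩ ⟨-, h₂⟩
    linarith [min_le_right (1 - u) y]
  rw [foldedShell, measure_union hdisj measurableSet_Ioo, Real.volume_Ico, Real.volume_Ioo]
  rcases le_total (y + v) 1 with hyv | hyv
  · rw [min_eq_left hyv, ENNReal.ofReal_of_nonpos (p := min (1 - u) y - (1 - v))
      (by linarith [min_le_right (1 - u) y]), add_zero]
    ring_nf
  rcases le_total (y + u) 1 with hyu | hyu
  · rw [min_eq_right hyv, min_eq_right (by linarith : y ≤ 1 - u),
      ← ENNReal.ofReal_add (by linarith) (by linarith)]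
    ring_nf
  · rw [min_eq_right hyv, min_eq_left (by linarith : 1 - u ≤ y),
      ENNReal.ofReal_of_nonpos (p := 1 - (y + u)) (by linarith), zero_add]
    ring_nf

end FoldedShell

def shellBox {k n : ℕ} (y : EuclideanSpace ℝ (Fin k)) (s : ℝ) (c : Fin k → Fin n) :
    Set (EuclideanSpace ℝ (Fin k)) :=
  WithLp.ofLp ⁻¹' Set.univ.pi fun i =>
    foldedShell (y i) (s * (c i : ℕ) / n) (s * ((c i : ℕ) + 1) / n)

section ShellBox

variable {k n : ℕ} {y : EuclideanSpace ℝ (Fin k)} {s : ℝ}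

lemma measurableSet_shellBox (c : Fin k → Fin n) : MeasurableSet (shellBox y s c) :=
  (MeasurableSet.univ_pi fun _ => measurableSet_foldedShell).preimage (by fun_prop)

lemma volume_shellBox (hs : 0 ≤ s) (c : Fin k → Fin n) :
    volume (shellBox y s c) = ENNReal.ofReal ((s / n) ^ k) := by
  rw [shellBox, (PiLp.volume_preserving_ofLp (Fin k)).measure_preimage
    (MeasurableSet.univ_pi fun _ => measurableSet_foldedShell).nullMeasurableSet, volume_pi_pi]
  have hfactor : ∀ i, volume (foldedShell (y i) (s * (c i : ℕ) / n) (s * ((c i : ℕ) + 1) / n))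
      = ENNReal.ofReal (s / n) := fun i => by
    rw [volume_foldedShell (by positivity)]
    ring_nf
  rw [prod_congr rfl fun i _ => hfactor i, prod_const, card_univ, Fintype.card_fin,
    ← ENNReal.ofReal_pow (by positivity)]

lemma shellBox_subset_unitCube (hy : y ∈ unitCube k) (hs0 : 0 ≤ s) (hs1 : s ≤ 1)
    (c : Fin k → Fin n) : shellBox y s c ⊆ unitCube k := by
  intro x hx i
  refine foldedShell_subset_Icc (hy i).1 (by positivity) ?_ (hx i (Set.mem_univ i))
  have hc : ((c i : ℕ) + 1 : ℝ) ≤ n := by exact_mod_cast (c i).isLt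
  rw [div_le_one (by linarith [(c i : ℕ).cast_nonneg (α := ℝ)])]
  nlinarith

lemma dist_sq_le_of_mem_shellBox (hy : y ∈ unitCube k) (hs : 0 ≤ s) {c : Fin k → Fin n}
    {x : EuclideanSpace ℝ (Fin k)} (hx : x ∈ shellBox y s c) :
    dist x y ^ 2 ≤ s ^ 2 * ∑ i, (((c i : ℕ) + 1 : ℝ) / n) ^ 2 := by
  rw [EuclideanSpace.dist_eq, Real.sq_sqrt (by positivity), mul_sum]
  refine sum_le_sum fun i _ => ?_
  have h := abs_sub_lt_of_mem_foldedShell (hy i).2 (by positivity) (hx i (Set.mem_univ i))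
  rw [Real.dist_eq, ← mul_pow, mul_div_assoc']
  exact pow_le_pow_left₀ (abs_nonneg _) h.le 2

lemma pairwiseDisjoint_shellBox (hs : 0 ≤ s) :
    (Set.univ : Set (Fin k → Fin n)).PairwiseDisjoint (shellBox y s) := by
  intro c _ c' _ hne
  obtain ⟨i, hi⟩ := Function.ne_iff.mp hne
  have hdisj_of_lt : ∀ a b : Fin n, a < b →
      Disjoint (foldedShell (y i) (s * (a : ℕ) / n) (s * ((a : ℕ) + 1) / n))
        (foldedShell (y i) (s * (b : ℕ) / n) (s * ((b : ℕ) + 1) / n)) := by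
    intro a b hab
    refine disjoint_foldedShell (by positivity) ?_
    have : ((a : ℕ) + 1 : ℝ) ≤ (b : ℕ) := by exact_mod_cast hab
    gcongr
  have hdisj := (lt_or_gt_of_ne hi).elim (hdisj_of_lt _ _) fun h => (hdisj_of_lt _ _ h).symm
  exact Set.disjoint_left.mpr fun x hx hx' =>
    Set.disjoint_left.mp hdisj (hx i (Set.mem_univ i)) (hx' i (Set.mem_univ i))

end ShellBox

lemma ofReal_card_mul_le_volume_closedBall_inter_unitCube {k n : ℕ}
    {y : EuclideanSpace ℝ (Fin k)} (hy : y ∈ unitCube k) {s r : ℝ} (hs0 : 0 ≤ s) (hs1 : s ≤ 1)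
    (hr : 0 ≤ r) (C : Finset (Fin k → Fin n))
    (hC : ∀ c ∈ C, s ^ 2 * ∑ i, (((c i : ℕ) + 1 : ℝ) / n) ^ 2 ≤ r ^ 2) :
    ENNReal.ofReal (#C * (s / n) ^ k) ≤ volume (closedBall y r ∩ unitCube k) := by
  calc ENNReal.ofReal (#C * (s / n) ^ k) = ∑ c ∈ C, volume (shellBox y s c) := by
        rw [sum_congr rfl fun c _ => volume_shellBox hs0 c, sum_const, nsmul_eq_mul,
          ENNReal.ofReal_mul (Nat.cast_nonneg _), ENNReal.ofReal_natCast]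
    _ = volume (⋃ c ∈ C, shellBox y s c) :=
        (measure_biUnion_finset ((pairwiseDisjoint_shellBox hs0).subset (Set.subset_univ _))
          fun c _ => measurableSet_shellBox c).symm
    _ ≤ volume (closedBall y r ∩ unitCube k) := by
        refine measure_mono (Set.iUnion₂_subset fun c hc x hx =>
          ⟨?_, shellBox_subset_unitCube hy hs0 hs1 c hx⟩)
        rw [mem_closedBall]
        exact (pow_le_pow_iff_left₀ dist_nonneg hr two_ne_zero).mp
          ((dist_sq_le_of_mem_shellBox hy hs0 hx).trans (hC c hc))

lemma card_mul_le_one_of_lt_dist {k : ℕ} {Y : Finset (EuclideanSpace ℝ (Fin k))}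
    {r : ℝ} (hsep : ∀ u ∈ Y, ∀ v ∈ Y, u ≠ v → 2 * r < dist u v)
    {m : ℝ} (hm : ∀ y ∈ Y, ENNReal.ofReal m ≤ volume (closedBall y r ∩ unitCube k)) :
    #Y * m ≤ 1 := by
  have hdisj : (Y : Set (EuclideanSpace ℝ (Fin k))).PairwiseDisjoint
      fun y => closedBall y r ∩ unitCube k := fun u hu v hv huv =>
    (closedBall_disjoint_closedBall (by linarith [hsep u hu v hv huv])).mono
      Set.inter_subset_left Set.inter_subset_left
  rw [← ENNReal.ofReal_le_one, ENNReal.ofReal_mul (Nat.cast_nonneg _), ENNReal.ofReal_natCast]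
  calc #Y * ENNReal.ofReal m ≤ ∑ y ∈ Y, volume (closedBall y r ∩ unitCube k) := by
        rw [← nsmul_eq_mul]
        exact card_nsmul_le_sum _ _ _ hm
    _ = volume (⋃ y ∈ Y, closedBall y r ∩ unitCube k) :=
        (measure_biUnion_finset hdisj fun _ _ =>
          measurableSet_closedBall.inter (measurableSet_unitCube k)).symm
    _ ≤ volume (unitCube k) := measure_mono (Set.iUnion₂_subset fun _ _ => Set.inter_subset_right)
    _ = 1 := volume_unitCube k

lemma sum_le_sum_add_sum_filter_add_sum_filter {β : Type*} [Fintype β] {f : β → ℝ}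
    (hf : ∀ b, 0 ≤ f b) {s : Finset β} {Q R : β → Prop} [DecidablePred Q] [DecidablePred R]
    (h : ∀ b, b ∈ s ∨ Q b ∨ R b) :
    ∑ b, f b ≤ ∑ b ∈ s, f b + ∑ b ∈ univ.filter Q, f b + ∑ b ∈ univ.filter R, f b := by
  classical
  rw [← filter_univ_mem s]
  simp only [sum_filter, ← sum_add_distrib]
  refine sum_le_sum fun b _ => ?_
  have := hf b
  rcases h b with h | h | h <;> split_ifs <;> linarith

section WeightedSums

variable {α : Type*} [Fintype α]

lemma sum_prod_mul_sq_sum_eq {ι : Type*} [Fintype ι] [DecidableEq ι] (w g : α → ℝ)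
    (hg : ∑ a, w a * g a = 0) :
    ∑ c : ι → α, (∏ i, w (c i)) * (∑ i, g (c i)) ^ 2
      = Fintype.card ι * (∑ a, w a * g a ^ 2) * (∑ a, w a) ^ (Fintype.card ι - 1) := by
  have hpair : ∀ i j : ι, ∑ c : ι → α, (∏ l, w (c l)) * (g (c i) * g (c j))
      = if i = j then (∑ a, w a * g a ^ 2) * (∑ a, w a) ^ (Fintype.card ι - 1) else 0 := by
    intro i j
    set f : ι → α → ℝ := fun l a => w a * (if l = i then g a else 1) * (if l = j then g a else 1)
    calc ∑ c : ι → α, (∏ l, w (c l)) * (g (c i) * g (c j)) = ∑ c : ι → α, ∏ l, f l (c l) := by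
          refine sum_congr rfl fun c _ => ?_
          simp only [f, prod_mul_distrib, prod_ite_eq', mem_univ, if_true]
          ring
      _ = ∏ l, ∑ a, f l a := (Fintype.prod_sum f).symm
      _ = _ := by
          split_ifs with hij
          · subst hij
            rw [← mul_prod_erase univ _ (mem_univ i),
              prod_congr rfl fun l hl =>
                (show ∑ a, f l a = ∑ a, w a by simp [f, ne_of_mem_erase hl]),
              prod_const,
              card_erase_of_mem (mem_univ i), card_univ]
            simp [f, sq, mul_assoc]
          · exact prod_eq_zero (mem_univ i) (by simpa [f, hij, Ne.symm hij] using hg)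
  calc ∑ c : ι → α, (∏ i, w (c i)) * (∑ i, g (c i)) ^ 2
      = ∑ i, ∑ j, ∑ c : ι → α, (∏ l, w (c l)) * (g (c i) * g (c j)) := by
        simp_rw [sq, sum_mul_sum, mul_sum]
        rw [sum_comm]
        exact sum_congr rfl fun _ _ => sum_comm
    _ = Fintype.card ι * (∑ a, w a * g a ^ 2) * (∑ a, w a) ^ (Fintype.card ι - 1) := by
        simp_rw [hpair, sum_ite_eq, mem_univ, if_true, sum_const, card_univ, nsmul_eq_mul]
        ring

variable {p : α → ℝ}

lemma sq_mul_sum_prod_filter_le (hp : ∀ a, 0 ≤ p a) (hp1 : ∑ a, p a = 1) {g : α → ℝ}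
    (hg : ∑ a, p a * g a = 0) (k : ℕ) {t : ℝ} (ht : 0 ≤ t) :
    t ^ 2 * ∑ c ∈ univ.filter (fun c : Fin k → α => t ≤ |∑ i, g (c i)|), ∏ i, p (c i)
      ≤ k * ∑ a, p a * g a ^ 2 := by
  have hprod : ∀ c : Fin k → α, 0 ≤ ∏ i, p (c i) := fun c => prod_nonneg fun i _ => hp _
  calc t ^ 2 * ∑ c ∈ univ.filter (fun c : Fin k → α => t ≤ |∑ i, g (c i)|), ∏ i, p (c i)
      ≤ ∑ c ∈ univ.filter (fun c : Fin k → α => t ≤ |∑ i, g (c i)|),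
          (∏ i, p (c i)) * (∑ i, g (c i)) ^ 2 := by
        rw [mul_sum]
        refine sum_le_sum fun c hc => ?_
        rw [mul_comm, ← sq_abs (∑ i, g (c i))]
        exact mul_le_mul_of_nonneg_left (pow_le_pow_left₀ ht (mem_filter.mp hc).2 2) (hprod c)
    _ ≤ ∑ c : Fin k → α, (∏ i, p (c i)) * (∑ i, g (c i)) ^ 2 :=
        sum_le_sum_of_subset_of_nonneg (filter_subset _ _) fun c _ _ =>
          mul_nonneg (hprod c) (sq_nonneg _)
    _ = k * ∑ a, p a * g a ^ 2 := by
        rw [sum_prod_mul_sq_sum_eq p g hg, hp1, one_pow, mul_one, Fintype.card_fin]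

lemma eventually_sum_prod_filter_le (hp : ∀ a, 0 ≤ p a) (hp1 : ∑ a, p a = 1) (f : α → ℝ)
    {ε δ : ℝ} (hε : 0 < ε) (hδ : 0 < δ) :
    ∀ᶠ k : ℕ in atTop, ∑ c ∈ univ.filter
      (fun c : Fin k → α => k * ε ≤ |∑ i, f (c i) - k * ∑ a, p a * f a|), ∏ i, p (c i) ≤ δ := by
  set m := ∑ a, p a * f a
  set V := ∑ a, p a * (f a - m) ^ 2
  have hg : ∑ a, p a * (f a - m) = 0 := by
    simp only [mul_sub, sum_sub_distrib, ← sum_mul, hp1, one_mul]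
    exact sub_self m
  filter_upwards [eventually_gt_atTop 0,
    tendsto_natCast_atTop_atTop.eventually_ge_atTop (V / (ε ^ 2 * δ))] with k hk hkV
  have hk' : (0 : ℝ) < k := by exact_mod_cast hk
  have hcheb := sq_mul_sum_prod_filter_le hp hp1 hg k (by positivity : (0 : ℝ) ≤ k * ε)
  have hsum : ∀ c : Fin k → α, ∑ i, (f (c i) - m) = ∑ i, f (c i) - k * m := fun c => by
    rw [sum_sub_distrib, sum_const, card_univ, Fintype.card_fin, nsmul_eq_mul]
  simp only [hsum] at hcheb
  rw [div_le_iff₀ (by positivity)] at hkV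
  refine le_of_mul_le_mul_left ?_ (by positivity : (0 : ℝ) < (k * ε) ^ 2)
  calc _ ≤ k * V := hcheb
    _ ≤ k * (k * (ε ^ 2 * δ)) := mul_le_mul_of_nonneg_left hkV hk'.le
    _ = (k * ε) ^ 2 * δ := by ring

end WeightedSums

/-- `0.0086664 (j + 1)²` rounded to the nearest integer. The weights `(9/10)^tiltExp j` discretise
a Gaussian tilt; keeping them powers of `9/10` makes the weight of a configuration a function of
the integer `∑ tiltExp`. -/
def tiltExp (j : ℕ) : ℕ := (86664 * (j + 1) ^ 2 + 5000000) / 10000000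

noncomputable def tiltWeight (j : ℕ) : ℝ := (9 / 10) ^ tiltExp j

noncomputable def tiltMass : ℝ := ∑ j : Fin 64, tiltWeight j

noncomputable def tiltProb (j : Fin 64) : ℝ := tiltWeight j / tiltMass

lemma sum_tiltWeight_mul_sq_lt :
    ∑ j : Fin 64, tiltWeight j * (((j : ℕ) + 1 : ℝ) / 64) ^ 2 < 81 / 625 * tiltMass := by
  rw [tiltMass, Fin.sum_univ_eq_sum_range (fun j => tiltWeight j * ((j + 1 : ℝ) / 64) ^ 2),
    Fin.sum_univ_eq_sum_range tiltWeight]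
  simp only [sum_range_succ, sum_range_zero, tiltWeight, tiltExp]
  norm_num

lemma lt_sum_tiltWeight_mul_tiltExp :
    227 / 50 * tiltMass < ∑ j : Fin 64, tiltWeight j * tiltExp j := by
  rw [tiltMass, Fin.sum_univ_eq_sum_range (fun j => tiltWeight j * tiltExp j),
    Fin.sum_univ_eq_sum_range tiltWeight]
  simp only [sum_range_succ, sum_range_zero, tiltWeight, tiltExp]
  norm_num

lemma pow_lt_tiltMass_pow_mul : (28856 / 625 : ℝ) ^ 50 < tiltMass ^ 50 * (10 / 9) ^ 227 := by
  rw [tiltMass, Fin.sum_univ_eq_sum_range tiltWeight]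
  simp only [sum_range_succ, sum_range_zero, tiltWeight, tiltExp]
  norm_num

lemma tiltMass_pos : 0 < tiltMass :=
  sum_pos (fun j _ => by unfold tiltWeight; positivity) univ_nonempty

lemma tiltProb_nonneg (j : Fin 64) : 0 ≤ tiltProb j :=
  div_nonneg (by unfold tiltWeight; positivity) tiltMass_pos.le

lemma sum_tiltProb : ∑ j, tiltProb j = 1 := by
  simp only [tiltProb]
  rw [← sum_div]
  exact div_self tiltMass_pos.ne'

lemma sum_tiltProb_mul (f : ℕ → ℝ) :
    ∑ j : Fin 64, tiltProb j * f j = (∑ j : Fin 64, tiltWeight j * f j) / tiltMass := by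
  rw [sum_div]
  exact sum_congr rfl fun j _ => div_mul_eq_mul_div _ _ _

lemma prod_tiltProb {k : ℕ} (c : Fin k → Fin 64) :
    ∏ i, tiltProb (c i) = (9 / 10) ^ (∑ i, tiltExp (c i)) / tiltMass ^ k := by
  simp [tiltProb, tiltWeight, prod_div_distrib, prod_pow_eq_pow_sum]

lemma pow_le_tiltMass_pow_mul {k M : ℕ} (h : 227 * k ≤ 50 * M) :
    (28856 / 625 : ℝ) ^ k ≤ tiltMass ^ k * (10 / 9) ^ M := by
  -- 50th powers turn the exponent `227 k / 50` into an integer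
  refine le_of_pow_le_pow_left₀ (n := 50) (by norm_num) (by have := tiltMass_pos; positivity) ?_
  calc ((28856 / 625 : ℝ) ^ k) ^ 50 = ((28856 / 625) ^ 50) ^ k := by
        rw [← pow_mul, ← pow_mul, mul_comm]
    _ ≤ (tiltMass ^ 50 * (10 / 9) ^ 227) ^ k :=
        pow_le_pow_left₀ (by positivity) pow_lt_tiltMass_pow_mul.le k
    _ = (tiltMass ^ k) ^ 50 * (10 / 9) ^ (227 * k) := by
        rw [mul_pow, ← pow_mul, ← pow_mul, ← pow_mul, mul_comm 50 k]
    _ ≤ (tiltMass ^ k) ^ 50 * (10 / 9) ^ (50 * M) := by gcongr; norm_num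
    _ = (tiltMass ^ k * (10 / 9) ^ M) ^ 50 := by rw [mul_pow, ← pow_mul (10 / 9 : ℝ), mul_comm M]

/-- With `s = 25α/18`, the first condition puts the shell box of `c` into the ball of radius
`α√k/2` (`81/625 = (18/25)²/4`); the second bounds the tilted weight of `c` from above. -/
noncomputable def goodConfigs (k : ℕ) : Finset (Fin k → Fin 64) :=
  univ.filter fun c =>
    ∑ i, (((c i : ℕ) + 1 : ℝ) / 64) ^ 2 ≤ 81 / 625 * (k : ℝ) ∧ 227 * k ≤ 50 * ∑ i, tiltExp (c i)

lemma mem_goodConfigs_or {k : ℕ} (m₁ m₂ : ℝ) (c : Fin k → Fin 64) :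
    c ∈ goodConfigs k ∨
      k * (81 / 625 - m₁) ≤ |∑ i, (((c i : ℕ) + 1 : ℝ) / 64) ^ 2 - k * m₁| ∨
      k * (m₂ - 227 / 50) ≤ |∑ i, (tiltExp (c i) : ℝ) - k * m₂| := by
  by_cases hA : ∑ i, (((c i : ℕ) + 1 : ℝ) / 64) ^ 2 ≤ 81 / 625 * (k : ℝ)
  · by_cases hE : 227 * k ≤ 50 * ∑ i, tiltExp (c i)
    · exact Or.inl (mem_filter.mpr ⟨mem_univ c, hA, hE⟩)
    · have : (50 : ℝ) * ∑ i, (tiltExp (c i) : ℝ) < 227 * k := by exact_mod_cast not_le.mp hE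
      exact Or.inr (Or.inr (le_abs.mpr (Or.inr (by linarith))))
  · exact Or.inr (Or.inl (le_abs.mpr (Or.inl (by linarith))))

lemma eventually_half_le_sum_goodConfigs :
    ∀ᶠ k : ℕ in atTop, 1 / 2 ≤ ∑ c ∈ goodConfigs k, ∏ i, tiltProb (c i) := by
  have hmA : ∑ j, tiltProb j * (((j : ℕ) + 1 : ℝ) / 64) ^ 2 < 81 / 625 := by
    rw [sum_tiltProb_mul fun j => ((j + 1 : ℝ) / 64) ^ 2, div_lt_iff₀ tiltMass_pos]
    exact sum_tiltWeight_mul_sq_lt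
  have hmE : 227 / 50 < ∑ j, tiltProb j * (tiltExp j : ℝ) := by
    rw [sum_tiltProb_mul fun j => (tiltExp j : ℝ), lt_div_iff₀ tiltMass_pos]
    exact lt_sum_tiltWeight_mul_tiltExp
  have hquarter : (0 : ℝ) < 1 / 4 := by norm_num
  filter_upwards [eventually_sum_prod_filter_le tiltProb_nonneg sum_tiltProb
      (fun j => (((j : ℕ) + 1 : ℝ) / 64) ^ 2) (sub_pos.mpr hmA) hquarter,
    eventually_sum_prod_filter_le tiltProb_nonneg sum_tiltProb
      (fun j => (tiltExp j : ℝ)) (sub_pos.mpr hmE) hquarter] with k hA hE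
  have hunion := sum_le_sum_add_sum_filter_add_sum_filter
    (fun c : Fin k → Fin 64 => prod_nonneg fun i (_ : i ∈ univ) => tiltProb_nonneg (c i))
    (mem_goodConfigs_or (∑ j, tiltProb j * (((j : ℕ) + 1 : ℝ) / 64) ^ 2)
      (∑ j, tiltProb j * (tiltExp j : ℝ)))
  rw [← Fintype.sum_pow, sum_tiltProb, one_pow] at hunion
  linarith

lemma eventually_pow_le_two_mul_card_goodConfigs :
    ∀ᶠ k : ℕ in atTop, (28856 / 625 : ℝ) ^ k ≤ 2 * #(goodConfigs k) := by
  filter_upwards [eventually_half_le_sum_goodConfigs] with k hk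
  set M := (227 * k + 49) / 50 -- `⌈227 k / 50⌉`
  have hweight : ∀ c ∈ goodConfigs k, ∏ i, tiltProb (c i) ≤ (9 / 10) ^ M / tiltMass ^ k := by
    intro c hc
    have hM : M ≤ ∑ i, tiltExp (c i) := by
      have := (mem_filter.mp hc).2.2
      omega
    rw [prod_tiltProb]
    exact div_le_div_of_nonneg_right (pow_le_pow_of_le_one (by norm_num) (by norm_num) hM)
      (pow_nonneg tiltMass_pos.le k)
  have hmass : tiltMass ^ k ≤ 2 * #(goodConfigs k) * (9 / 10) ^ M := by
    have := hk.trans (sum_le_card_nsmul _ _ _ hweight)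
    rw [nsmul_eq_mul, mul_div_assoc', le_div_iff₀ (pow_pos tiltMass_pos _)] at this
    linarith
  calc (28856 / 625 : ℝ) ^ k ≤ tiltMass ^ k * (10 / 9) ^ M := pow_le_tiltMass_pow_mul (by omega)
    _ ≤ 2 * #(goodConfigs k) * (9 / 10) ^ M * (10 / 9) ^ M := by gcongr
    _ = 2 * #(goodConfigs k) := by rw [mul_assoc, ← mul_pow]; norm_num

lemma card_sub_one_mul_sq_le_of_unitCube {k : ℕ} (hk : 0 < k)
    {Y : Finset (EuclideanSpace ℝ (Fin k))} (hY : ∀ y ∈ Y, y ∈ unitCube k) {α : ℝ} (hα : 0 ≤ α)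
    (hsep : ∀ u ∈ Y, ∀ v ∈ Y, u ≠ v → α * √k < dist u v) :
    (#Y - 1) * α ^ 2 ≤ #Y / 2 := by
  have h := card_sub_one_mul_sq_le (by positivity)
    (fun y hy => unitCube_subset_closedBall k (hY y hy))
    fun u hu v hv huv => (hsep u hu v hv huv).le
  rw [mul_pow, div_pow, Real.sq_sqrt (Nat.cast_nonneg k)] at h
  have hk' : (0 : ℝ) < k := by exact_mod_cast hk
  nlinarith

lemma eventually_card_mul_pow_le_two : ∀ᶠ k : ℕ in atTop, ∀ α : ℝ, 0 < α → α ≤ 18 / 25 →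
    ∀ Y : Finset (EuclideanSpace ℝ (Fin k)), (∀ y ∈ Y, y ∈ unitCube k) →
      (∀ u ∈ Y, ∀ v ∈ Y, u ≠ v → α * √k < dist u v) → #Y * (3607 / 3600 * α) ^ k ≤ 2 := by
  filter_upwards [eventually_pow_le_two_mul_card_goodConfigs] with k hk α hα0 hα Y hY hsep
  have hball : ∀ y ∈ Y, ENNReal.ofReal (#(goodConfigs k) * (25 / 18 * α / (64 : ℕ)) ^ k)
      ≤ volume (closedBall y (α * √k / 2) ∩ unitCube k) := fun y hy =>
    ofReal_card_mul_le_volume_closedBall_inter_unitCube (hY y hy) (by positivity) (by linarith)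
      (by positivity) _ fun c hc => by
        push_cast
        calc (25 / 18 * α) ^ 2 * ∑ i, (((c i : ℕ) + 1 : ℝ) / 64) ^ 2
            ≤ (25 / 18 * α) ^ 2 * (81 / 625 * k) := by gcongr; exact (mem_filter.mp hc).2.1
          _ = (α * √k / 2) ^ 2 := by rw [div_pow, mul_pow α, Real.sq_sqrt (Nat.cast_nonneg k)]; ring
  have hpack := card_mul_le_one_of_lt_dist
    (fun u hu v hv huv => by linarith [hsep u hu v hv huv]) hball
  calc #Y * (3607 / 3600 * α) ^ k
      = #Y * (25 / 18 * α / (64 : ℕ)) ^ k * (28856 / 625) ^ k := by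
        rw [mul_assoc, ← mul_pow]; congr 2; push_cast; ring
    _ ≤ #Y * (25 / 18 * α / (64 : ℕ)) ^ k * (2 * #(goodConfigs k)) := by gcongr
    _ = 2 * (#Y * (#(goodConfigs k) * (25 / 18 * α / (64 : ℕ)) ^ k)) := by ring
    _ ≤ 2 := by linarith

lemma eventually_mul_pow_le_pow (C : ℝ) {a b : ℝ} (ha : 0 ≤ a) (hab : a < b) :
    ∀ᶠ k : ℕ in atTop, C * a ^ k ≤ b ^ k := by
  have hb : 0 < b := ha.trans_lt hab
  have hlim := tendsto_pow_atTop_nhds_zero_of_lt_one (div_nonneg ha hb.le)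
    ((div_lt_one hb).mpr hab)
  filter_upwards [(hlim.const_mul C).eventually (gt_mem_nhds (by simp : C * 0 < 1))]
    with k hk
  rw [div_pow, mul_div_assoc', div_lt_one (pow_pos hb k)] at hk
  exact hk.le

/-- There exists `k₀` such that for all `k ≥ k₀`: for every `0 < α < 0.99` and every finite
set `Y ⊆ [0,1]^k` whose points are pairwise at distance greater than `α·√k`, one has
`|Y|·α^k ≤ 0.999^k`. -/
theorem stmt_15 :
    ∃ k0 : ℕ, ∀ k : ℕ, k0 ≤ k →
      ∀ α : ℝ, 0 < α → α < 0.99 →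
        ∀ Y : Finset (EuclideanSpace ℝ (Fin k)),
          (∀ y ∈ Y, ∀ i, y i ∈ Set.Icc (0 : ℝ) 1) →
          (∀ u ∈ Y, ∀ v ∈ Y, u ≠ v → α * Real.sqrt k < dist u v) →
          (Y.card : ℝ) * α ^ k ≤ 0.999 ^ k := by
  obtain ⟨k0, hk0⟩ := eventually_atTop.mp <| (eventually_gt_atTop 0).and <|
    eventually_card_mul_pow_le_two.and <|
      (eventually_mul_pow_le_pow 29 (by norm_num) (by norm_num : (0.99 : ℝ) < 0.999)).and
        (eventually_mul_pow_le_pow 2 (by norm_num) (by norm_num : (3600 / 3607 : ℝ) < 0.999))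
  refine ⟨k0, fun k hk α hα0 hα1 Y hY hsep => ?_⟩
  obtain ⟨hk_pos, hsmall, hlarge_rate, hsmall_rate⟩ := hk0 k hk
  rcases le_or_gt α (18 / 25) with hα | hα
  · calc (#Y : ℝ) * α ^ k = #Y * (3607 / 3600 * α) ^ k * (3600 / 3607) ^ k := by
          rw [mul_assoc, ← mul_pow]; congr 2; ring
      _ ≤ 2 * (3600 / 3607) ^ k := by gcongr; exact hsmall α hα0 hα Y hY hsep
      _ ≤ 0.999 ^ k := hsmall_rate
  · have hcard : (#Y : ℝ) ≤ 29 := by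
      have hplotkin := card_sub_one_mul_sq_le_of_unitCube hk_pos hY hα0.le hsep
      have hα2 : (18 / 25) ^ 2 < α ^ 2 := by gcongr
      by_contra! h
      nlinarith [mul_lt_mul_of_pos_left hα2 (by linarith : (0 : ℝ) < #Y - 1)]
    calc (#Y : ℝ) * α ^ k ≤ 29 * 0.99 ^ k := by gcongr
      _ ≤ 0.999 ^ k := hlarge_rate
end

section
/- Let k ≥ 3 and let X be a set of n points in the unit cube [0,1]^k ⊂ ℝ^k, where n ≥ 2 is even. Then there exists a perfect matching M of the n points (a partition of X into n/2 unordered pairs) such that Σ_{e ∈ M} |e|^k ≤ (1/3)·3^k·(5k)^{k/2}; equivalently, the scaled cost (Σ_{e ∈ M} |e|^k)^{1/k} is at most 3√5·(1/3)^{1/k}·√k. -/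
/-!
Order the points along a discrete Peano curve through the `3^(L k)` cells of side `3^(-L)`: the
ternary digits of the index are dealt out cyclically to the `k` coordinates, and an odd digit
reverses the direction of all other coordinates, so that consecutive cells are adjacent.
Truncating the index to its leading digits truncates every coordinate, hence indices less than
`3^(s k)` apart lie in equal or adjacent cells of side `3^(s - L)`. With `t ∈ [0, 1]` the
normalised index this is the Hölder estimate `|x - y|^k ≤ (3 √(k + 3))^k |t x - t y|`, once `L` is
so large that distinct points lie in distinct cells. Pairing the points consecutively in the
order of `t`, the increments of `t` over the pairs add up to at most `1`, so the matching costs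
at most `(3 √(k + 3))^k ≤ 3^(k - 1) (5 k)^(k / 2)`.
-/

open Finset Function

lemma Monotone.sum_range_sub_two_mul_le {u : ℕ → ℝ} (hu : Monotone u) (m : ℕ) :
    ∑ a ∈ range m, (u (2 * a + 1) - u (2 * a)) ≤ u (2 * m) - u 0 :=
  calc ∑ a ∈ range m, (u (2 * a + 1) - u (2 * a))
      ≤ ∑ a ∈ range m, (u (2 * (a + 1)) - u (2 * a)) := by
        gcongr with a
        exact hu (by omega)
    _ = u (2 * m) - u 0 := sum_range_sub (fun a => u (2 * a)) m

lemma Monotone.sum_abs_sub_rev_le {u : ℕ → ℝ} (hu : Monotone u)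
    (hu01 : ∀ p, u p ∈ Set.Icc (0 : ℝ) 1) (m : ℕ) :
    ∑ a : Fin m, ∑ b : Fin 2, |u (b.rev + 2 * a) - u (b + 2 * a)| ≤ 2 :=
  calc ∑ a : Fin m, ∑ b : Fin 2, |u (b.rev + 2 * a) - u (b + 2 * a)|
      = 2 * ∑ a ∈ range m, (u (2 * a + 1) - u (2 * a)) := by
        rw [mul_sum, ← Fin.sum_univ_eq_sum_range (fun a => 2 * (u (2 * a + 1) - u (2 * a)))]
        refine sum_congr rfl fun a _ => ?_
        have hle : u (2 * a) ≤ u (2 * a + 1) := hu (Nat.le_succ _)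
        have h0 : ((Fin.rev 0 : Fin 2) : ℕ) = 1 := rfl
        have h1 : ((Fin.rev 1 : Fin 2) : ℕ) = 0 := rfl
        rw [Fin.sum_univ_two, h0, h1, Fin.val_zero, Fin.val_one, zero_add, add_comm 1,
          abs_sub_comm (u (2 * a)), abs_of_nonneg (sub_nonneg.2 hle)]
        ring
    _ ≤ 2 * (u (2 * m) - u 0) := by gcongr; exact hu.sum_range_sub_two_mul_le m
    _ ≤ 2 := by linarith [(hu01 (2 * m)).2, (hu01 0).1]

/-- Pairing consecutive elements in the order of `t`. -/
theorem exists_involutive_sum_abs_sub_le {ι : Type*} [Fintype ι] (hι : Even (Fintype.card ι))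
    (t : ι → ℝ) (ht : ∀ i, t i ∈ Set.Icc (0 : ℝ) 1) :
    ∃ φ : ι → ι, Involutive φ ∧ (∀ i, φ i ≠ i) ∧ ∑ i, |t (φ i) - t i| ≤ 2 := by
  obtain ⟨m, hm⟩ := hι
  set n := Fintype.card ι
  let σ := Tuple.sort (t ∘ (Fintype.equivFin ι).symm)
  let e : Fin n ≃ ι := σ.trans (Fintype.equivFin ι).symm
  have he : Monotone (t ∘ e) := Tuple.monotone_sort (t ∘ (Fintype.equivFin ι).symm)
  let g : Fin m × Fin 2 ≃ ι := finProdFinEquiv.trans ((finCongr (by omega)).trans e)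
  let u : ℕ → ℝ := fun p => if hp : p < n then t (e ⟨p, hp⟩) else 1
  have hu01 : ∀ p, u p ∈ Set.Icc (0 : ℝ) 1 := fun p => by
    by_cases hp : p < n
    · simpa [u, dif_pos hp] using ht _
    · simp [u, dif_neg hp]
  have hu : Monotone u := by
    intro p q hpq
    by_cases hq : q < n
    · simp only [u, dif_pos hq, dif_pos (hpq.trans_lt hq)]
      exact he (Fin.mk_le_mk.2 hpq)
    · simpa [u, dif_neg hq] using (hu01 p).2
  have hg : ∀ a b, t (g (a, b)) = u (b + 2 * a) := fun a b => by
    have hlt : (b : ℕ) + 2 * a < n := by omega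
    simp [g, u, finProdFinEquiv, dif_pos hlt]
  refine ⟨g ∘ Prod.map id Fin.rev ∘ g.symm, fun x => by simp [Prod.map], fun x hx => ?_, ?_⟩
  · have := congrArg (fun p => ((g.symm p).2 : ℕ)) hx
    simp only [comp_apply, Equiv.symm_apply_apply, Prod.map_snd, Fin.val_rev] at this
    omega
  · rw [← g.sum_comp]
    simpa only [comp_apply, Equiv.symm_apply_apply, Prod.map, id, Fintype.sum_prod_type, hg]
      using hu.sum_abs_sub_rev_le hu01 m

lemma Finset.eventually_lt_dist {α : Type*} [MetricSpace α] (X : Finset α) {f : ℕ → ℝ}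
    (hf : Filter.Tendsto f Filter.atTop (nhds 0)) :
    ∀ᶠ n in Filter.atTop, ∀ x ∈ X, ∀ y ∈ X, x ≠ y → f n < dist x y := by
  simp only [Filter.eventually_all_finset, Filter.eventually_imp_distrib_left]
  exact fun x _ y _ hxy => hf.eventually (gt_mem_nhds (dist_pos.2 hxy))

lemma EuclideanSpace.dist_le_of_abs_sub_le {ι : Type*} [Fintype ι] {x y : EuclideanSpace ℝ ι}
    (r : ι → ℝ) (h : ∀ i, |x i - y i| ≤ r i) : dist x y ≤ √(∑ i, r i ^ 2) := by
  rw [EuclideanSpace.dist_eq]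
  gcongr with i
  exact h i

namespace PeanoCurve

def coordDigits (k N : ℕ) (c : Fin k) : ℕ := N.count (· % k = c)

lemma coordDigits_zero (k : ℕ) (c : Fin k) : coordDigits k 0 c = 0 := Nat.count_zero _

lemma coordDigits_succ (k N : ℕ) (c : Fin k) :
    coordDigits k (N + 1) c = coordDigits k N c + if (c : ℕ) = N % k then 1 else 0 := by
  simp only [coordDigits, Nat.count_succ, eq_comm]

lemma coordDigits_add_mul (k N s : ℕ) (c : Fin k) :
    coordDigits k (N + s * k) c = coordDigits k N c + s := by
  have hk : 0 < k := c.pos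
  have hmod : ∀ n, coordDigits k n c = n.count (· ≡ c [MOD k]) := fun n => by
    simp only [coordDigits, Nat.ModEq, Nat.mod_eq_of_lt c.isLt]
  simp only [hmod, Nat.count_modEq_card _ hk, Nat.add_mul_div_right _ _ hk,
    Nat.add_mul_mod_self_right]
  ring

def reflectDigit (b : Bool) (d : ℕ) : ℕ := if b then 2 - d else d

lemma reflectDigit_le_two (b : Bool) {d : ℕ} (hd : d ≤ 2) : reflectDigit b d ≤ 2 := by
  unfold reflectDigit
  split <;> omega

lemma reflectDigit_reflectDigit (b : Bool) {d : ℕ} (hd : d ≤ 2) :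
    reflectDigit b (reflectDigit b d) = d := by
  cases b
  · rfl
  · simp only [reflectDigit, if_true]
    omega

def turn {k : ℕ} (ρ : Fin k → Bool) (c₀ d : ℕ) (c : Fin k) : Bool :=
  if (c : ℕ) ≠ c₀ ∧ d % 2 = 1 then !ρ c else ρ c

lemma turn_of_even {k : ℕ} (ρ : Fin k → Bool) (c₀ : ℕ) {d : ℕ} (hd : d % 2 = 0) :
    turn ρ c₀ d = ρ := by
  funext c
  simp [turn, hd]

/-- The cell `peano k N ρ i : Fin k → ℕ` visited at step `i < 3 ^ N` of the discrete Peano curve.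
The base-`3` digit of `i` at position `m` is a digit of coordinate `m % k`, of weight
`3 ^ coordDigits k m (m % k)`; `ρ c` says whether coordinate `c` is currently traversed
backwards, and an odd digit reverses every other coordinate for the digits below it. -/
def peano (k : ℕ) : ℕ → (Fin k → Bool) → ℕ → Fin k → ℕ
  | 0, _, _, _ => 0
  | N + 1, ρ, i, c =>
    peano k N (turn ρ (N % k) (i / 3 ^ N)) (i % 3 ^ N) c +
      if (c : ℕ) = N % k then reflectDigit (ρ c) (i / 3 ^ N) * 3 ^ coordDigits k N c else 0

variable {k : ℕ}

lemma peano_succ_eq (N : ℕ) (ρ : Fin k → Bool) (i : ℕ) :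
    peano k (N + 1) ρ i = peano k N (turn ρ (N % k) (i / 3 ^ N)) (i % 3 ^ N) +
      fun c : Fin k =>
        if (c : ℕ) = N % k then reflectDigit (ρ c) (i / 3 ^ N) * 3 ^ coordDigits k N c else 0 :=
  rfl

lemma div_pow_le_two {N i : ℕ} (hi : i < 3 ^ (N + 1)) : i / 3 ^ N ≤ 2 := by
  rw [pow_succ] at hi
  exact Nat.le_of_lt_succ (Nat.div_lt_of_lt_mul (by linarith))

lemma peano_lt {N : ℕ} (ρ : Fin k → Bool) {i : ℕ} (hi : i < 3 ^ N) (c : Fin k) :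
    peano k N ρ i c < 3 ^ coordDigits k N c := by
  induction N generalizing ρ i with
  | zero => simp [peano, coordDigits_zero]
  | succ N ih =>
    have hlow := ih (turn ρ (N % k) (i / 3 ^ N)) (Nat.mod_lt i (by positivity))
    have htop := reflectDigit_le_two (ρ c) (div_pow_le_two hi)
    rw [peano, coordDigits_succ]
    split_ifs
    · rw [pow_succ]
      nlinarith
    · simpa using hlow

lemma peano_zero (N : ℕ) (ρ : Fin k → Bool) (c : Fin k) :
    peano k N ρ 0 c = if ρ c then 3 ^ coordDigits k N c - 1 else 0 := by
  induction N generalizing ρ with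
  | zero => simp [peano, coordDigits_zero]
  | succ N ih =>
    have hpos : 0 < 3 ^ coordDigits k N c := by positivity
    rw [peano, Nat.zero_div, Nat.zero_mod, turn_of_even ρ _ rfl, ih, coordDigits_succ]
    split_ifs <;> simp_all [reflectDigit, pow_succ]
    omega

lemma peano_last (N : ℕ) (ρ : Fin k → Bool) (c : Fin k) :
    peano k N ρ (3 ^ N - 1) c = if ρ c then 0 else 3 ^ coordDigits k N c - 1 := by
  induction N generalizing ρ with
  | zero => simp [peano, coordDigits_zero]
  | succ N ih =>
    have hpos : 0 < 3 ^ coordDigits k N c := by positivity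
    have h3 : 0 < 3 ^ N := by positivity
    have hsplit : 3 ^ (N + 1) - 1 = 3 ^ N * 2 + (3 ^ N - 1) := by
      rw [pow_succ]
      omega
    have hdiv : (3 ^ (N + 1) - 1) / 3 ^ N = 2 := by
      rw [hsplit, Nat.mul_add_div h3, Nat.div_eq_of_lt (by omega)]
    have hmod : (3 ^ (N + 1) - 1) % 3 ^ N = 3 ^ N - 1 := by
      rw [hsplit, Nat.mul_add_mod, Nat.mod_eq_of_lt (by omega)]
    rw [peano, hdiv, hmod, turn_of_even ρ _ rfl, ih, coordDigits_succ]
    split_ifs <;> simp_all [reflectDigit, pow_succ]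
    omega

def NearCells (u v : Fin k → ℕ) : Prop :=
  ∃ c₀, ∀ c, u c ≤ v c + (if c = c₀ then 1 else 0) ∧ v c ≤ u c + (if c = c₀ then 1 else 0)

lemma NearCells.refl (hk : 0 < k) (u : Fin k → ℕ) : NearCells u u :=
  ⟨⟨0, hk⟩, fun _ => ⟨Nat.le_add_right _ _, Nat.le_add_right _ _⟩⟩

lemma NearCells.add_right {u v : Fin k → ℕ} (h : NearCells u v) (w : Fin k → ℕ) :
    NearCells (u + w) (v + w) := by
  obtain ⟨c₀, hc₀⟩ := h
  exact ⟨c₀, fun c => by simp only [Pi.add_apply]; constructor <;> linarith [hc₀ c]⟩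

lemma peano_near_carry (hk : 0 < k) (N : ℕ) (ρ : Fin k → Bool) {q : ℕ} (hq : q ≤ 1) :
    NearCells (peano k (N + 1) ρ (3 ^ N * q + (3 ^ N - 1)))
      (peano k (N + 1) ρ (3 ^ N * (q + 1))) := by
  have h3 : 0 < 3 ^ N := by positivity
  have hlt : 3 ^ N - 1 < 3 ^ N := Nat.sub_lt h3 one_pos
  refine ⟨⟨N % k, Nat.mod_lt N hk⟩, fun c => ?_⟩
  rw [peano, peano, Nat.mul_add_div h3, Nat.div_eq_of_lt hlt, add_zero, Nat.mul_add_mod,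
    Nat.mod_eq_of_lt hlt, Nat.mul_div_cancel_left _ h3, Nat.mul_mod_right, peano_zero,
    peano_last]
  -- The lower digits wrap around from `3 ^ N - 1` to `0`, and since the top digit changes parity
  -- every coordinate other than `N % k` is reversed: this turns `peano_last` into `peano_zero`.
  by_cases hc : c = ⟨N % k, Nat.mod_lt N hk⟩
  · subst hc
    have hpos : 0 < 3 ^ coordDigits k N ⟨N % k, Nat.mod_lt N hk⟩ := by positivity
    interval_cases q <;> cases hρ : ρ ⟨N % k, Nat.mod_lt N hk⟩ <;>
      simp [turn, reflectDigit, hρ] <;> omega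
  · have hc' : (c : ℕ) ≠ N % k := fun h => hc (Fin.ext h)
    interval_cases q <;> cases hρ : ρ c <;> simp [turn, hc, hc', hρ]

lemma peano_near_succ (hk : 0 < k) {N : ℕ} (ρ : Fin k → Bool) {i : ℕ} (hi : i + 1 < 3 ^ N) :
    NearCells (peano k N ρ i) (peano k N ρ (i + 1)) := by
  induction N generalizing ρ i with
  | zero => simp at hi
  | succ N ih =>
    have h3 : 0 < 3 ^ N := by positivity
    have hdm := Nat.div_add_mod i (3 ^ N)
    have hr := Nat.mod_lt i h3
    by_cases hcarry : i % 3 ^ N + 1 < 3 ^ N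
    · have hsucc : i + 1 = 3 ^ N * (i / 3 ^ N) + (i % 3 ^ N + 1) := by omega
      have hdiv : (i + 1) / 3 ^ N = i / 3 ^ N := by
        rw [hsucc, Nat.mul_add_div h3, Nat.div_eq_of_lt hcarry, add_zero]
      have hmod : (i + 1) % 3 ^ N = i % 3 ^ N + 1 := by
        rw [hsucc, Nat.mul_add_mod, Nat.mod_eq_of_lt hcarry]
      rw [peano_succ_eq, peano_succ_eq, hdiv, hmod]
      exact (ih _ hcarry).add_right _
    · have hsucc : i + 1 = 3 ^ N * (i / 3 ^ N + 1) := by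
        rw [Nat.mul_succ]
        omega
      have hq : i / 3 ^ N ≤ 1 := by
        rw [hsucc, pow_succ] at hi
        have := Nat.lt_of_mul_lt_mul_left hi
        omega
      have hi' : i = 3 ^ N * (i / 3 ^ N) + (3 ^ N - 1) := by omega
      have := peano_near_carry hk N ρ hq
      rwa [← hi', ← hsucc] at this

lemma peano_surjective (hk : 0 < k) (N : ℕ) (ρ : Fin k → Bool) (v : Fin k → ℕ)
    (hv : ∀ c, v c < 3 ^ coordDigits k N c) : ∃ i < 3 ^ N, peano k N ρ i = v := by
  induction N generalizing ρ v with
  | zero =>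
    refine ⟨0, by norm_num, funext fun c => ?_⟩
    have := hv c
    simp_all [peano, coordDigits_zero]
  | succ N ih =>
    set c₀ : Fin k := ⟨N % k, Nat.mod_lt N hk⟩
    set W := 3 ^ coordDigits k N c₀
    have hW : 0 < W := by positivity
    have htop : v c₀ / W ≤ 2 := by
      have := hv c₀
      rw [coordDigits_succ, if_pos rfl, pow_succ] at this
      exact Nat.le_of_lt_succ (Nat.div_lt_of_lt_mul this)
    set d := reflectDigit (ρ c₀) (v c₀ / W)
    have hd : d ≤ 2 := reflectDigit_le_two _ htop
    obtain ⟨r, hr, hrv⟩ := ih (turn ρ (N % k) d) (update v c₀ (v c₀ % W)) fun c => by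
      by_cases hc : c = c₀
      · subst hc
        simpa using Nat.mod_lt _ hW
      · have hc' : (c : ℕ) ≠ N % k := fun h => hc (Fin.ext h)
        simpa [hc, coordDigits_succ, hc'] using hv c
    have h3 : 0 < 3 ^ N := by positivity
    have hdiv : (3 ^ N * d + r) / 3 ^ N = d := by
      rw [Nat.mul_add_div h3, Nat.div_eq_of_lt hr, add_zero]
    have hmod : (3 ^ N * d + r) % 3 ^ N = r := by rw [Nat.mul_add_mod, Nat.mod_eq_of_lt hr]
    refine ⟨3 ^ N * d + r, by rw [pow_succ]; nlinarith, funext fun c => ?_⟩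
    rw [peano, hdiv, hmod, hrv]
    by_cases hc : c = c₀
    · subst hc
      rw [if_pos rfl, update_self, reflectDigit_reflectDigit _ htop, Nat.mod_add_div']
    · have hc' : (c : ℕ) ≠ N % k := fun h => hc (Fin.ext h)
      simp [hc, hc']

lemma peano_add_mul_div (M s : ℕ) (ρ : Fin k → Bool) {i : ℕ} (hi : i < 3 ^ (M + s * k))
    (c : Fin k) : peano k (M + s * k) ρ i c / 3 ^ s = peano k M ρ (i / 3 ^ (s * k)) c := by
  induction M generalizing ρ i with
  | zero =>
    have := peano_lt ρ hi c
    rw [coordDigits_add_mul, coordDigits_zero] at this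
    simp only [zero_add] at this ⊢
    simp [peano, Nat.div_eq_of_lt this]
  | succ M ih =>
    have hsplit : 3 ^ (M + s * k) = 3 ^ (s * k) * 3 ^ M := by rw [← pow_add, add_comm]
    have hlow := ih (turn ρ (M % k) (i / 3 ^ (M + s * k))) (Nat.mod_lt i (by positivity))
    rw [hsplit, Nat.mod_mul_right_div_self, ← hsplit] at hlow
    rw [Nat.add_right_comm, peano, peano, Nat.add_mul_mod_self_right, Nat.div_div_eq_div_mul,
      ← hsplit, coordDigits_add_mul, pow_add 3 (coordDigits k M c) s]
    split_ifs
    · rw [← mul_assoc, Nat.add_mul_div_right _ _ (by positivity), hlow]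
    · simpa using hlow

lemma peano_near_of_lt_add (hk : 0 < k) (M s : ℕ) (ρ : Fin k → Bool) {i j : ℕ} (hij : i ≤ j)
    (hj : j < 3 ^ (M + s * k)) (hji : j < i + 3 ^ (s * k)) :
    NearCells (fun c => peano k (M + s * k) ρ i c / 3 ^ s)
      (fun c => peano k (M + s * k) ρ j c / 3 ^ s) := by
  have h3 : 0 < 3 ^ (s * k) := by positivity
  simp only [peano_add_mul_div M s ρ (hij.trans_lt hj), peano_add_mul_div M s ρ hj]
  have hle : j / 3 ^ (s * k) ≤ i / 3 ^ (s * k) + 1 := by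
    rw [← Nat.add_div_right _ h3]
    exact Nat.div_le_div_right hji.le
  rcases (Nat.div_le_div_right hij).eq_or_lt with heq | hlt
  · rw [← heq]
    exact NearCells.refl hk _
  · have hJ : j / 3 ^ (s * k) < 3 ^ M := by
      rw [Nat.div_lt_iff_lt_mul h3, ← pow_add]
      exact hj
    rw [show j / 3 ^ (s * k) = i / 3 ^ (s * k) + 1 by omega] at hJ ⊢
    exact peano_near_succ hk ρ hJ

noncomputable def gridCell (L : ℕ) (a : ℝ) : ℕ := min ⌊3 ^ L * a⌋₊ (3 ^ L - 1)

lemma gridCell_lt (L : ℕ) (a : ℝ) : gridCell L a < 3 ^ L :=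
  (min_le_right _ _).trans_lt (Nat.sub_lt (by positivity) one_pos)

lemma gridCell_le {L : ℕ} {a : ℝ} (ha : 0 ≤ a) : (gridCell L a : ℝ) ≤ 3 ^ L * a :=
  (Nat.cast_le.2 (min_le_left _ _)).trans (Nat.floor_le (by positivity))

lemma le_gridCell_add_one {L : ℕ} {a : ℝ} (ha : a ≤ 1) : 3 ^ L * a ≤ gridCell L a + 1 := by
  have hfloor := Nat.lt_floor_add_one ((3 : ℝ) ^ L * a)
  have hlast : 3 ^ L * a ≤ ((3 ^ L - 1 : ℕ) : ℝ) + 1 := by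
    rw [Nat.cast_sub (Nat.one_le_pow _ _ (by norm_num))]
    push_cast
    nlinarith [pow_pos (three_pos : (0 : ℝ) < 3) L]
  rcases min_cases ⌊(3 : ℝ) ^ L * a⌋₊ (3 ^ L - 1) with ⟨h, -⟩ | ⟨h, -⟩ <;>
    simp only [gridCell, h] <;> linarith

lemma sub_le_of_gridCell_div_le {L s e : ℕ} {a b : ℝ} (ha : a ≤ 1) (hb : 0 ≤ b)
    (h : gridCell L a / 3 ^ s ≤ gridCell L b / 3 ^ s + e) :
    a - b ≤ (e + 1) * 3 ^ s / 3 ^ L := by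
  have hcell : gridCell L a + 1 ≤ gridCell L b + (e + 1) * 3 ^ s := by
    have h3 : 0 < 3 ^ s := by positivity
    have hA := Nat.lt_mul_div_succ (gridCell L a) h3
    have hB := Nat.mul_div_le (gridCell L b) (3 ^ s)
    nlinarith
  have hcell' : (gridCell L a : ℝ) + 1 ≤ gridCell L b + (e + 1) * 3 ^ s := by exact_mod_cast hcell
  rw [le_div_iff₀ (by positivity)]
  linarith [gridCell_le (L := L) hb, le_gridCell_add_one (L := L) ha]

lemma dist_le_of_nearCells {L s : ℕ} {x y : EuclideanSpace ℝ (Fin k)}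
    (hx : ∀ c, x c ∈ Set.Icc (0 : ℝ) 1) (hy : ∀ c, y c ∈ Set.Icc (0 : ℝ) 1)
    (h : NearCells (fun c => gridCell L (x c) / 3 ^ s) (fun c => gridCell L (y c) / 3 ^ s)) :
    dist x y ≤ √(k + 3) * 3 ^ s / 3 ^ L := by
  obtain ⟨c₀, hc₀⟩ := h
  set r : ℝ := 3 ^ s / 3 ^ L
  have hcoord : ∀ c, |x c - y c| ≤ (if c = c₀ then 2 else 1) * r := fun c => by
    have hxy := sub_le_of_gridCell_div_le (hx c).2 (hy c).1 (hc₀ c).1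
    have hyx := sub_le_of_gridCell_div_le (hy c).2 (hx c).1 (hc₀ c).2
    rw [abs_sub_le_iff]
    split_ifs at hxy hyx ⊢ <;> constructor <;> norm_num at hxy hyx ⊢ <;>
      linarith [mul_div_assoc (2 : ℝ) (3 ^ s) (3 ^ L)]
  have hsum : ∑ c, ((if c = c₀ then 2 else 1) * r) ^ 2 = (k + 3) * r ^ 2 := by
    have hsq : ∀ c, ((if c = c₀ then 2 else 1) * r) ^ 2 = r ^ 2 + if c = c₀ then 3 * r ^ 2 else 0 :=
      fun c => by split_ifs <;> ring
    simp only [hsq, Finset.sum_add_distrib, Finset.sum_ite_eq', Finset.mem_univ, if_true,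
      Finset.sum_const, Finset.card_univ, Fintype.card_fin, nsmul_eq_mul]
    ring
  calc dist x y ≤ √((k + 3) * r ^ 2) := hsum ▸ EuclideanSpace.dist_le_of_abs_sub_le _ hcoord
    _ = √(k + 3) * 3 ^ s / 3 ^ L := by
      rw [Real.sqrt_mul (by positivity), Real.sqrt_sq (by positivity), mul_div_assoc]

lemma dist_le_of_peano (hk : 0 < k) (ρ : Fin k → Bool) {L s i j : ℕ} (hsL : s ≤ L)
    (hij : i ≤ j) (hj : j < 3 ^ (L * k)) (hji : j < i + 3 ^ (s * k))
    {x y : EuclideanSpace ℝ (Fin k)} (hx : ∀ c, x c ∈ Set.Icc (0 : ℝ) 1)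
    (hy : ∀ c, y c ∈ Set.Icc (0 : ℝ) 1) (hxi : peano k (L * k) ρ i = fun c => gridCell L (x c))
    (hyj : peano k (L * k) ρ j = fun c => gridCell L (y c)) :
    dist x y ≤ √(k + 3) * 3 ^ s / 3 ^ L := by
  have hLk : L * k = (L - s) * k + s * k := by rw [← add_mul, Nat.sub_add_cancel hsL]
  rw [hLk] at hj hxi hyj
  have hnear := peano_near_of_lt_add hk ((L - s) * k) s ρ hij hj hji
  rw [hxi, hyj] at hnear
  exact dist_le_of_nearCells hx hy hnear

lemma dist_pow_le_of_peano (hk : 0 < k) (ρ : Fin k → Bool) {L i j : ℕ} (hij : i < j)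
    (hj : j < 3 ^ (L * k)) {x y : EuclideanSpace ℝ (Fin k)} (hx : ∀ c, x c ∈ Set.Icc (0 : ℝ) 1)
    (hy : ∀ c, y c ∈ Set.Icc (0 : ℝ) 1) (hxi : peano k (L * k) ρ i = fun c => gridCell L (x c))
    (hyj : peano k (L * k) ρ j = fun c => gridCell L (y c)) :
    dist x y ^ k ≤ (3 * √(k + 3)) ^ k * ((j - i : ℕ) / 3 ^ (L * k)) := by
  set t := Nat.log (3 ^ k) (j - i)
  have hb : 1 < 3 ^ k := Nat.one_lt_pow hk.ne' (by norm_num)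
  have hlt : j - i < 3 ^ ((t + 1) * k) := by
    rw [mul_comm, pow_mul]; exact Nat.lt_pow_succ_log_self hb _
  have hge : (3 ^ k) ^ t ≤ j - i := Nat.pow_log_le_self _ (by omega)
  have hsL : t + 1 ≤ L := Nat.log_lt_of_lt_pow (by omega) (by rw [← pow_mul, mul_comm]; omega)
  have hd := dist_le_of_peano hk ρ hsL hij.le hj (by omega) hx hy hxi hyj
  have hge' : ((3 : ℝ) ^ k) ^ t ≤ (j - i : ℕ) := by exact_mod_cast hge
  calc dist x y ^ k ≤ (√(k + 3) * 3 ^ (t + 1) / 3 ^ L) ^ k := by gcongr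
    _ = (3 * √(k + 3)) ^ k * ((3 ^ k) ^ t / 3 ^ (L * k)) := by ring
    _ ≤ (3 * √(k + 3)) ^ k * ((j - i : ℕ) / 3 ^ (L * k)) := by gcongr

lemma exists_peano_eq_gridCell (hk : 0 < k) (ρ : Fin k → Bool) (L : ℕ)
    (x : EuclideanSpace ℝ (Fin k)) :
    ∃ i < 3 ^ (L * k), peano k (L * k) ρ i = fun c => gridCell L (x c) :=
  peano_surjective hk _ ρ _ fun c => by
    have hL : coordDigits k (L * k) c = L := by
      simpa [coordDigits_zero] using coordDigits_add_mul k 0 L c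
    rw [hL]
    exact gridCell_lt L (x c)

lemma dist_pow_le_of_peano_of_separated (hk : 0 < k) (ρ : Fin k → Bool) {L i j : ℕ}
    (hi : i < 3 ^ (L * k)) (hj : j < 3 ^ (L * k)) {x y : EuclideanSpace ℝ (Fin k)}
    (hx : ∀ c, x c ∈ Set.Icc (0 : ℝ) 1) (hy : ∀ c, y c ∈ Set.Icc (0 : ℝ) 1)
    (hxi : peano k (L * k) ρ i = fun c => gridCell L (x c))
    (hyj : peano k (L * k) ρ j = fun c => gridCell L (y c))
    (hsep : x ≠ y → √(k + 3) / 3 ^ L < dist x y) :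
    dist x y ^ k ≤ (3 * √(k + 3)) ^ k * |(j / 3 ^ (L * k) : ℝ) - i / 3 ^ (L * k)| := by
  rcases lt_trichotomy i j with hij | rfl | hji
  · rw [← sub_div, abs_of_nonneg (div_nonneg (by simpa using hij.le) (by positivity)),
      ← Nat.cast_sub hij.le]
    exact dist_pow_le_of_peano hk ρ hij hj hx hy hxi hyj
  · obtain rfl : x = y := by
      by_contra hne
      have := dist_le_of_peano hk ρ (Nat.zero_le L) le_rfl hi (by simp) hx hy hxi hyj
      rw [pow_zero, mul_one] at this
      exact (hsep hne).not_ge this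
    simp [hk.ne']
  · rw [abs_sub_comm, ← sub_div, abs_of_nonneg (div_nonneg (by simpa using hji.le) (by positivity)),
      ← Nat.cast_sub hji.le, dist_comm]
    exact dist_pow_le_of_peano hk ρ hji hi hy hx hyj hxi

end PeanoCurve

open PeanoCurve

lemma nine_mul_add_three_pow_le {k : ℕ} (hk : 3 ≤ k) : 9 * (k + 3) ^ k ≤ (5 * k) ^ k := by
  obtain rfl | hk4 := hk.eq_or_lt
  · norm_num
  calc 9 * (k + 3) ^ k ≤ 2 ^ k * (k + 3) ^ k := by
        gcongr
        calc 9 ≤ 2 ^ 4 := by norm_num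
          _ ≤ 2 ^ k := Nat.pow_le_pow_right (by norm_num) hk4
    _ = (2 * (k + 3)) ^ k := (mul_pow _ _ _).symm
    _ ≤ (5 * k) ^ k := Nat.pow_le_pow_left (by omega) k

lemma three_mul_sqrt_pow_le {k : ℕ} (hk : 3 ≤ k) :
    (3 * √(k + 3)) ^ k ≤ (1 / 3 : ℝ) * 3 ^ k * √(5 * k) ^ k := by
  have hsq : (3 * √((k : ℝ) + 3) ^ k) ^ 2 ≤ (√(5 * (k : ℝ)) ^ k) ^ 2 := by
    rw [mul_pow, ← pow_mul, ← pow_mul, mul_comm k 2, pow_mul, pow_mul, Real.sq_sqrt (by positivity),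
      Real.sq_sqrt (by positivity)]
    exact_mod_cast nine_mul_add_three_pow_le hk
  calc (3 * √(k + 3)) ^ k = (1 / 3 : ℝ) * 3 ^ k * (3 * √((k : ℝ) + 3) ^ k) := by ring
    _ ≤ (1 / 3 : ℝ) * 3 ^ k * √(5 * k) ^ k := by
      gcongr
      exact (pow_le_pow_iff_left₀ (by positivity) (by positivity) two_ne_zero).1 hsq

/-- The perfect matching is encoded as a fixed-point-free involution `φ` of `X`; the sum over
`X` counts every pair twice. -/
theorem stmt_16_general (k : ℕ) (hk : 3 ≤ k)
    (X : Finset (EuclideanSpace ℝ (Fin k))) (heven : Even X.card)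
    (hcube : ∀ x ∈ X, ∀ i, x i ∈ Set.Icc (0 : ℝ) 1) :
    ∃ φ : ↥X → ↥X, Function.Involutive φ ∧ (∀ x, φ x ≠ x) ∧
      (1 / 2 : ℝ) * ∑ x : ↥X, dist (x : EuclideanSpace ℝ (Fin k)) (φ x : EuclideanSpace ℝ (Fin k)) ^ k ≤
        (1 / 3 : ℝ) * 3 ^ k * Real.sqrt (5 * k) ^ k := by
  have hk0 : 0 < k := by omega
  obtain ⟨L, hL⟩ := (X.eventually_lt_dist (f := fun L => √(k + 3) / 3 ^ L)
    (tendsto_const_nhds.div_atTop (tendsto_pow_atTop_atTop_of_one_lt (by norm_num)))).exists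
  choose key hkey_lt hkey using fun x : X => exists_peano_eq_gridCell hk0 (fun _ => false) L x
  set t : X → ℝ := fun x => key x / 3 ^ (L * k)
  have ht : ∀ x, t x ∈ Set.Icc (0 : ℝ) 1 := fun x =>
    ⟨by positivity, div_le_one_of_le₀ (by exact_mod_cast (hkey_lt x).le) (by positivity)⟩
  have hpair : ∀ x y : X, dist (x : EuclideanSpace ℝ (Fin k)) y ^ k ≤
      (3 * √(k + 3)) ^ k * |t y - t x| := fun x y =>
    dist_pow_le_of_peano_of_separated hk0 _ (hkey_lt x) (hkey_lt y) (hcube x x.2)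
      (hcube y y.2) (hkey x) (hkey y) fun hxy => hL x x.2 y y.2 hxy
  obtain ⟨φ, hφ, hφx, hsum⟩ := exists_involutive_sum_abs_sub_le (by simpa using heven) t ht
  refine ⟨φ, hφ, hφx, ?_⟩
  calc (1 / 2 : ℝ) * ∑ x : X, dist (x : EuclideanSpace ℝ (Fin k)) (φ x) ^ k
      ≤ (1 / 2) * ∑ x : X, (3 * √(k + 3)) ^ k * |t (φ x) - t x| := by gcongr with x; exact hpair x _
    _ ≤ (1 / 2) * ((3 * √(k + 3)) ^ k * 2) := by rw [← Finset.mul_sum]; gcongr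
    _ = (3 * √(k + 3)) ^ k := by ring
    _ ≤ (1 / 3 : ℝ) * 3 ^ k * √(5 * k) ^ k := three_mul_sqrt_pow_le hk

/-- For `k ≥ 3` and a set `X` of `n` points in `[0,1]^k` with `n ≥ 2` even, there is a
perfect matching `M` of `X` (encoded as a fixed-point-free involution `φ` of `X`, so that
`∑_{e ∈ M} |e|^k = (1/2)∑_{x ∈ X} |x - φ(x)|^k`) with cost at most `(1/3)·3^k·(5k)^{k/2}`. -/
theorem stmt_16 (k : ℕ) (hk : 3 ≤ k)
    (X : Finset (EuclideanSpace ℝ (Fin k))) (hX : 2 ≤ X.card) (heven : Even X.card)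
    (hcube : ∀ x ∈ X, ∀ i, x i ∈ Set.Icc (0 : ℝ) 1) :
    ∃ φ : ↥X → ↥X, Function.Involutive φ ∧ (∀ x, φ x ≠ x) ∧
      (1 / 2 : ℝ) * ∑ x : ↥X, dist (x : EuclideanSpace ℝ (Fin k)) (φ x : EuclideanSpace ℝ (Fin k)) ^ k ≤
        (1 / 3 : ℝ) * 3 ^ k * Real.sqrt (5 * k) ^ k :=
  stmt_16_general k hk X heven hcube
end
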